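/- arXiv:2108.03951 — 10 statements merged into one kernel-verified Lean document; each statement's English description precedes it below -/
import Mathlib

section
/- Let n ≥ 1, G = Δ × 𝔹ⁿ, and let α : G → G be a holomorphic retraction with α(0) = 0 whose image Z = α(G) satisfies Z ≠ {0}. Let L be the range of the derivative Dα(0) : ℂ^{1+n} → ℂ^{1+n}. If L ∩ ∂G ⊆ ∂Δ × ∂𝔹ⁿ, then dim_ℂ L = 1 and there exists (c₁, …, cₙ) ∈ ∂𝔹ⁿ such that Z = L ∩ G = {(w, c₁w, …, cₙw) : w ∈ Δ}; moreover α is the identity on Z. -/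
/-!
`G` is the unit ball of `ℂ × ℂⁿ` for the max norm. Since `α ∘ α = α`, the derivative `P = Dα(0)` is
a projection onto `L`, and `L ≠ 0` since otherwise `0` would be an isolated point of the connected
set `Z`. The boundary condition says `‖x₁‖ = ‖x₂‖` on `L`, so `L` is the line through `(1, c)` with
`‖c‖ = 1`. For `z ∈ Z \ {0}` the holomorphic disc `w ↦ α (w z / ‖z‖)` passes through `z` at
`w = ‖z‖`; composing it with a norming functional at `z`, the Schwarz lemma shows that its
derivative `a (1, c)` at `0` has `|a| = 1`. Schwarz rigidity for the coordinates `x₁` and `⟪c, x₂⟫`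
then gives `z₁ = ‖z‖ a = ⟪c, z₂⟫`, and equality in Cauchy–Schwarz gives `z₂ = z₁ c`. Finally, `α`
fixes the line pointwise, again by rigidity of its first coordinate.
-/

open Metric Set

noncomputable section

/-- `G = Δ × 𝔹ⁿ ⊆ ℂ × ℂⁿ`, the product of the unit disc and the unit ball. -/
def diskBall (n : ℕ) : Set (ℂ × EuclideanSpace ℂ (Fin n)) :=
  (ball (0 : ℂ) 1) ×ˢ (ball (0 : EuclideanSpace ℂ (Fin n)) 1)

open Filter Topology

namespace Complex

variable {E : Type*} [NormedAddCommGroup E] [NormedSpace ℂ E] {f : ℂ → E} {a : E}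

theorem norm_le_one_of_hasDerivAt_of_mapsTo_unitBall (hd : DifferentiableOn ℂ f (ball 0 1))
    (hmaps : MapsTo f (ball 0 1) (ball 0 1)) (h0 : f 0 = 0) (hf' : HasDerivAt f a 0) :
    ‖a‖ ≤ 1 := by
  rw [← hf'.deriv]
  exact norm_deriv_le_one_of_mapsTo_ball hd
    (by simpa [h0] using hmaps.mono_right ball_subset_closedBall) one_pos

theorem eqOn_smul_of_norm_dslope_eq_one [StrictConvexSpace ℝ E]
    (hd : DifferentiableOn ℂ f (ball 0 1)) (hmaps : MapsTo f (ball 0 1) (ball 0 1)) (h0 : f 0 = 0)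
    {z₀ : ℂ} (hz₀ : z₀ ∈ ball (0 : ℂ) 1) (h1 : ‖dslope f 0 z₀‖ = 1) :
    EqOn f (fun z => z • dslope f 0 z₀) (ball 0 1) := by
  have := affine_of_mapsTo_ball_of_norm_dslope_eq_div hd
    (by simpa [h0] using hmaps.mono_right ball_subset_closedBall) hz₀ (by simpa using h1)
  simpa [h0] using this

theorem eqOn_smul_of_hasDerivAt_of_norm_eq_one [StrictConvexSpace ℝ E]
    (hd : DifferentiableOn ℂ f (ball 0 1)) (hmaps : MapsTo f (ball 0 1) (ball 0 1)) (h0 : f 0 = 0)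
    (hf' : HasDerivAt f a 0) (ha : ‖a‖ = 1) :
    EqOn f (fun z => z • a) (ball 0 1) := by
  have hslope : dslope f 0 0 = a := by rw [dslope_same, hf'.deriv]
  have := eqOn_smul_of_norm_dslope_eq_one hd hmaps h0 (mem_ball_self one_pos) (hslope ▸ ha)
  rwa [hslope] at this

theorem eq_one_of_hasDerivAt_of_apply_eq_self {f : ℂ → ℂ} {a : ℂ}
    (hd : DifferentiableOn ℂ f (ball 0 1)) (hmaps : MapsTo f (ball 0 1) (ball 0 1)) (h0 : f 0 = 0)
    (hf' : HasDerivAt f a 0) {z₀ : ℂ} (hz₀ : z₀ ∈ ball (0 : ℂ) 1) (hz₀0 : z₀ ≠ 0)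
    (hfix : f z₀ = z₀) : a = 1 := by
  have hslope : dslope f 0 z₀ = 1 := by
    rw [dslope_of_ne _ hz₀0, slope_def_field, hfix, h0, sub_zero, div_self hz₀0]
  have hid : f =ᶠ[nhds 0] id := by
    filter_upwards [isOpen_ball.mem_nhds (mem_ball_self one_pos)] with z hz
    simpa [hslope] using eqOn_smul_of_norm_dslope_eq_one hd hmaps h0 hz₀ (by simp [hslope]) hz
  exact hf'.unique ((hasDerivAt_id 0).congr_of_eventuallyEq hid)

end Complex

section Retraction

variable {𝕜 E : Type*} [NontriviallyNormedField 𝕜] [NormedAddCommGroup E] [NormedSpace 𝕜 E]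
  {α : E → E} {P : E →L[𝕜] E}

theorem HasFDerivAt.apply_eq_self_of_retraction {x : E} (hα : HasFDerivAt α P x)
    (hx : α x = x) (hretr : α ∘ α =ᶠ[𝓝 x] α) {v : E} (hv : v ∈ LinearMap.range (P : E →ₗ[𝕜] E)) :
    P v = v := by
  obtain ⟨w, rfl⟩ := hv
  have hαx : HasFDerivAt α P (α x) := by rwa [hx]
  exact congrArg (· w) (((hαx.comp x hα).congr_of_eventuallyEq hretr.symm).unique hα)

theorem IsPreconnected.eq_zero_of_forall_apply_eq_self_of_hasFDerivAt_zero {Z : Set E}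
    (hZ : IsPreconnected Z) (h0Z : (0 : E) ∈ Z) (hfix : ∀ z ∈ Z, α z = z)
    (hα : HasFDerivAt α (0 : E →L[𝕜] E) 0) : ∀ z ∈ Z, z = 0 := by
  have hsmall : ∀ᶠ x in 𝓝 (0 : E), ‖α x‖ ≤ 2⁻¹ * ‖x‖ := by
    simpa [hfix 0 h0Z] using hα.isLittleO.def (by norm_num : (0 : ℝ) < 2⁻¹)
  obtain ⟨ε, hε, hball⟩ := Metric.eventually_nhds_iff_ball.mp hsmall
  have hgap : ∀ z ∈ Z, ‖z‖ < ε → ‖z‖ = 0 := by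
    intro z hz hzε
    have := hball z (by simpa using hzε)
    rw [hfix z hz] at this
    linarith [norm_nonneg z]
  -- `‖·‖ '' Z` is an interval containing `0` and missing `(0, ε)`
  have hnorms : IsPreconnected (norm '' Z) := hZ.image _ continuous_norm.continuousOn
  intro z hz
  by_contra hz0
  have hpos : 0 < ‖z‖ := norm_pos_iff.2 hz0
  set t := min ‖z‖ (ε / 2)
  have ht : t ∈ Icc 0 ‖z‖ := ⟨by positivity, min_le_left _ _⟩
  obtain ⟨z', hz', hz't⟩ := hnorms.Icc_subset ⟨0, h0Z, norm_zero⟩ ⟨z, hz, rfl⟩ ht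
  have : t = 0 := hz't ▸ hgap z' hz' (hz't ▸ (min_le_right _ _).trans_lt (half_lt_self hε))
  exact (lt_min hpos (half_pos hε)).ne' this

theorem HasFDerivAt.range_ne_bot_of_retraction {U : Set E} (hα : HasFDerivAt α P 0)
    (hU : IsPreconnected U) (hcont : ContinuousOn α U) (h0U : (0 : E) ∈ U) (h0 : α 0 = 0)
    (hretr : ∀ x ∈ U, α (α x) = α x) (hne : α '' U ≠ {0}) :
    LinearMap.range (P : E →ₗ[𝕜] E) ≠ ⊥ := by
  intro hbot
  obtain rfl : P = 0 := ContinuousLinearMap.coe_injective (LinearMap.range_eq_bot.1 hbot)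
  refine hne (Subset.antisymm (fun z hz => ?_) (singleton_subset_iff.2 ⟨0, h0U, h0⟩))
  refine (hU.image α hcont).eq_zero_of_forall_apply_eq_self_of_hasFDerivAt_zero ⟨0, h0U, h0⟩
    ?_ hα z hz
  rintro _ ⟨x, hx, rfl⟩
  exact hretr x hx

theorem HasFDerivAt.hasDerivAt_comp_smul {F : Type*} [NormedAddCommGroup F] [NormedSpace 𝕜 F]
    {f : E → F} {f' : E →L[𝕜] F} (hf : HasFDerivAt f f' 0) (v : E) :
    HasDerivAt (fun w : 𝕜 => f (w • v)) (f' v) 0 := by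
  have hline : HasDerivAt (fun w : 𝕜 => w • v) v 0 := by
    simpa using (hasDerivAt_id (0 : 𝕜)).smul_const v
  exact (zero_smul 𝕜 v ▸ hf).comp_hasDerivAt 0 hline

theorem mapsTo_smul_const_unitBall {v : E} (hv : ‖v‖ ≤ 1) :
    MapsTo (fun w : 𝕜 => w • v) (ball 0 1) (ball 0 1) := by
  intro w hw
  rw [mem_ball_zero_iff] at hw ⊢
  rw [norm_smul]
  nlinarith [norm_nonneg w, norm_nonneg v]

theorem ContinuousLinearMap.mapsTo_unitBall {F : Type*} [NormedAddCommGroup F]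
    [NormedSpace 𝕜 F] {φ : E →L[𝕜] F} (hφ : ‖φ‖ ≤ 1) : MapsTo φ (ball 0 1) (ball 0 1) := by
  intro x hx
  rw [mem_ball_zero_iff] at hx ⊢
  calc ‖φ x‖ ≤ ‖φ‖ * ‖x‖ := φ.le_opNorm x
    _ ≤ 1 * ‖x‖ := by gcongr
    _ < 1 := by rwa [one_mul]

end Retraction

theorem eq_smul_of_inner_eq_of_norm_le {𝕜 E : Type*} [RCLike 𝕜] [NormedAddCommGroup E]
    [InnerProductSpace 𝕜 E] {c y : E} {b : 𝕜} (hc : ‖c‖ = 1) (hy : ‖y‖ ≤ ‖b‖)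
    (h : inner 𝕜 c y = b) : y = b • c := by
  have hre : RCLike.re (inner 𝕜 y (b • c)) = ‖b‖ ^ 2 := by
    rw [inner_smul_right, ← inner_conj_symm, h, RCLike.mul_conj]
    norm_cast
  have hsq : ‖y - b • c‖ ^ 2 ≤ 0 := by
    rw [norm_sub_sq (𝕜 := 𝕜), hre, norm_smul, hc, mul_one]
    nlinarith [norm_nonneg y]
  rw [← sub_eq_zero, ← norm_eq_zero]
  exact pow_eq_zero_iff two_ne_zero |>.1 (le_antisymm hsq (sq_nonneg _))

section Geometry

variable {𝕜 E F : Type*} [RCLike 𝕜] [NormedAddCommGroup E] [NormedSpace 𝕜 E]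
  [NormedAddCommGroup F] [NormedSpace 𝕜 F]

theorem Submodule.norm_fst_eq_norm_snd_of_inter_sphere_subset {L : Submodule 𝕜 (E × F)}
    (hL : (L : Set (E × F)) ∩ sphere 0 1 ⊆ sphere 0 1 ×ˢ sphere 0 1) {x : E × F} (hx : x ∈ L) :
    ‖x.1‖ = ‖x.2‖ := by
  rcases eq_or_ne x 0 with rfl | hx0
  · simp
  have hpos : 0 < ‖x‖ := norm_pos_iff.2 hx0
  set t : 𝕜 := ((‖x‖⁻¹ : ℝ) : 𝕜)
  have htx : t • x ∈ sphere (0 : E × F) 1 := by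
    simp [t, norm_smul, hpos.ne']
  obtain ⟨h1, h2⟩ := hL ⟨L.smul_mem t hx, htx⟩
  simp only [mem_sphere_zero_iff_norm, Prod.smul_fst, Prod.smul_snd, norm_smul] at h1 h2
  have ht : ‖t‖ ≠ 0 := by simp [t, hpos.ne']
  exact mul_left_cancel₀ ht (h1.trans h2.symm)

end Geometry

section Line

variable {𝕜 F : Type*} [NormedField 𝕜] [NormedAddCommGroup F]

theorem norm_one_prod {c : F} (hc : ‖c‖ ≤ 1) : ‖((1 : 𝕜), c)‖ = 1 := by
  simp [Prod.norm_def, hc]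

variable [NormedSpace 𝕜 F]

theorem Submodule.exists_eq_span_one_prod_of_norm_fst_eq_norm_snd {L : Submodule 𝕜 (𝕜 × F)}
    (hL : ∀ x ∈ L, ‖x.1‖ = ‖x.2‖) (hne : L ≠ ⊥) :
    ∃ c : F, ‖c‖ = 1 ∧ L = 𝕜 ∙ ((1 : 𝕜), c) := by
  obtain ⟨v, hv, hv0⟩ := (Submodule.ne_bot_iff L).1 hne
  have hv1 : v.1 ≠ 0 := by
    intro h
    have h2 : v.2 = 0 := by simpa [h] using (hL v hv).symm
    exact hv0 (Prod.ext h h2)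
  set c := v.1⁻¹ • v.2
  have hcL : ((1 : 𝕜), c) ∈ L := by
    have : v.1⁻¹ • v = ((1 : 𝕜), c) := Prod.ext (inv_mul_cancel₀ hv1) rfl
    exact this ▸ L.smul_mem _ hv
  refine ⟨c, by simpa using (hL _ hcL).symm, le_antisymm ?_ ((L.span_singleton_le_iff_mem _).2 hcL)⟩
  intro x hx
  have hdiff : x - x.1 • ((1 : 𝕜), c) ∈ L := L.sub_mem hx (L.smul_mem _ hcL)
  have h2 : x.2 - x.1 • c = 0 := by simpa using (hL _ hdiff).symm
  refine Submodule.mem_span_singleton.2 ⟨x.1, Prod.ext (by simp) ?_⟩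
  simpa [sub_eq_zero, eq_comm] using h2

theorem span_one_prod_inter_unitBall {c : F} (hc : ‖c‖ ≤ 1) :
    ((𝕜 ∙ ((1 : 𝕜), c) : Submodule 𝕜 (𝕜 × F)) : Set (𝕜 × F)) ∩ ball 0 1 =
      (fun w : 𝕜 => (w, w • c)) '' ball 0 1 := by
  ext x
  simp only [mem_inter_iff, SetLike.mem_coe, Submodule.mem_span_singleton, mem_image,
    mem_ball_zero_iff]
  constructor
  · rintro ⟨⟨a, rfl⟩, ha⟩
    rw [norm_smul, norm_one_prod hc, mul_one] at ha
    exact ⟨a, ha, by simp⟩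
  · rintro ⟨a, ha, rfl⟩
    refine ⟨⟨a, by simp⟩, ?_⟩
    simpa [Prod.norm_def, norm_smul] using
      ⟨ha, mul_lt_one_of_nonneg_of_lt_one_left (norm_nonneg a) ha hc⟩

end Line

section Disc

variable {F : Type*} [NormedAddCommGroup F] [InnerProductSpace ℂ F]

theorem snd_eq_fst_smul_of_norm_apply_eq {c : F} (hc : ‖c‖ = 1) {e : ℂ → ℂ × F}
    (hd : DifferentiableOn ℂ e (ball 0 1)) (hmaps : MapsTo e (ball 0 1) (ball 0 1))
    (h0 : e 0 = 0) {a : ℂ} (he' : HasDerivAt e (a • ((1 : ℂ), c)) 0) {r : ℝ} (hr0 : 0 < r)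
    (hr1 : r < 1) (her : ‖e r‖ = r) : (e r).2 = (e r).1 • c := by
  have hr : (r : ℂ) ∈ ball (0 : ℂ) 1 := by simpa [abs_of_pos hr0] using hr1
  have hr0' : (r : ℂ) ≠ 0 := by exact_mod_cast hr0.ne'
  have hdiff (ψ : (ℂ × F) →L[ℂ] ℂ) : DifferentiableOn ℂ (ψ ∘ e) (ball 0 1) :=
    ψ.differentiable.comp_differentiableOn hd
  have hmapsψ (ψ : (ℂ × F) →L[ℂ] ℂ) (hψ : ‖ψ‖ ≤ 1) : MapsTo (ψ ∘ e) (ball 0 1) (ball 0 1) :=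
    (ψ.mapsTo_unitBall hψ).comp hmaps
  have hψ0 (ψ : (ℂ × F) →L[ℂ] ℂ) : (ψ ∘ e) 0 = 0 := by simp [h0]
  have hderiv (ψ : (ℂ × F) →L[ℂ] ℂ) : HasDerivAt (ψ ∘ e) (ψ (a • ((1 : ℂ), c))) 0 :=
    ψ.hasFDerivAt.comp_hasDerivAt 0 he'
  have hnorm : ‖a • ((1 : ℂ), c)‖ = ‖a‖ := by rw [norm_smul, norm_one_prod hc.le, mul_one]
  have ha : ‖a‖ = 1 := by
    refine le_antisymm
      (hnorm ▸ Complex.norm_le_one_of_hasDerivAt_of_mapsTo_unitBall hd hmaps h0 he') ?_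
    obtain ⟨φ, hφ, hφr⟩ := exists_dual_vector ℂ (e r) (by rw [her]; exact hr0.ne')
    have hφa : φ (a • ((1 : ℂ), c)) = 1 :=
      Complex.eq_one_of_hasDerivAt_of_apply_eq_self (hdiff φ) (hmapsψ φ hφ.le) (hψ0 φ)
        (hderiv φ) hr hr0' (by simp [hφr, her])
    calc (1 : ℝ) = ‖φ (a • ((1 : ℂ), c))‖ := by rw [hφa, norm_one]
      _ ≤ ‖φ‖ * ‖a • ((1 : ℂ), c)‖ := φ.le_opNorm _
      _ = ‖a‖ := by rw [hφ, hnorm, one_mul]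
  have hrigid (ψ : (ℂ × F) →L[ℂ] ℂ) (hψ : ‖ψ‖ ≤ 1) (hψa : ψ (a • ((1 : ℂ), c)) = a) :
      ψ (e r) = r * a := by
    have := Complex.eqOn_smul_of_hasDerivAt_of_norm_eq_one (hdiff ψ) (hmapsψ ψ hψ) (hψ0 ψ)
      (hderiv ψ) (by rw [hψa]; exact ha) hr
    rwa [hψa] at this
  have hfst : (e r).1 = r * a :=
    hrigid (.fst ℂ ℂ F) (ContinuousLinearMap.norm_fst_le ℂ ℂ F) (by simp)
  have hinner : inner ℂ c (e r).2 = r * a := by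
    refine hrigid ((innerSL ℂ c).comp (.snd ℂ ℂ F)) ?_ (by simp [hc])
    calc ‖(innerSL ℂ c).comp (.snd ℂ ℂ F)‖ ≤ ‖innerSL ℂ c‖ * ‖ContinuousLinearMap.snd ℂ ℂ F‖ :=
          ContinuousLinearMap.opNorm_comp_le _ _
      _ ≤ 1 * 1 := by
          gcongr
          · exact (innerSL_apply_norm ℂ c).trans_le hc.le
          · exact ContinuousLinearMap.norm_snd_le ℂ ℂ F
      _ = 1 := one_mul 1
  have hsnd_le : ‖(e r).2‖ ≤ ‖(r : ℂ) * a‖ := by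
    rw [norm_mul, ha, mul_one, Complex.norm_real, Real.norm_of_nonneg hr0.le]
    exact (norm_snd_le _).trans_eq her
  rw [hfst]
  exact eq_smul_of_inner_eq_of_norm_le hc hsnd_le hinner

variable {α : ℂ × F → ℂ × F} {c : F}

theorem snd_eq_fst_smul_of_apply_eq_self (hα : DifferentiableOn ℂ α (ball 0 1))
    (hmaps : MapsTo α (ball 0 1) (ball 0 1)) (h0 : α 0 = 0) (hc : ‖c‖ = 1)
    (hrange : ∀ v, fderiv ℂ α 0 v ∈ ℂ ∙ ((1 : ℂ), c)) {z : ℂ × F} (hz : z ∈ ball 0 1)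
    (hfix : α z = z) : z.2 = z.1 • c := by
  rcases eq_or_ne z 0 with rfl | hz0
  · simp
  have hpos : 0 < ‖z‖ := norm_pos_iff.2 hz0
  set ζ : ℂ × F := ((‖z‖⁻¹ : ℝ) : ℂ) • z
  have hζ : ‖ζ‖ ≤ 1 := by simp [ζ, norm_smul, hpos.ne']
  have hzζ : ((‖z‖ : ℝ) : ℂ) • ζ = z := by simp [ζ, smul_smul, hpos.ne']
  obtain ⟨a, ha⟩ := Submodule.mem_span_singleton.1 (hrange ζ)
  have hP : HasFDerivAt α (fderiv ℂ α 0) 0 :=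
    (hα.differentiableAt (isOpen_ball.mem_nhds (mem_ball_self one_pos))).hasFDerivAt
  have := snd_eq_fst_smul_of_norm_apply_eq hc (e := fun w : ℂ => α (w • ζ))
    (hα.comp (differentiableOn_id.smul_const ζ) (mapsTo_smul_const_unitBall hζ))
    (hmaps.comp (mapsTo_smul_const_unitBall hζ)) (by simp [h0])
    (ha ▸ hP.hasDerivAt_comp_smul ζ) hpos (mem_ball_zero_iff.1 hz) (by simp [hzζ, hfix])
  simpa [hzζ, hfix] using this

theorem apply_smul_one_prod_eq (hα : DifferentiableOn ℂ α (ball 0 1))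
    (hmaps : MapsTo α (ball 0 1) (ball 0 1)) (h0 : α 0 = 0) (hc : ‖c‖ ≤ 1)
    (hP : fderiv ℂ α 0 ((1 : ℂ), c) = ((1 : ℂ), c))
    (hgraph : ∀ x ∈ ball 0 1, (α x).2 = (α x).1 • c) {w : ℂ} (hw : w ∈ ball (0 : ℂ) 1) :
    α (w • ((1 : ℂ), c)) = w • ((1 : ℂ), c) := by
  have hmaps_line : MapsTo (fun w : ℂ => w • ((1 : ℂ), c)) (ball 0 1) (ball 0 1) :=
    mapsTo_smul_const_unitBall (norm_one_prod hc).le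
  have hαd : HasFDerivAt α (fderiv ℂ α 0) 0 :=
    (hα.differentiableAt (isOpen_ball.mem_nhds (mem_ball_self one_pos))).hasFDerivAt
  set fst := ContinuousLinearMap.fst ℂ ℂ F
  have hfst := Complex.eqOn_smul_of_hasDerivAt_of_norm_eq_one
    (f := fst ∘ fun w : ℂ => α (w • ((1 : ℂ), c)))
    (fst.differentiable.comp_differentiableOn
      (hα.comp (differentiableOn_id.smul_const _) hmaps_line))
    ((fst.mapsTo_unitBall (ContinuousLinearMap.norm_fst_le ℂ ℂ F)).comp (hmaps.comp hmaps_line))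
    (by simp only [Function.comp_apply, zero_smul, h0, map_zero])
    (fst.hasFDerivAt.comp_hasDerivAt 0 (hαd.hasDerivAt_comp_smul _)) (by simp [fst, hP]) hw
  simp only [Function.comp_apply, hP, fst, ContinuousLinearMap.coe_fst', smul_eq_mul,
    mul_one] at hfst
  refine Prod.ext (by simpa using hfst) ?_
  rw [hgraph _ (hmaps_line hw), hfst]
  rfl

theorem image_eq_span_one_prod_inter_unitBall (hα : DifferentiableOn ℂ α (ball 0 1))
    (hmaps : MapsTo α (ball 0 1) (ball 0 1)) (hretr : ∀ x ∈ ball 0 1, α (α x) = α x)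
    (h0 : α 0 = 0) (hc : ‖c‖ = 1) (hrange : ∀ v, fderiv ℂ α 0 v ∈ ℂ ∙ ((1 : ℂ), c))
    (hP : fderiv ℂ α 0 ((1 : ℂ), c) = ((1 : ℂ), c)) :
    α '' ball 0 1 = ((ℂ ∙ ((1 : ℂ), c) : Submodule ℂ (ℂ × F)) : Set (ℂ × F)) ∩ ball 0 1 := by
  have hgraph : ∀ x ∈ ball 0 1, (α x).2 = (α x).1 • c := fun x hx =>
    snd_eq_fst_smul_of_apply_eq_self hα hmaps h0 hc hrange (hmaps hx) (hretr x hx)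
  ext x
  constructor
  · rintro ⟨y, hy, rfl⟩
    refine ⟨Submodule.mem_span_singleton.2 ⟨(α y).1, ?_⟩, hmaps hy⟩
    exact Prod.ext (by simp) (by simp [hgraph y hy])
  · rintro ⟨hxL, hx⟩
    obtain ⟨a, rfl⟩ := Submodule.mem_span_singleton.1 hxL
    have ha : a ∈ ball (0 : ℂ) 1 := by
      have := mem_ball_zero_iff.1 hx
      rwa [norm_smul, norm_one_prod hc.le, mul_one, ← mem_ball_zero_iff] at this
    exact ⟨_, hx, apply_smul_one_prod_eq hα hmaps h0 hc.le hP hgraph ha⟩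

end Disc

theorem diskBall_eq_ball (n : ℕ) : diskBall n = ball 0 1 := by
  rw [diskBall, ball_prod_same]
  rfl

theorem stmt_1_general (n : ℕ)
    (α : ℂ × EuclideanSpace ℂ (Fin n) → ℂ × EuclideanSpace ℂ (Fin n))
    (hα : DifferentiableOn ℂ α (diskBall n))
    (hmaps : MapsTo α (diskBall n) (diskBall n))
    (hretr : ∀ x ∈ diskBall n, α (α x) = α x)
    (h0 : α 0 = 0)
    (hZne0 : α '' diskBall n ≠ {0})
    (L : Submodule ℂ (ℂ × EuclideanSpace ℂ (Fin n)))
    (hL : L = LinearMap.range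
      ((fderiv ℂ α 0 : (ℂ × EuclideanSpace ℂ (Fin n)) →L[ℂ]
        (ℂ × EuclideanSpace ℂ (Fin n))) :
        (ℂ × EuclideanSpace ℂ (Fin n)) →ₗ[ℂ] (ℂ × EuclideanSpace ℂ (Fin n))))
    (hbd : (L : Set (ℂ × EuclideanSpace ℂ (Fin n))) ∩ frontier (diskBall n) ⊆
      (sphere (0 : ℂ) 1) ×ˢ (sphere (0 : EuclideanSpace ℂ (Fin n)) 1)) :
    Module.finrank ℂ L = 1 ∧
    α '' diskBall n = (L : Set (ℂ × EuclideanSpace ℂ (Fin n))) ∩ diskBall n ∧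
    (∃ c : EuclideanSpace ℂ (Fin n), ‖c‖ = 1 ∧
        α '' diskBall n = (fun w : ℂ => (w, w • c)) '' ball (0 : ℂ) 1) ∧
    ∀ x ∈ α '' diskBall n, α x = x := by
  rw [diskBall_eq_ball] at hα hmaps hretr hZne0 hbd ⊢
  rw [frontier_ball 0 one_ne_zero] at hbd
  have hball : ball (0 : ℂ × EuclideanSpace ℂ (Fin n)) 1 ∈ 𝓝 0 :=
    isOpen_ball.mem_nhds (mem_ball_self one_pos)
  have hP : HasFDerivAt α (fderiv ℂ α 0) 0 := (hα.differentiableAt hball).hasFDerivAt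
  obtain ⟨c, hc, rfl⟩ := L.exists_eq_span_one_prod_of_norm_fst_eq_norm_snd
    (fun x hx => L.norm_fst_eq_norm_snd_of_inter_sphere_subset hbd hx)
    (hL ▸ hP.range_ne_bot_of_retraction (convex_ball 0 1).isPreconnected hα.continuousOn
      (mem_ball_self one_pos) h0 hretr hZne0)
  have hZ := image_eq_span_one_prod_inter_unitBall hα hmaps hretr h0 hc
    (fun v => hL ▸ ⟨v, rfl⟩)
    (hP.apply_eq_self_of_retraction h0 (eventually_of_mem hball hretr)
      (hL ▸ Submodule.mem_span_singleton_self _))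
  refine ⟨finrank_span_singleton (by simp), hZ,
    ⟨c, hc, hZ.trans (span_one_prod_inter_unitBall hc.le)⟩, ?_⟩
  rintro _ ⟨x, hx, rfl⟩
  exact hretr x hx

theorem stmt_1 (n : ℕ) (hn : 1 ≤ n)
    (α : ℂ × EuclideanSpace ℂ (Fin n) → ℂ × EuclideanSpace ℂ (Fin n))
    (hα : DifferentiableOn ℂ α (diskBall n))
    (hmaps : MapsTo α (diskBall n) (diskBall n))
    (hretr : ∀ x ∈ diskBall n, α (α x) = α x)
    (h0 : α 0 = 0)
    (hZne0 : α '' diskBall n ≠ {0})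
    (L : Submodule ℂ (ℂ × EuclideanSpace ℂ (Fin n)))
    (hL : L = LinearMap.range
      ((fderiv ℂ α 0 : (ℂ × EuclideanSpace ℂ (Fin n)) →L[ℂ]
        (ℂ × EuclideanSpace ℂ (Fin n))) :
        (ℂ × EuclideanSpace ℂ (Fin n)) →ₗ[ℂ] (ℂ × EuclideanSpace ℂ (Fin n))))
    (hbd : (L : Set (ℂ × EuclideanSpace ℂ (Fin n))) ∩ frontier (diskBall n) ⊆
      (sphere (0 : ℂ) 1) ×ˢ (sphere (0 : EuclideanSpace ℂ (Fin n)) 1)) :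
    Module.finrank ℂ L = 1 ∧
    α '' diskBall n = (L : Set (ℂ × EuclideanSpace ℂ (Fin n))) ∩ diskBall n ∧
    (∃ c : EuclideanSpace ℂ (Fin n), ‖c‖ = 1 ∧
        α '' diskBall n = (fun w : ℂ => (w, w • c)) '' ball (0 : ℂ) 1) ∧
    ∀ x ∈ α '' diskBall n, α x = x :=
  stmt_1_general n α hα hmaps hretr h0 hZne0 L hL hbd
end
end

section
/- Let n ≥ 1, G = Δ × 𝔹ⁿ, and let α : G → G be a holomorphic retraction with α(0) = 0 whose image Z = α(G) satisfies Z ≠ {0}. Let L be the range of the derivative Dα(0) : ℂ^{1+n} → ℂ^{1+n}. If L ∩ ∂G ⊆ ∂Δ × closure(𝔹ⁿ), then there exists a holomorphic map h : Δ → 𝔹ⁿ with h(0) = 0 such that Z = {(w, h(w)) : w ∈ Δ}, i.e. Z is the graph of a 𝔹ⁿ-valued holomorphic mapping of Δ. -/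
/-!
The boundary condition says that every fixed vector `p` of `A = Dα(0)` satisfies `‖p₂‖ ≤ ‖p₁‖`.
A holomorphic map is strictly differentiable, so any two fixed points `x, y` of `α` near `0`
satisfy `‖(I - A)(x - y)‖ = o(‖x - y‖)`; as `I - A` is injective on every subspace `W` without
nonzero fixed vectors of `A`, nearby points of `Z` coincide once `x - y ∈ W`. For `W = ℂ^{1+n}`
this shows that `Z ≠ {0}` forces a fixed vector `u` of `A` with `u₁ = 1`, and by the equality case
of the Schwarz lemma the disc `w ↦ α(w u)` is the graph of `h w = α(w u)₂`. For `W = {0} × ℂⁿ`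
it shows that `Z` agrees with this graph near `0`, and the identity theorem on the discs
`t ↦ α(t x)` carries this over to all of `Z`.
-/

open Metric Set

open Filter Topology Asymptotics Function

namespace Complex

variable {E F : Type*} [NormedAddCommGroup E] [NormedSpace ℂ E]
  [NormedAddCommGroup F] [NormedSpace ℂ F]

theorem dist_le_mul_dist_of_mapsTo_ball_of_isLittleO {g : E → F} {c x y : E} {R M r : ℝ}
    (hd : DifferentiableOn ℂ g (ball c R)) (hmaps : MapsTo g (ball c R) (closedBall (g c) M))
    (ho : (g · - g c) =o[𝓝 c] (‖· - c‖)) (hr : 3 * r ≤ R)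
    (hx : x ∈ ball c r) (hy : y ∈ ball c r) :
    dist (g x) (g y) ≤ 5 * M * r / R ^ 2 * dist x y := by
  have hr0 : 0 < r := nonempty_ball.1 ⟨x, hx⟩
  have hM : 0 ≤ M := nonempty_closedBall.1 ⟨_, hmaps (mem_ball_self (by linarith))⟩
  -- Schwarz of order two makes `g` quadratically small near `c`, so `g` varies by
  -- `O(r²)` on `ball y (2 * r)`; Schwarz of order one on that ball then gives the bound.
  have quad : ∀ z ∈ ball c R, dist (g z) (g c) ≤ M * (dist z c / R) ^ 2 := fun z hz => by
    simpa using dist_le_mul_div_pow_of_mapsTo_ball_of_isLittleO (n := 1) hd hmaps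
      (by simpa using ho) hz
  have hsub : ball y (2 * r) ⊆ ball c R := fun z hz => by
    rw [mem_ball] at hz hy ⊢
    linarith [dist_triangle z y c]
  have hmaps' : MapsTo g (ball y (2 * r)) (closedBall (g y) (10 * M * r ^ 2 / R ^ 2)) := by
    intro z hz
    have hzc : dist z c ≤ 3 * r := by
      rw [mem_ball] at hz hy; linarith [dist_triangle z y c]
    have hyc : dist y c ≤ r := (mem_ball.1 hy).le
    have hR : 0 < R := by linarith
    calc dist (g z) (g y) ≤ dist (g z) (g c) + dist (g y) (g c) := dist_triangle_right _ _ _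
      _ ≤ M * (dist z c / R) ^ 2 + M * (dist y c / R) ^ 2 :=
        add_le_add (quad z (hsub hz)) (quad y (hsub (mem_ball_self (by positivity))))
      _ ≤ M * (3 * r / R) ^ 2 + M * (r / R) ^ 2 := by gcongr
      _ = 10 * M * r ^ 2 / R ^ 2 := by ring
  have hxy : x ∈ ball y (2 * r) := by
    rw [mem_ball] at hx hy ⊢; linarith [dist_triangle_right x y c]
  calc dist (g x) (g y) ≤ 10 * M * r ^ 2 / R ^ 2 / (2 * r) * dist x y :=
        dist_le_div_mul_dist_of_mapsTo_ball (hd.mono hsub) hmaps' hxy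
    _ = 5 * M * r / R ^ 2 * dist x y := by field_simp; ring

theorem hasStrictFDerivAt_of_differentiableOn {f : E → F} {s : Set E} {c : E}
    (hd : DifferentiableOn ℂ f s) (hs : s ∈ 𝓝 c) : HasStrictFDerivAt f (fderiv ℂ f c) c := by
  set f' := fderiv ℂ f c
  set g : E → F := fun x => f x - f' x
  have hgd : DifferentiableOn ℂ g s := hd.sub f'.differentiable.differentiableOn
  obtain ⟨R, hR, hRs⟩ : ∃ R > 0, ball c R ⊆ s ∩ g ⁻¹' ball (g c) 1 :=
    Metric.mem_nhds_iff.1 (inter_mem hs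
      ((hgd.differentiableAt hs).continuousAt.preimage_mem_nhds (ball_mem_nhds _ one_pos)))
  have ho : (g · - g c) =o[𝓝 c] (‖· - c‖) := by
    have := (hd.differentiableAt hs).hasFDerivAt.isLittleO.norm_right
    refine this.congr_left fun x => ?_
    simp only [g, map_sub]
    abel
  rw [hasStrictFDerivAt_iff_isLittleO, isLittleO_iff]
  intro ε hε
  set r := min (R / 3) (ε * R ^ 2 / 5)
  have hr : 0 < r := by positivity
  filter_upwards [prod_mem_nhds (ball_mem_nhds c hr) (ball_mem_nhds c hr)] with p ⟨hp1, hp2⟩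
  have key := dist_le_mul_dist_of_mapsTo_ball_of_isLittleO (hgd.mono fun z hz => (hRs hz).1)
    (fun z hz => ball_subset_closedBall (hRs hz).2) ho
    (by linarith [min_le_left (R / 3) (ε * R ^ 2 / 5)]) hp1 hp2
  have hcoef : 5 * 1 * r / R ^ 2 ≤ ε := by
    rw [div_le_iff₀ (by positivity)]
    linarith [min_le_right (R / 3) (ε * R ^ 2 / 5)]
  calc ‖f p.1 - f p.2 - f' (p.1 - p.2)‖ = dist (g p.1) (g p.2) := by
        rw [dist_eq_norm]; simp only [g, map_sub]; congr 1; abel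
    _ ≤ 5 * 1 * r / R ^ 2 * dist p.1 p.2 := key
    _ ≤ ε * ‖p.1 - p.2‖ := by rw [dist_eq_norm]; gcongr

theorem eqOn_id_of_mapsTo_ball_of_deriv_eq_one {f : ℂ → ℂ}
    (hd : DifferentiableOn ℂ f (ball 0 1)) (hmaps : MapsTo f (ball 0 1) (ball 0 1))
    (h0 : f 0 = 0) (h1 : deriv f 0 = 1) : EqOn f id (ball 0 1) := by
  have hmaps' : MapsTo f (ball 0 1) (closedBall (f 0) 1) := by
    rw [h0]; exact hmaps.mono_right ball_subset_closedBall
  have := affine_of_mapsTo_ball_of_norm_dslope_eq_div hd hmaps' (mem_ball_self one_pos)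
    (by simp [h1])
  intro z hz
  simpa [h0, h1] using this hz

end Complex

theorem HasStrictFDerivAt.eq_of_isFixedPt_of_sub_mem {𝕜 E : Type*} [NontriviallyNormedField 𝕜]
    [CompleteSpace 𝕜] [NormedAddCommGroup E] [NormedSpace 𝕜 E] [FiniteDimensional 𝕜 E]
    {α : E → E} {A : E →L[𝕜] E} {c : E} (hα : HasStrictFDerivAt α A c) {W : Submodule 𝕜 E}
    (hW : ∀ w ∈ W, A w = w → w = 0) :
    ∃ r > 0, ∀ x ∈ ball c r, ∀ y ∈ ball c r, IsFixedPt α x → IsFixedPt α y → x - y ∈ W →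
      x = y := by
  have hker : LinearMap.ker ((LinearMap.id - A.toLinearMap) ∘ₗ W.subtype) = ⊥ := by
    refine LinearMap.ker_eq_bot'.2 fun w hw => Subtype.ext (hW w w.2 ?_)
    have hw' : (w : E) - A w = 0 := by simpa using hw
    exact (sub_eq_zero.1 hw').symm
  obtain ⟨K, -, hK⟩ := LinearMap.exists_antilipschitzWith _ hker
  obtain ⟨κ, hκ, hκW⟩ := antilipschitzWith_iff_exists_mul_le_norm.1 ⟨K, hK⟩
  obtain ⟨r, hr, hloc⟩ := eventually_nhds_iff_ball.1
    ((hasStrictFDerivAt_iff_isLittleO.1 hα).def (half_pos hκ))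
  refine ⟨r, hr, fun x hx y hy hfx hfy hxy => sub_eq_zero.1 (norm_le_zero_iff.1 ?_)⟩
  have hlow : κ * ‖x - y‖ ≤ ‖x - y - A (x - y)‖ := hκW ⟨x - y, hxy⟩
  have hup : ‖x - y - A (x - y)‖ ≤ κ / 2 * ‖x - y‖ := by
    simpa [hfx.eq, hfy.eq] using hloc (x, y) (by simpa [← ball_prod_same] using ⟨hx, hy⟩)
  nlinarith [norm_nonneg (x - y)]

theorem norm_snd_le_norm_fst_of_inter_frontier_subset {E₁ E₂ : Type*} [NormedAddCommGroup E₁]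
    [NormedSpace ℂ E₁] [NormedAddCommGroup E₂] [NormedSpace ℂ E₂] {L : Submodule ℂ (E₁ × E₂)}
    (hL : (L : Set (E₁ × E₂)) ∩ frontier (ball 0 1) ⊆ sphere 0 1 ×ˢ univ) {p : E₁ × E₂}
    (hp : p ∈ L) : ‖p.2‖ ≤ ‖p.1‖ := by
  by_contra! hlt
  have hp2 : 0 < ‖p.2‖ := (norm_nonneg _).trans_lt hlt
  set q := ((‖p.2‖⁻¹ : ℝ) : ℂ) • p
  have hq2 : ‖q.2‖ = 1 := by simp [q, norm_smul, hp2.ne']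
  have hq1 : ‖q.1‖ < 1 := by
    simpa [q, norm_smul, inv_mul_lt_iff₀ hp2] using hlt
  have hq : q ∈ frontier (ball (0 : E₁ × E₂) 1) := by
    rw [frontier_ball _ one_ne_zero, mem_sphere_zero_iff_norm, Prod.norm_def, hq2,
      max_eq_right hq1.le]
  have := (hL ⟨L.smul_mem _ hp, hq⟩).1
  rw [mem_sphere_zero_iff_norm] at this
  exact hq1.ne this

theorem mapsTo_ball_smul_const {V : Type*} [NormedAddCommGroup V] [NormedSpace ℂ V] {u : V}
    (hu : ‖u‖ ≤ 1) : MapsTo (· • u) (ball (0 : ℂ) 1) (ball (0 : V) 1) := fun w hw => by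
  rw [mem_ball_zero_iff, norm_smul]
  exact (mul_le_of_le_one_right (norm_nonneg w) hu).trans_lt (mem_ball_zero_iff.1 hw)

section

variable {E F : Type*} [NormedAddCommGroup E] [NormedSpace ℂ E]
  [NormedAddCommGroup F] [NormedSpace ℂ F]

structure IsHolomorphicRetraction (α : E → E) (U : Set E) : Prop where
  differentiableOn : DifferentiableOn ℂ α U
  mapsTo : MapsTo α U U
  idem : ∀ x ∈ U, α (α x) = α x

namespace IsHolomorphicRetraction

variable {α : E → E} {U : Set E}

theorem eq_zero_of_isFixedPt_of_eventually [CompleteSpace F] (hα : IsHolomorphicRetraction α U)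
    (hUc : Convex ℝ U) (hUo : IsOpen U) (hU0 : 0 ∈ U) (hα0 : α 0 = 0) {χ : E → F}
    (hχ : DifferentiableOn ℂ χ U) (hloc : ∀ᶠ x in 𝓝 0, IsFixedPt α x → χ x = 0)
    {x : E} (hx : x ∈ U) (hfx : IsFixedPt α x) : χ x = 0 := by
  set s : Set ℂ := (fun t : ℂ => t • x) ⁻¹' U
  have hs : IsOpen s := hUo.preimage (continuous_id.smul continuous_const)
  have hsc : Convex ℝ s := hUc.linear_preimage ((LinearMap.toSpanSingleton ℂ E x).restrictScalars ℝ)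
  have h0s : (0 : ℂ) ∈ s := by simpa [s] using hU0
  have hline : DifferentiableOn ℂ (fun t : ℂ => α (t • x)) s :=
    hα.differentiableOn.comp (differentiable_id.smul_const x).differentiableOn fun _ ht => ht
  have hφ : DifferentiableOn ℂ (fun t : ℂ => χ (α (t • x))) s :=
    hχ.comp hline fun _ ht => hα.mapsTo ht
  have hcont : Tendsto (fun t : ℂ => α (t • x)) (𝓝 0) (𝓝 0) := by
    have := (hline.differentiableAt (hs.mem_nhds h0s)).continuousAt
    simpa [ContinuousAt, hα0] using this
  have hev : (fun t : ℂ => χ (α (t • x))) =ᶠ[𝓝 0] 0 := by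
    filter_upwards [hcont.eventually hloc, hs.mem_nhds h0s] with t ht hts
    exact ht (hα.idem _ hts)
  have := (hφ.analyticOnNhd hs).eqOn_zero_of_preconnected_of_eventuallyEq_zero
    hsc.isPreconnected h0s hev (show (1 : ℂ) ∈ s by simpa [s] using hx)
  simpa [hfx.eq] using this

theorem exists_ne_zero_fderiv_apply_eq [FiniteDimensional ℂ E]
    (hα : IsHolomorphicRetraction α U) (hUc : Convex ℝ U) (hUo : IsOpen U) (hU0 : 0 ∈ U)
    (hα0 : α 0 = 0) (hne : ∃ x ∈ U, IsFixedPt α x ∧ x ≠ 0) :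
    ∃ v ≠ 0, fderiv ℂ α 0 v = v := by
  by_contra! hfix
  obtain ⟨r, hr, hinj⟩ :=
    (Complex.hasStrictFDerivAt_of_differentiableOn hα.differentiableOn (hUo.mem_nhds hU0)
      ).eq_of_isFixedPt_of_sub_mem (W := ⊤) fun w _ hw => by_contra fun hw0 => hfix w hw0 hw
  have hloc : ∀ᶠ x in 𝓝 0, IsFixedPt α x → id x = 0 := by
    filter_upwards [ball_mem_nhds 0 hr] with x hx hfx
    simpa using hinj x hx 0 (mem_ball_self hr) hfx hα0 Submodule.mem_top
  obtain ⟨x, hx, hfx, hx0⟩ := hne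
  exact hx0 (hα.eq_zero_of_isFixedPt_of_eventually hUc hUo hU0 hα0 differentiableOn_id hloc
    hx hfx)

end IsHolomorphicRetraction

end

namespace IsHolomorphicRetraction

variable {E : Type*} [NormedAddCommGroup E] [NormedSpace ℂ E] {α : ℂ × E → ℂ × E}

theorem fst_apply_smul (hα : IsHolomorphicRetraction α (ball 0 1)) (hα0 : α 0 = 0)
    {u : ℂ × E} (hu1 : u.1 = 1) (hAu : fderiv ℂ α 0 u = u) (hu : ‖u‖ ≤ 1) {w : ℂ}
    (hw : w ∈ ball (0 : ℂ) 1) : (α (w • u)).1 = w := by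
  have hdisc : DifferentiableOn ℂ (fun t : ℂ => α (t • u)) (ball 0 1) :=
    hα.differentiableOn.comp (differentiable_id.smul_const u).differentiableOn
      (mapsTo_ball_smul_const hu)
  have hmaps : MapsTo (fun t : ℂ => (α (t • u)).1) (ball 0 1) (ball 0 1) := fun t ht =>
    mem_ball_zero_iff.2 ((norm_fst_le _).trans_lt
      (mem_ball_zero_iff.1 (hα.mapsTo (mapsTo_ball_smul_const hu ht))))
  have hderiv : HasDerivAt (fun t : ℂ => (α (t • u)).1) 1 0 := by
    have hA : HasFDerivAt α (fderiv ℂ α 0) ((0 : ℂ) • u) := by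
      rw [zero_smul]
      exact (hα.differentiableOn.differentiableAt (ball_mem_nhds 0 one_pos)).hasFDerivAt
    have hline := hA.comp_hasDerivAt (0 : ℂ) ((hasDerivAt_id (0 : ℂ)).smul_const u)
    simpa [comp_def, hAu, hu1] using hasFDerivAt_fst.comp_hasDerivAt (0 : ℂ) hline
  exact Complex.eqOn_id_of_mapsTo_ball_of_deriv_eq_one hdisc.fst hmaps (by simp [hα0])
    hderiv.deriv hw

theorem snd_eq_of_isFixedPt [FiniteDimensional ℂ E] (hα : IsHolomorphicRetraction α (ball 0 1))
    (hα0 : α 0 = 0) (hcone : ∀ p, fderiv ℂ α 0 p = p → ‖p.2‖ ≤ ‖p.1‖) {u : ℂ × E}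
    (hu1 : u.1 = 1) (hAu : fderiv ℂ α 0 u = u) (hu : ‖u‖ ≤ 1) {x : ℂ × E}
    (hx : x ∈ ball 0 1) (hfx : IsFixedPt α x) : x.2 = (α (x.1 • u)).2 := by
  have hfst : MapsTo Prod.fst (ball (0 : ℂ × E) 1) (ball 0 1) := fun x hx =>
    mem_ball_zero_iff.2 ((norm_fst_le x).trans_lt (mem_ball_zero_iff.1 hx))
  have hdisc : MapsTo (fun x : ℂ × E => x.1 • u) (ball 0 1) (ball 0 1) :=
    (mapsTo_ball_smul_const hu).comp hfst
  obtain ⟨r, hr, hinj⟩ := (Complex.hasStrictFDerivAt_of_differentiableOn hα.differentiableOn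
    (ball_mem_nhds 0 one_pos)).eq_of_isFixedPt_of_sub_mem
    (W := LinearMap.ker (LinearMap.fst ℂ ℂ E)) fun w hw hAw => by
      rw [LinearMap.mem_ker, LinearMap.fst_apply] at hw
      exact Prod.ext hw (norm_le_zero_iff.1 (by simpa [hw] using hcone w hAw))
  have hloc : ∀ᶠ x in 𝓝 0, IsFixedPt α x → x.2 - (α (x.1 • u)).2 = 0 := by
    filter_upwards [ball_mem_nhds 0 (lt_min hr one_pos)] with x hx hfx
    have hx1 : x ∈ ball 0 1 := ball_subset_ball (min_le_right _ _) hx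
    have hy : ‖α (x.1 • u)‖ < r := calc
      ‖α (x.1 • u)‖ ≤ ‖x.1 • u‖ := Complex.norm_le_norm_of_mapsTo_ball hα.differentiableOn
          (hα.mapsTo.mono_right ball_subset_closedBall) hα0 (mem_ball_zero_iff.1 (hdisc hx1))
      _ ≤ ‖x.1‖ := by rw [norm_smul]; exact mul_le_of_le_one_right (norm_nonneg _) hu
      _ ≤ ‖x‖ := norm_fst_le x
      _ < r := (mem_ball_zero_iff.1 hx).trans_le (min_le_left _ _)
    have hxy := hinj x (ball_subset_ball (min_le_left _ _) hx) _ (mem_ball_zero_iff.2 hy) hfx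
      (hα.idem _ (hdisc hx1)) (by simp [hα.fst_apply_smul hα0 hu1 hAu hu (hfst hx1)])
    rw [sub_eq_zero, ← hxy]
  have hχ : DifferentiableOn ℂ (fun x : ℂ × E => x.2 - (α (x.1 • u)).2) (ball 0 1) :=
    differentiableOn_snd.sub
      (hα.differentiableOn.comp (differentiable_fst.smul_const u).differentiableOn hdisc).snd
  exact sub_eq_zero.1 (hα.eq_zero_of_isFixedPt_of_eventually (convex_ball 0 1) isOpen_ball
    (mem_ball_self one_pos) hα0 hχ hloc hx hfx)

theorem exists_fderiv_apply_eq_fst_eq_one [FiniteDimensional ℂ E]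
    (hα : IsHolomorphicRetraction α (ball 0 1)) (hα0 : α 0 = 0)
    (hcone : ∀ p, fderiv ℂ α 0 p = p → ‖p.2‖ ≤ ‖p.1‖)
    (hne : ∃ x ∈ ball 0 1, IsFixedPt α x ∧ x ≠ 0) :
    ∃ u : ℂ × E, u.1 = 1 ∧ fderiv ℂ α 0 u = u ∧ ‖u‖ ≤ 1 := by
  obtain ⟨v, hv0, hAv⟩ := hα.exists_ne_zero_fderiv_apply_eq (convex_ball 0 1) isOpen_ball
    (mem_ball_self one_pos) hα0 hne
  have hv1 : v.1 ≠ 0 := fun h =>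
    hv0 (Prod.ext h (norm_le_zero_iff.1 (by simpa [h] using hcone v hAv)))
  have hAu : fderiv ℂ α 0 (v.1⁻¹ • v) = v.1⁻¹ • v := by rw [map_smul, hAv]
  have hu1 : (v.1⁻¹ • v).1 = 1 := inv_mul_cancel₀ hv1
  refine ⟨v.1⁻¹ • v, hu1, hAu, ?_⟩
  rw [Prod.norm_def, hu1, norm_one]
  exact max_le le_rfl (by simpa [hu1] using hcone _ hAu)

theorem exists_image_eq_graph [FiniteDimensional ℂ E] (hα : IsHolomorphicRetraction α (ball 0 1))
    (hα0 : α 0 = 0) (hcone : ∀ p, fderiv ℂ α 0 p = p → ‖p.2‖ ≤ ‖p.1‖)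
    (hne : ∃ x ∈ ball 0 1, IsFixedPt α x ∧ x ≠ 0) :
    ∃ h : ℂ → E, DifferentiableOn ℂ h (ball 0 1) ∧ MapsTo h (ball 0 1) (ball 0 1) ∧ h 0 = 0 ∧
      α '' ball 0 1 = (fun w : ℂ => (w, h w)) '' ball 0 1 := by
  obtain ⟨u, hu1, hAu, hu⟩ := hα.exists_fderiv_apply_eq_fst_eq_one hα0 hcone hne
  have hdisc := mapsTo_ball_smul_const hu
  refine ⟨fun w => (α (w • u)).2,
    (hα.differentiableOn.comp (differentiable_id.smul_const u).differentiableOn hdisc).snd,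
    fun w hw => mem_ball_zero_iff.2 ((norm_snd_le _).trans_lt
      (mem_ball_zero_iff.1 (hα.mapsTo (hdisc hw)))), by simp [hα0], ?_⟩
  apply Subset.antisymm
  · rintro _ ⟨y, hy, rfl⟩
    have hx := hα.mapsTo hy
    refine ⟨(α y).1, mem_ball_zero_iff.2 ((norm_fst_le _).trans_lt (mem_ball_zero_iff.1 hx)), ?_⟩
    exact Prod.ext rfl (hα.snd_eq_of_isFixedPt hα0 hcone hu1 hAu hu hx (hα.idem y hy)).symm
  · rintro _ ⟨w, hw, rfl⟩
    exact ⟨w • u, hdisc hw, Prod.ext (hα.fst_apply_smul hα0 hu1 hAu hu hw) rfl⟩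

end IsHolomorphicRetraction

theorem stmt_2_general (n : ℕ)
    (α : ℂ × EuclideanSpace ℂ (Fin n) → ℂ × EuclideanSpace ℂ (Fin n))
    (hα : DifferentiableOn ℂ α (diskBall n))
    (hmaps : MapsTo α (diskBall n) (diskBall n))
    (hretr : ∀ x ∈ diskBall n, α (α x) = α x)
    (h0 : α 0 = 0)
    (hZne0 : α '' diskBall n ≠ {0})
    (L : Submodule ℂ (ℂ × EuclideanSpace ℂ (Fin n)))
    (hL : L = LinearMap.range
      ((fderiv ℂ α 0 : (ℂ × EuclideanSpace ℂ (Fin n)) →L[ℂ]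
        (ℂ × EuclideanSpace ℂ (Fin n))) :
        (ℂ × EuclideanSpace ℂ (Fin n)) →ₗ[ℂ] (ℂ × EuclideanSpace ℂ (Fin n))))
    (hbd : (L : Set (ℂ × EuclideanSpace ℂ (Fin n))) ∩ frontier (diskBall n) ⊆
      (sphere (0 : ℂ) 1) ×ˢ closure (ball (0 : EuclideanSpace ℂ (Fin n)) 1)) :
    ∃ h : ℂ → EuclideanSpace ℂ (Fin n),
      DifferentiableOn ℂ h (ball (0 : ℂ) 1) ∧
      MapsTo h (ball (0 : ℂ) 1) (ball (0 : EuclideanSpace ℂ (Fin n)) 1) ∧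
      h 0 = 0 ∧
      α '' diskBall n = (fun w : ℂ => (w, h w)) '' ball (0 : ℂ) 1 := by
  have hG : diskBall n = ball 0 1 := by rw [diskBall, ball_prod_same]; rfl
  rw [hG] at hα hmaps hretr hZne0 hbd ⊢
  have hcone : ∀ p, fderiv ℂ α 0 p = p → ‖p.2‖ ≤ ‖p.1‖ := fun p hp =>
    norm_snd_le_norm_fst_of_inter_frontier_subset
      (hbd.trans (prod_mono subset_rfl (subset_univ _))) (hL ▸ ⟨p, hp⟩)
  have hne : ∃ x ∈ ball 0 1, IsFixedPt α x ∧ x ≠ 0 := by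
    by_contra! hall
    refine hZne0 (eq_singleton_iff_unique_mem.2 ⟨⟨0, mem_ball_self one_pos, h0⟩, ?_⟩)
    rintro _ ⟨y, hy, rfl⟩
    exact hall _ (hmaps hy) (hretr y hy)
  exact IsHolomorphicRetraction.exists_image_eq_graph ⟨hα, hmaps, hretr⟩ h0 hcone hne

theorem stmt_2 (n : ℕ) (hn : 1 ≤ n)
    (α : ℂ × EuclideanSpace ℂ (Fin n) → ℂ × EuclideanSpace ℂ (Fin n))
    (hα : DifferentiableOn ℂ α (diskBall n))
    (hmaps : MapsTo α (diskBall n) (diskBall n))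
    (hretr : ∀ x ∈ diskBall n, α (α x) = α x)
    (h0 : α 0 = 0)
    (hZne0 : α '' diskBall n ≠ {0})
    (L : Submodule ℂ (ℂ × EuclideanSpace ℂ (Fin n)))
    (hL : L = LinearMap.range
      ((fderiv ℂ α 0 : (ℂ × EuclideanSpace ℂ (Fin n)) →L[ℂ]
        (ℂ × EuclideanSpace ℂ (Fin n))) :
        (ℂ × EuclideanSpace ℂ (Fin n)) →ₗ[ℂ] (ℂ × EuclideanSpace ℂ (Fin n))))
    (hbd : (L : Set (ℂ × EuclideanSpace ℂ (Fin n))) ∩ frontier (diskBall n) ⊆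
      (sphere (0 : ℂ) 1) ×ˢ closure (ball (0 : EuclideanSpace ℂ (Fin n)) 1)) :
    ∃ h : ℂ → EuclideanSpace ℂ (Fin n),
      DifferentiableOn ℂ h (ball (0 : ℂ) 1) ∧
      MapsTo h (ball (0 : ℂ) 1) (ball (0 : EuclideanSpace ℂ (Fin n)) 1) ∧
      h 0 = 0 ∧
      α '' diskBall n = (fun w : ℂ => (w, h w)) '' ball (0 : ℂ) 1 :=
  stmt_2_general n α hα hmaps hretr h0 hZne0 L hL hbd
end

section
/- Let n ≥ 1, G = Δ × 𝔹ⁿ, and let α : G → G be a holomorphic retraction with α(0) = 0 whose image Z = α(G) satisfies Z ≠ {0}. Let L be the range of the derivative Dα(0) : ℂ^{1+n} → ℂ^{1+n}. If L ∩ ∂G ⊆ closure(Δ) × ∂𝔹ⁿ, then there exist a complex linear subspace V ⊆ ℂⁿ with dim_ℂ V = dim_ℂ L and a holomorphic function g : V ∩ 𝔹ⁿ → Δ with g(0) = 0 such that Z = {(g(z), z) : z ∈ V ∩ 𝔹ⁿ}, i.e. Z is the graph of a Δ-valued holomorphic function over a complex linear subspace of 𝔹ⁿ. -/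
/-!
The derivative `P = Dα(0)` is idempotent, and the boundary condition on its range `L` says
exactly that `‖y.1‖ ≤ ‖y.2‖` on `L`; hence `L = {(φ v, v) | v ∈ V}` for a linear contraction
`φ : ℂⁿ → ℂ` over `V = pr₂ L`. On each complex line of `V`, `u ↦ pr₂ (α (φ u, u))` maps the disc
into the ball with derivative the identity at `0`, so by the equality case of the Schwarz lemma
`pr₂ (α (φ u, u)) = u` on `V ∩ 𝔹ⁿ`: the graph of `g u = pr₁ (α (φ u, u))` lies in `Z`.

Conversely, let `Q x = (φ (q x.2), q x.2)` with `q` the orthogonal projection onto `V`. Then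
`F = α ∘ Q ∘ α` is a holomorphic map with `F'(0) = P` and `α ∘ α = α`, `α ∘ F = F ∘ α = F ∘ F = F`.
For `d = α x - F x` these identities and strict differentiability at `0` (holomorphic maps are
`C¹` by the Cauchy estimates) give `‖d‖ ≤ ‖d‖ / 2` near `0`, so `α = F` near `0` and, by the
identity theorem, on the whole ball; thus every point `α x = α (Q (α x))` of `Z` lies on the
graph.
-/

open Metric Set Filter Topology

noncomputable section

section Holomorphic

variable {X Y : Type*} [NormedAddCommGroup X] [NormedSpace ℂ X]
  [NormedAddCommGroup Y] [NormedSpace ℂ Y] {f : X → Y} {x : X} {c : Y} {r M : ℝ}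

theorem norm_fderiv_le_of_mapsTo_ball (hf : DifferentiableOn ℂ f (ball x r))
    (hmaps : MapsTo f (ball x r) (closedBall c M)) {y : X} (hy : y ∈ ball x (r / 2)) :
    ‖fderiv ℂ f y‖ ≤ 4 * M / r := by
  have hsub : ball y (r / 2) ⊆ ball x r := ball_subset_ball' (by linarith [mem_ball.1 hy])
  have hmaps' : MapsTo f (ball y (r / 2)) (closedBall (f y) (2 * M)) := fun z hz ↦ by
    have h1 := hmaps (hsub hz)
    have h2 := hmaps (hsub (mem_ball_self (pos_of_mem_ball hy)))
    rw [mem_closedBall] at h1 h2 ⊢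
    linarith [dist_triangle_right (f z) (f y) c]
  calc ‖fderiv ℂ f y‖ ≤ 2 * M / (r / 2) :=
        Complex.norm_fderiv_le_div_of_mapsTo_ball (hf.mono hsub) hmaps' (pos_of_mem_ball hy)
    _ = 4 * M / r := by ring

theorem norm_sub_le_of_mapsTo_ball (hf : DifferentiableOn ℂ f (ball x r))
    (hmaps : MapsTo f (ball x r) (closedBall c M)) {y y' : X} (hy : y ∈ ball x (r / 2))
    (hy' : y' ∈ ball x (r / 2)) : ‖f y - f y'‖ ≤ 4 * M / r * ‖y - y'‖ := by
  have hsub : ball x (r / 2) ⊆ ball x r := ball_subset_ball (by linarith [pos_of_mem_ball hy])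
  exact (convex_ball x (r / 2)).norm_image_sub_le_of_norm_fderiv_le
    (fun _ hz ↦ hf.differentiableAt (isOpen_ball.mem_nhds (hsub hz)))
    (fun _ hz ↦ norm_fderiv_le_of_mapsTo_ball hf hmaps hz) hy' hy

theorem norm_fderiv_sub_le_of_mapsTo_ball (hf : DifferentiableOn ℂ f (ball x r))
    (hmaps : MapsTo f (ball x r) (closedBall c M)) {z : X} (hz : z ∈ ball x (r / 4)) :
    ‖fderiv ℂ f z - fderiv ℂ f x‖ ≤ 64 * M / r ^ 2 * ‖z - x‖ := by
  have hr : 0 < r := by linarith [pos_of_mem_ball hz]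
  have hzx : ‖z - x‖ < r / 4 := mem_ball_iff_norm.1 hz
  have hshift : ∀ w ∈ ball x (r / 4), w + (z - x) ∈ ball x (r / 2) ∧ w ∈ ball x (r / 2) :=
    fun w hw ↦ by
      rw [mem_ball_iff_norm] at hw ⊢
      rw [mem_ball_iff_norm, add_sub_right_comm]
      exact ⟨(norm_add_le _ _).trans_lt (by linarith), by linarith⟩
  set h : X → Y := fun w ↦ f (w + (z - x)) - f w
  have hdiff : ∀ w ∈ ball x (r / 4),
      HasFDerivAt h (fderiv ℂ f (w + (z - x)) - fderiv ℂ f w) w := fun w hw ↦ by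
      have hsub : ball x (r / 2) ⊆ ball x r := ball_subset_ball (by linarith)
      refine ((hasFDerivAt_comp_add_right (z - x)).2 ?_).sub ?_ <;>
        refine (hf.differentiableAt (isOpen_ball.mem_nhds (hsub ?_))).hasFDerivAt
      exacts [(hshift w hw).1, (hshift w hw).2]
  have hmaps' : MapsTo h (ball x (r / 4)) (closedBall 0 (4 * M / r * ‖z - x‖)) := fun w hw ↦ by
    rw [mem_closedBall_zero_iff]
    simpa using norm_sub_le_of_mapsTo_ball hf hmaps (hshift w hw).1 (hshift w hw).2
  have hbound := norm_fderiv_le_of_mapsTo_ball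
    (fun w hw ↦ (hdiff w hw).differentiableAt.differentiableWithinAt) hmaps'
    (mem_ball_self (by positivity : 0 < r / 4 / 2))
  rw [(hdiff x (mem_ball_self (by positivity))).fderiv, add_sub_cancel] at hbound
  calc _ ≤ 4 * (4 * M / r * ‖z - x‖) / (r / 4) := hbound
    _ = 64 * M / r ^ 2 * ‖z - x‖ := by field_simp; ring

theorem DifferentiableOn.hasStrictFDerivAt_of_isOpen {s : Set X} (hf : DifferentiableOn ℂ f s)
    (hs : IsOpen s) (hx : x ∈ s) : HasStrictFDerivAt f (fderiv ℂ f x) x := by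
  have hnhds : s ∩ f ⁻¹' closedBall (f x) 1 ∈ 𝓝 x :=
    inter_mem (hs.mem_nhds hx) ((hf.continuousOn.continuousAt (hs.mem_nhds hx)).eventually
      (closedBall_mem_nhds (f x) one_pos))
  obtain ⟨r, hr, hball⟩ := Metric.mem_nhds_iff.1 hnhds
  have hfr : DifferentiableOn ℂ f (ball x r) := hf.mono fun y hy ↦ (hball hy).1
  have hmaps : MapsTo f (ball x r) (closedBall (f x) 1) := fun y hy ↦ (hball hy).2
  refine hasStrictFDerivAt_of_hasFDerivAt_of_continuousAt ?_ ?_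
  · filter_upwards [hs.mem_nhds hx] with y hy
    exact (hf.differentiableAt (hs.mem_nhds hy)).hasFDerivAt
  · rw [ContinuousAt, tendsto_iff_norm_sub_tendsto_zero]
    have hlim : Tendsto (fun z ↦ 64 * 1 / r ^ 2 * ‖z - x‖) (𝓝 x) (𝓝 0) := by
      simpa using (tendsto_norm_sub_self x).const_mul (64 * 1 / r ^ 2)
    refine squeeze_zero' (Eventually.of_forall fun _ ↦ norm_nonneg _) ?_ hlim
    filter_upwards [ball_mem_nhds x (by positivity : 0 < r / 4)] with z hz
    exact norm_fderiv_sub_le_of_mapsTo_ball hfr hmaps hz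

theorem DifferentiableOn.eqOn_of_convex_of_eventuallyEq [CompleteSpace Y] {g : X → Y}
    {s : Set X} (hf : DifferentiableOn ℂ f s) (hg : DifferentiableOn ℂ g s) (hs : IsOpen s)
    (hconv : Convex ℝ s) (hx : x ∈ s) (hfg : f =ᶠ[𝓝 x] g) : EqOn f g s := by
  intro y hy
  set ℓ : ℂ → X := fun t ↦ x + t • (y - x)
  have hℓ : Continuous ℓ := by fun_prop
  have hU : IsOpen (ℓ ⁻¹' s) := hs.preimage hℓ
  have hUconv : Convex ℝ (ℓ ⁻¹' s) :=
    (hconv.translate_preimage_right x).linear_preimage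
      ((LinearMap.toSpanSingleton ℂ X (y - x)).restrictScalars ℝ)
  have hℓdiff : DifferentiableOn ℂ ℓ (ℓ ⁻¹' s) := by fun_prop
  have h0 : (0 : ℂ) ∈ ℓ ⁻¹' s := by simpa [ℓ] using hx
  have h1 : (1 : ℂ) ∈ ℓ ⁻¹' s := by simpa [ℓ] using hy
  have hℓ0 : Tendsto ℓ (𝓝 0) (𝓝 x) := by simpa [ℓ] using hℓ.tendsto 0
  have heq := AnalyticOnNhd.eqOn_of_preconnected_of_eventuallyEq
    ((hf.comp hℓdiff fun _ ht ↦ ht).analyticOnNhd hU)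
    ((hg.comp hℓdiff fun _ ht ↦ ht).analyticOnNhd hU) hUconv.isPreconnected h0
    (hℓ0.eventually hfg) h1
  simpa [ℓ] using heq

end Holomorphic

section Retraction

variable {𝕜 E : Type*} [NontriviallyNormedField 𝕜] [NormedAddCommGroup E] [NormedSpace 𝕜 E]
  {a : E}

theorem isIdempotentElem_fderiv_of_retraction {f : E → E} (hf : DifferentiableAt 𝕜 f a)
    (ha : f a = a) (hff : f ∘ f =ᶠ[𝓝 a] f) : IsIdempotentElem (fderiv 𝕜 f a) := by
  have hcomp := fderiv_comp (𝕜 := 𝕜) a (by rwa [ha] : DifferentiableAt 𝕜 f (f a)) hf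
  rw [hff.fderiv_eq, ha] at hcomp
  exact hcomp.symm

theorem eventuallyEq_of_retractions {α F : E → E} {P : E →L[𝕜] E}
    (hα : HasStrictFDerivAt α P a) (hF : HasStrictFDerivAt F P a) (hαa : α a = a)
    (hFa : F a = a) (hαα : α ∘ α =ᶠ[𝓝 a] α) (hαF : α ∘ F =ᶠ[𝓝 a] F)
    (hFα : F ∘ α =ᶠ[𝓝 a] F) (hFF : F ∘ F =ᶠ[𝓝 a] F) : α =ᶠ[𝓝 a] F := by
  have hpair : Tendsto (fun x ↦ (α x, F x)) (𝓝 a) (𝓝 (a, a)) := by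
    simpa [hαa, hFa] using (hα.continuousAt.prodMk hF.continuousAt).tendsto
  have hαo := (hα.isLittleO.comp_tendsto hpair).def (by norm_num : (0 : ℝ) < 1 / 4)
  have hFo := (hF.isLittleO.comp_tendsto hpair).def (by norm_num : (0 : ℝ) < 1 / 4)
  filter_upwards [hαo, hFo, hαα, hαF, hFα, hFF] with x h₁ h₂ h₃ h₄ h₅ h₆
  simp only [Function.comp_apply] at h₁ h₂ h₃ h₄ h₅ h₆
  -- with `d = α x - F x`, the retraction identities turn `h₁` into `‖d - P d‖ ≤ ‖d‖ / 4`
  -- and `h₂` into `‖P d‖ ≤ ‖d‖ / 4`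
  rw [h₃, h₄] at h₁
  rw [h₅, h₆, sub_self, zero_sub, norm_neg] at h₂
  have hd : ‖α x - F x‖ ≤ 1 / 2 * ‖α x - F x‖ := by
    calc ‖α x - F x‖ ≤ ‖α x - F x - P (α x - F x)‖ + ‖P (α x - F x)‖ := norm_le_norm_sub_add _ _
      _ ≤ 1 / 2 * ‖α x - F x‖ := by linarith
  exact sub_eq_zero.1 (norm_le_zero_iff.1 (by linarith [norm_nonneg (α x - F x)]))

end Retraction

section SchwarzRigidity

variable {E : Type*} [NormedAddCommGroup E] [InnerProductSpace ℂ E]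

theorem eq_smul_of_mapsTo_ball_of_hasDerivAt {Φ : ℂ → E} {w : E}
    (hΦ : DifferentiableOn ℂ Φ (ball 0 1)) (hmaps : MapsTo Φ (ball 0 1) (ball 0 1))
    (h0 : Φ 0 = 0) (hder : HasDerivAt Φ w 0) (hw : ‖w‖ = 1) {t : ℂ} (ht : t ∈ ball 0 1) :
    Φ t = t • w := by
  -- `⟪w, Φ ·⟫` is a self-map of the disc fixing `0` with derivative `1`, hence the identity;
  -- together with `‖Φ t‖ ≤ ‖t‖` this forces `Φ t = t • w`
  set h : ℂ → ℂ := fun s ↦ inner ℂ w (Φ s)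
  have hh : DifferentiableOn ℂ h (ball 0 1) :=
    (innerSL ℂ w).differentiable.comp_differentiableOn hΦ
  have hh0 : h 0 = 0 := by simp [h, h0]
  have hhmaps : MapsTo h (ball 0 1) (closedBall (h 0) 1) := fun s hs ↦ by
    rw [hh0, mem_closedBall_zero_iff]
    calc ‖h s‖ ≤ ‖w‖ * ‖Φ s‖ := norm_inner_le_norm _ _
      _ ≤ 1 := by rw [hw, one_mul]; exact (mem_ball_zero_iff.1 (hmaps hs)).le
  have hslope : dslope h 0 0 = 1 := by
    have hhder : HasDerivAt h (innerSL ℂ w w) 0 :=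
      (innerSL ℂ w).hasFDerivAt.comp_hasDerivAt 0 hder
    rw [dslope_same, hhder.deriv]
    simp [inner_self_eq_norm_sq_to_K, hw]
  have hht : inner ℂ w (Φ t) = t := by
    have := Complex.affine_of_mapsTo_ball_of_norm_dslope_eq_div hh hhmaps (mem_ball_self one_pos)
      (by rw [hslope]; norm_num) ht
    rw [hh0, hslope] at this
    simpa [h] using this
  have hΦt : ‖Φ t‖ ≤ ‖t‖ := Complex.norm_le_norm_of_mapsTo_ball hΦ
    (hmaps.mono_right ball_subset_closedBall) h0 (mem_ball_zero_iff.1 ht)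
  have hre : RCLike.re (inner ℂ (Φ t) (t • w)) = ‖t‖ ^ 2 := by
    rw [inner_smul_right, ← inner_conj_symm, hht, Complex.mul_conj, Complex.normSq_eq_norm_sq]
    norm_cast
  have hsq : ‖Φ t - t • w‖ ^ 2 ≤ 0 := by
    rw [norm_sub_sq (𝕜 := ℂ), hre, norm_smul, hw, mul_one]
    nlinarith [norm_nonneg (Φ t)]
  rw [← sub_eq_zero, ← norm_eq_zero]
  exact pow_eq_zero_iff two_ne_zero |>.1 (le_antisymm hsq (sq_nonneg _))

theorem apply_eq_self_of_mapsTo_ball {β : E → E} (hβ : DifferentiableOn ℂ β (ball 0 1))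
    (hmaps : MapsTo β (ball 0 1) (ball 0 1)) (h0 : β 0 = 0) {v : E}
    (hv : fderiv ℂ β 0 v = v) (hv1 : v ∈ ball 0 1) : β v = v := by
  rcases eq_or_ne v 0 with rfl | hv0
  · exact h0
  have hnorm : 0 < ‖v‖ := norm_pos_iff.2 hv0
  set w : E := ((‖v‖⁻¹ : ℝ) : ℂ) • v
  have hw : ‖w‖ = 1 := by
    rw [norm_smul, Complex.norm_real, norm_inv, norm_norm, inv_mul_cancel₀ hnorm.ne']
  have hline : MapsTo (fun t : ℂ ↦ t • w) (ball 0 1) (ball 0 1) := fun t ht ↦ by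
    rwa [mem_ball_zero_iff, norm_smul, hw, mul_one, ← mem_ball_zero_iff]
  have hder : HasDerivAt (fun t : ℂ ↦ β (t • w)) w 0 := by
    have hβ0 : HasFDerivAt β (fderiv ℂ β 0) ((0 : ℂ) • w) := by
      rw [zero_smul]
      exact (hβ.differentiableAt (ball_mem_nhds 0 one_pos)).hasFDerivAt
    have hw' : fderiv ℂ β 0 w = w := by simp [w, hv]
    simpa [hw', Function.comp_def] using
      hβ0.comp_hasDerivAt 0 ((hasDerivAt_id (0 : ℂ)).smul_const w)
  have hv' : ((‖v‖ : ℝ) : ℂ) ∈ ball (0 : ℂ) 1 := by simpa using hv1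
  have := eq_smul_of_mapsTo_ball_of_hasDerivAt (hβ.comp (by fun_prop) hline)
    (hmaps.comp hline) (by simpa using h0) hder hw hv'
  simpa [w, smul_smul, hnorm.ne'] using this

end SchwarzRigidity

section RetractionOfBall

variable {X : Type*} [NormedAddCommGroup X] [NormedSpace ℂ X] [CompleteSpace X]

theorem eqOn_comp_clm_comp_of_retraction {α : X → X} {Q : X →L[ℂ] X}
    (hα : DifferentiableOn ℂ α (ball 0 1)) (hmaps : MapsTo α (ball 0 1) (ball 0 1))
    (hretr : ∀ x ∈ ball 0 1, α (α x) = α x) (h0 : α 0 = 0)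
    (hQ : MapsTo Q (ball 0 1) (ball 0 1)) (hQP : Q ∘L fderiv ℂ α 0 = fderiv ℂ α 0)
    (hQαQ : ∀ x ∈ ball 0 1, Q (α (Q x)) = Q x) : EqOn (α ∘ Q ∘ α) α (ball 0 1) := by
  set F := α ∘ Q ∘ α
  set P := fderiv ℂ α 0
  have hB : ball (0 : X) 1 ∈ 𝓝 0 := ball_mem_nhds 0 one_pos
  have hQα : MapsTo (Q ∘ α) (ball 0 1) (ball 0 1) := hQ.comp hmaps
  have hF : DifferentiableOn ℂ F (ball 0 1) :=
    hα.comp (Q.differentiable.comp_differentiableOn hα) hQα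
  have hF0 : F 0 = 0 := by simp [F, h0]
  have hαα : α ∘ α =ᶠ[𝓝 0] α := eventually_of_mem hB hretr
  have hαF : α ∘ F =ᶠ[𝓝 0] F := eventually_of_mem hB fun x hx ↦ hretr _ (hQα hx)
  have hFα : F ∘ α =ᶠ[𝓝 0] F := eventually_of_mem hB fun x hx ↦ by
    simp only [F, Function.comp_apply, hretr x hx]
  have hFF : F ∘ F =ᶠ[𝓝 0] F := eventually_of_mem hB fun x hx ↦ by
    simp only [F, Function.comp_apply]
    rw [hretr (Q (α x)) (hQα hx), hQαQ (α x) (hmaps hx)]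
  have hαP : HasFDerivAt α P 0 := (hα.differentiableAt hB).hasFDerivAt
  have hFP : HasFDerivAt F P 0 := by
    have hP : IsIdempotentElem P :=
      isIdempotentElem_fderiv_of_retraction (hα.differentiableAt hB) h0 hαα
    have hαP' : HasFDerivAt α P (Q (α 0)) := by rwa [h0, map_zero]
    convert hαP'.comp 0 (Q.hasFDerivAt.comp 0 hαP) using 1
    rw [hQP, ← ContinuousLinearMap.mul_def, hP.eq]
  have hFstrict := hF.hasStrictFDerivAt_of_isOpen isOpen_ball (mem_ball_self one_pos)
  rw [hFP.fderiv] at hFstrict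
  have hlocal := eventuallyEq_of_retractions
    (hα.hasStrictFDerivAt_of_isOpen isOpen_ball (mem_ball_self one_pos)) hFstrict
    h0 hF0 hαα hαF hFα hFF
  exact (hα.eqOn_of_convex_of_eventuallyEq hF isOpen_ball (convex_ball 0 1)
    (mem_ball_self one_pos) hlocal).symm

end RetractionOfBall

theorem norm_fst_le_norm_snd_of_inter_frontier_subset {F : Type*} [NormedAddCommGroup F]
    [NormedSpace ℂ F] {L : Submodule ℂ (ℂ × F)}
    (hL : (L : Set (ℂ × F)) ∩ frontier (ball (0 : ℂ) 1 ×ˢ ball (0 : F) 1) ⊆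
      closure (ball (0 : ℂ) 1) ×ˢ sphere (0 : F) 1) {y : ℂ × F} (hy : y ∈ L) :
    ‖y.1‖ ≤ ‖y.2‖ := by
  by_contra! hlt
  have hy1 : 0 < ‖y.1‖ := (norm_nonneg _).trans_lt hlt
  set w : ℂ × F := ((‖y.1‖⁻¹ : ℝ) : ℂ) • y
  have hw1 : ‖w.1‖ = 1 := by
    rw [Prod.smul_fst, norm_smul, Complex.norm_real, norm_inv, norm_norm, inv_mul_cancel₀ hy1.ne']
  have hw2 : ‖w.2‖ < 1 := by
    rw [Prod.smul_snd, norm_smul, Complex.norm_real, norm_inv, norm_norm, inv_mul_lt_one₀ hy1]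
    exact hlt
  have hfront : w ∈ frontier (ball (0 : ℂ) 1 ×ˢ ball (0 : F) 1) := by
    rw [ball_prod_same, Prod.mk_zero_zero, frontier_ball _ one_ne_zero, mem_sphere_zero_iff_norm,
      Prod.norm_def, hw1, max_eq_left hw2.le]
  exact hw2.ne (mem_sphere_zero_iff_norm.1 (hL ⟨L.smul_mem _ hy, hfront⟩).2)

theorem exists_graph_of_norm_fst_le_norm_snd {E : Type*} [NormedAddCommGroup E]
    [InnerProductSpace ℂ E] [FiniteDimensional ℂ E] {L : Submodule ℂ (ℂ × E)}
    (hL : ∀ y ∈ L, ‖y.1‖ ≤ ‖y.2‖) :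
    ∃ (V : Submodule ℂ E) (φ : E →L[ℂ] ℂ), Module.finrank ℂ V = Module.finrank ℂ L ∧
      (∀ u, ‖φ u‖ ≤ ‖u‖) ∧ ∀ y, y ∈ L ↔ y.2 ∈ V ∧ φ y.2 = y.1 := by
  set s : L →ₗ[ℂ] E := (LinearMap.snd ℂ ℂ E) ∘ₗ L.subtype
  have hs : Function.Injective s := by
    rw [← LinearMap.ker_eq_bot, Submodule.eq_bot_iff]
    rintro ⟨y, hy⟩ (hy2 : y.2 = 0)
    have hy1 : y.1 = 0 := norm_le_zero_iff.1 (by simpa [hy2] using hL y hy)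
    exact Subtype.ext (Prod.ext hy1 hy2)
  set V := LinearMap.range s
  set e : L ≃ₗ[ℂ] V := LinearEquiv.ofInjective s hs
  have he : ∀ v : V, ((e.symm v : L) : ℂ × E).2 = v := fun v ↦
    congrArg Subtype.val (e.apply_symm_apply v)
  set φ : E →L[ℂ] ℂ :=
    (LinearMap.fst ℂ ℂ E ∘ₗ L.subtype ∘ₗ e.symm.toLinearMap).toContinuousLinearMap ∘L
      V.orthogonalProjectionOnto
  have hφ : ∀ u, φ u = ((e.symm (V.orthogonalProjectionOnto u) : L) : ℂ × E).1 := fun _ ↦ rfl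
  refine ⟨V, φ, e.symm.finrank_eq, fun u ↦ ?_, fun y ↦ ⟨fun hy ↦ ?_, fun ⟨hyV, hyφ⟩ ↦ ?_⟩⟩
  · calc ‖φ u‖ ≤ ‖(V.orthogonalProjectionOnto u : E)‖ := by
          rw [hφ, ← he]; exact hL _ (e.symm _).2
      _ ≤ ‖u‖ := V.norm_orthogonalProjectionOnto_apply_le u
  · have hyV : y.2 ∈ V := ⟨⟨y, hy⟩, rfl⟩
    have hey : e ⟨y, hy⟩ = ⟨y.2, hyV⟩ := rfl
    refine ⟨hyV, ?_⟩
    rw [hφ, Submodule.orthogonalProjectionOnto_mem_subspace_eq_self ⟨y.2, hyV⟩, ← hey,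
      e.symm_apply_apply]
  · rw [hφ, Submodule.orthogonalProjectionOnto_mem_subspace_eq_self ⟨y.2, hyV⟩] at hyφ
    have hmem := (e.symm ⟨y.2, hyV⟩).2
    rwa [show ((e.symm ⟨y.2, hyV⟩ : L) : ℂ × E) = y from Prod.ext hyφ (he _)] at hmem

section Graph

variable {E : Type*} [NormedAddCommGroup E] [InnerProductSpace ℂ E]
  {α : ℂ × E → ℂ × E} {V : Submodule ℂ E} {φ : E →L[ℂ] ℂ}

theorem norm_mk_apply_self (hφ : ∀ u, ‖φ u‖ ≤ ‖u‖) (u : E) : ‖(φ u, u)‖ = ‖u‖ := by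
  rw [Prod.norm_def, max_eq_right (hφ u)]

variable (hα : DifferentiableOn ℂ α (ball 0 1)) (hmaps : MapsTo α (ball 0 1) (ball 0 1))
  (hretr : ∀ x ∈ ball 0 1, α (α x) = α x) (h0 : α 0 = 0) (hφ : ∀ u, ‖φ u‖ ≤ ‖u‖)
  (hrange : ∀ y, y ∈ range (fderiv ℂ α 0) ↔ y.2 ∈ V ∧ φ y.2 = y.1)
include hα hmaps hretr h0 hφ hrange

theorem snd_apply_mk_apply_self {u : E} (huV : u ∈ V) (hu : u ∈ ball 0 1) :
    (α (φ u, u)).2 = u := by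
  set ψ := φ.prod (ContinuousLinearMap.id ℂ E)
  have hB : ball (0 : ℂ × E) 1 ∈ 𝓝 0 := ball_mem_nhds 0 one_pos
  have hψ : MapsTo ψ (ball 0 1) (ball 0 1) := fun u hu ↦ by
    simpa [ψ, norm_mk_apply_self hφ] using hu
  have hP : IsIdempotentElem (fderiv ℂ α 0) := isIdempotentElem_fderiv_of_retraction
    (hα.differentiableAt hB) h0 (eventually_of_mem hB hretr)
  have hPψ : fderiv ℂ α 0 (φ u, u) = (φ u, u) := by
    obtain ⟨x, hx⟩ := (hrange (φ u, u)).2 ⟨huV, rfl⟩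
    rw [← hx, ← ContinuousLinearMap.comp_apply, ← ContinuousLinearMap.mul_def, hP.eq]
  have hαψ : HasFDerivAt α (fderiv ℂ α 0) (ψ 0) := by
    rw [map_zero]; exact (hα.differentiableAt hB).hasFDerivAt
  have hβ := (ContinuousLinearMap.snd ℂ ℂ E).hasFDerivAt.comp 0 (hαψ.comp 0 ψ.hasFDerivAt)
  refine apply_eq_self_of_mapsTo_ball (β := fun u ↦ (α (ψ u)).2) ?_ ?_ (by simp [h0]) ?_ hu
  · exact differentiableOn_snd.comp (hα.comp ψ.differentiableOn hψ) (hmaps.comp hψ)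
  · intro v hv
    exact mem_ball_zero_iff.2 ((norm_snd_le _).trans_lt (mem_ball_zero_iff.1 (hmaps (hψ hv))))
  · rw [show (fun u ↦ (α (ψ u)).2) = ContinuousLinearMap.snd ℂ ℂ E ∘ α ∘ ψ from rfl, hβ.fderiv]
    simp [hPψ, ψ]

theorem image_ball_eq_graph [CompleteSpace E] [V.HasOrthogonalProjection] :
    α '' ball 0 1 = (fun u ↦ ((α (φ u, u)).1, u)) '' ((V : Set E) ∩ ball 0 1) := by
  set q := V.starProjection
  set Q := (φ.prod (ContinuousLinearMap.id ℂ E)) ∘L q ∘L ContinuousLinearMap.snd ℂ ℂ E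
  have hQ : ∀ x, Q x = (φ (q x.2), q x.2) := fun _ ↦ rfl
  have hq : ∀ x ∈ ball (0 : ℂ × E) 1, q x.2 ∈ (V : Set E) ∩ ball 0 1 := fun x hx ↦
    ⟨V.starProjection_apply_mem x.2, mem_ball_zero_iff.2 <|
      (V.norm_starProjection_apply_le x.2).trans_lt ((norm_snd_le x).trans_lt
        (mem_ball_zero_iff.1 hx))⟩
  have hgraph : ∀ u ∈ (V : Set E) ∩ ball 0 1, (α (φ u, u)).2 = u := fun u hu ↦
    snd_apply_mk_apply_self hα hmaps hretr h0 hφ hrange hu.1 hu.2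
  have hQmaps : MapsTo Q (ball 0 1) (ball 0 1) := fun x hx ↦ by
    simpa [hQ, norm_mk_apply_self hφ] using (hq x hx).2
  have hQP : Q ∘L fderiv ℂ α 0 = fderiv ℂ α 0 := by
    refine ContinuousLinearMap.ext fun x ↦ ?_
    obtain ⟨hV, hφP⟩ := (hrange _).1 (mem_range_self x)
    simp only [ContinuousLinearMap.comp_apply, hQ, q, V.starProjection_eq_self_iff.2 hV, hφP]
  have hQαQ : ∀ x ∈ ball 0 1, Q (α (Q x)) = Q x := fun x hx ↦ by
    rw [hQ x, hQ, hgraph _ (hq x hx), V.starProjection_eq_self_iff.2 (hq x hx).1]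
  have hretrQ := eqOn_comp_clm_comp_of_retraction hα hmaps hretr h0 hQmaps hQP hQαQ
  ext p
  constructor
  · rintro ⟨x, hx, rfl⟩
    set u := q (α x).2
    have hu : u ∈ (V : Set E) ∩ ball 0 1 := hq _ (hmaps hx)
    refine ⟨u, hu, ?_⟩
    calc ((α (φ u, u)).1, u) = α (φ u, u) := Prod.ext rfl (hgraph u hu).symm
      _ = α x := hretrQ hx
  · rintro ⟨u, hu, rfl⟩
    refine ⟨(φ u, u), by simpa [norm_mk_apply_self hφ] using hu.2, Prod.ext rfl (hgraph u hu)⟩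

end Graph

theorem stmt_3_general (n : ℕ)
    (α : ℂ × EuclideanSpace ℂ (Fin n) → ℂ × EuclideanSpace ℂ (Fin n))
    (hα : DifferentiableOn ℂ α (diskBall n))
    (hmaps : MapsTo α (diskBall n) (diskBall n))
    (hretr : ∀ x ∈ diskBall n, α (α x) = α x)
    (h0 : α 0 = 0)
    (L : Submodule ℂ (ℂ × EuclideanSpace ℂ (Fin n)))
    (hL : L = LinearMap.range
      ((fderiv ℂ α 0 : (ℂ × EuclideanSpace ℂ (Fin n)) →L[ℂ]
        (ℂ × EuclideanSpace ℂ (Fin n))) :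
        (ℂ × EuclideanSpace ℂ (Fin n)) →ₗ[ℂ] (ℂ × EuclideanSpace ℂ (Fin n))))
    (hbd : (L : Set (ℂ × EuclideanSpace ℂ (Fin n))) ∩ frontier (diskBall n) ⊆
      closure (ball (0 : ℂ) 1) ×ˢ (sphere (0 : EuclideanSpace ℂ (Fin n)) 1)) :
    ∃ (V : Submodule ℂ (EuclideanSpace ℂ (Fin n)))
      (g : EuclideanSpace ℂ (Fin n) → ℂ),
      Module.finrank ℂ V = Module.finrank ℂ L ∧
      DifferentiableOn ℂ g ((V : Set (EuclideanSpace ℂ (Fin n))) ∩ ball 0 1) ∧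
      MapsTo g ((V : Set (EuclideanSpace ℂ (Fin n))) ∩ ball 0 1) (ball (0 : ℂ) 1) ∧
      g 0 = 0 ∧
      α '' diskBall n =
        (fun z => (g z, z)) '' ((V : Set (EuclideanSpace ℂ (Fin n))) ∩ ball 0 1) := by
  have hG : diskBall n = ball 0 1 := by rw [diskBall, ball_prod_same, Prod.mk_zero_zero]
  obtain ⟨V, φ, hrank, hφ, hgraph⟩ := exists_graph_of_norm_fst_le_norm_snd fun _ hy ↦
    norm_fst_le_norm_snd_of_inter_frontier_subset hbd hy
  rw [hG] at hα hmaps hretr ⊢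
  have hrange : ∀ y, y ∈ range (fderiv ℂ α 0) ↔ y.2 ∈ V ∧ φ y.2 = y.1 := fun y ↦ by
    rw [← hgraph, hL, LinearMap.mem_range]; rfl
  have hψ : MapsTo (fun u ↦ (φ u, u)) (ball 0 1) (ball 0 1) := fun u hu ↦ by
    simpa [norm_mk_apply_self hφ] using hu
  refine ⟨V, fun u ↦ (α (φ u, u)).1, hrank, ?_, fun u hu ↦ ?_, ?_,
    image_ball_eq_graph hα hmaps hretr h0 hφ hrange⟩
  · exact (differentiableOn_fst.comp (hα.comp (by fun_prop) hψ) (hmaps.comp hψ)).mono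
      inter_subset_right
  · exact mem_ball_zero_iff.2 ((norm_fst_le _).trans_lt (mem_ball_zero_iff.1 (hmaps (hψ hu.2))))
  · simp only [map_zero]
    exact congrArg Prod.fst h0

theorem stmt_3 (n : ℕ) (hn : 1 ≤ n)
    (α : ℂ × EuclideanSpace ℂ (Fin n) → ℂ × EuclideanSpace ℂ (Fin n))
    (hα : DifferentiableOn ℂ α (diskBall n))
    (hmaps : MapsTo α (diskBall n) (diskBall n))
    (hretr : ∀ x ∈ diskBall n, α (α x) = α x)
    (h0 : α 0 = 0)
    (hZne0 : α '' diskBall n ≠ {0})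
    (L : Submodule ℂ (ℂ × EuclideanSpace ℂ (Fin n)))
    (hL : L = LinearMap.range
      ((fderiv ℂ α 0 : (ℂ × EuclideanSpace ℂ (Fin n)) →L[ℂ]
        (ℂ × EuclideanSpace ℂ (Fin n))) :
        (ℂ × EuclideanSpace ℂ (Fin n)) →ₗ[ℂ] (ℂ × EuclideanSpace ℂ (Fin n))))
    (hbd : (L : Set (ℂ × EuclideanSpace ℂ (Fin n))) ∩ frontier (diskBall n) ⊆
      closure (ball (0 : ℂ) 1) ×ˢ (sphere (0 : EuclideanSpace ℂ (Fin n)) 1)) :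
    ∃ (V : Submodule ℂ (EuclideanSpace ℂ (Fin n)))
      (g : EuclideanSpace ℂ (Fin n) → ℂ),
      Module.finrank ℂ V = Module.finrank ℂ L ∧
      DifferentiableOn ℂ g ((V : Set (EuclideanSpace ℂ (Fin n))) ∩ ball 0 1) ∧
      MapsTo g ((V : Set (EuclideanSpace ℂ (Fin n))) ∩ ball 0 1) (ball (0 : ℂ) 1) ∧
      g 0 = 0 ∧
      α '' diskBall n =
        (fun z => (g z, z)) '' ((V : Set (EuclideanSpace ℂ (Fin n))) ∩ ball 0 1) :=
  stmt_3_general n α hα hmaps hretr h0 L hL hbd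
end
end

section
/- Let n ≥ 1, G = Δ × 𝔹ⁿ, and let α : G → G be a holomorphic retraction with α(0) = 0 whose image is Z = α(G). Let L be the range of the derivative Dα(0) : ℂ^{1+n} → ℂ^{1+n}. If L ∩ ∂G intersects both ∂Δ × 𝔹ⁿ and Δ × ∂𝔹ⁿ, then dim_ℂ L ≥ 2, α is the identity mapping on L ∩ G, and Z = L ∩ G, i.e. Z is the intersection of a complex linear subspace of dimension at least two with G. -/
/-!
Write `P = Dα(0)`; differentiating `α ∘ α = α` shows that `P` is a projection onto `L`. At a point
`x ∈ L ∩ G` whose disc coordinate carries the (sup) norm of `x`, the slice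
`z ↦ (α (z • x / ‖x‖)).1` is a self-map of the disc with derivative of modulus one at `0`, so the
equality case of the Schwarz lemma gives `(α x).1 = x.1`; since the ball is strictly convex, the
same holds for the ball coordinate where it carries the norm. The two boundary points of `L` make
both regions nonempty open pieces of `L ∩ G`, so analytic continuation along complex lines in `L`
gives `α = id` on `L ∩ G`; the two points are also independent, so `dim L ≥ 2`.

For `α (G) ⊆ L`: a holomorphic map is `C¹`, hence strictly differentiable, so near `0` we have
`‖α y - α (P y) - P (y - P y)‖ ≤ ‖y - P y‖ / 2`. For a fixed point `y` of `α` this reads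
`‖y - P y‖ ≤ ‖y - P y‖ / 2`, so fixed points of `α` near `0` lie in `L`. Thus `α - P ∘ α` vanishes
near `0`, hence on all of `G` by the identity theorem.
-/

open Metric Set

noncomputable section

open Filter Topology

section Retraction

variable {𝕜 X : Type*} [NontriviallyNormedField 𝕜] [NormedAddCommGroup X] [NormedSpace 𝕜 X]

theorem isIdempotentElem_fderiv_of_retraction_s4 {α : X → X} {x : X}
    (hα : DifferentiableAt 𝕜 α x) (hx : α x = x) (hretr : ∀ᶠ y in 𝓝 x, α (α y) = α y) :
    IsIdempotentElem (fderiv 𝕜 α x) := by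
  have hD := hα.hasFDerivAt
  have hDD : HasFDerivAt (α ∘ α) ((fderiv 𝕜 α x).comp (fderiv 𝕜 α x)) x :=
    (hx.symm ▸ hD : HasFDerivAt α (fderiv 𝕜 α x) (α x)).comp x hD
  exact (hDD.congr_of_eventuallyEq (hretr.mono fun _ h => h.symm)).unique hD

theorem HasStrictFDerivAt.eventually_fixed_imp_fixed {α : X → X} {P : X →L[𝕜] X}
    (hα : HasStrictFDerivAt α P 0) (hP : IsIdempotentElem P)
    (hfix : ∀ᶠ y in 𝓝 0, P y = y → α y = y) :
    ∀ᶠ y in 𝓝 0, α y = y → P y = y := by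
  have hPP (v : X) : P (P v) = P v := congr($hP v)
  have hpair : Tendsto (fun y => (y, P y)) (𝓝 0) (𝓝 (0, 0)) := by
    simpa using (continuous_id.prodMk P.continuous).tendsto 0
  have hP0 : Tendsto P (𝓝 0) (𝓝 0) := by simpa using P.continuous.tendsto 0
  filter_upwards [hpair.eventually (hα.isLittleO.def (by norm_num : (0 : ℝ) < 2⁻¹)),
    hP0.eventually hfix] with y hy hαPy hαy
  rw [hαy, hαPy (hPP y), map_sub, hPP, sub_self, sub_zero] at hy
  have : ‖y - P y‖ = 0 := by linarith [norm_nonneg (y - P y)]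
  exact (sub_eq_zero.1 (norm_eq_zero.1 this)).symm

end Retraction

section Holomorphic

variable {X F : Type*} [NormedAddCommGroup X] [NormedSpace ℂ X]
  [NormedAddCommGroup F] [NormedSpace ℂ F]

theorem DifferentiableOn.continuousAt_fderiv {f : X → F} {s : Set X} {x : X}
    (hf : DifferentiableOn ℂ f s) (hs : s ∈ 𝓝 x) : ContinuousAt (fderiv ℂ f) x := by
  rw [Metric.continuousAt_iff]
  intro ε hε
  set D := fderiv ℂ f x
  set r : X → F := fun w => f w - f x - D (w - x)
  obtain ⟨δ, hδ, hδs⟩ : ∃ δ > 0, ∀ w ∈ ball x δ, w ∈ s ∧ ‖r w‖ ≤ ε / 4 * ‖w - x‖ :=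
    Metric.eventually_nhds_iff_ball.1 <|
      (Filter.eventually_mem_set.2 hs).and ((hf.differentiableAt hs).hasFDerivAt.isLittleO.def
        (by positivity))
  refine ⟨δ / 2, half_pos hδ, fun {y} hy => ?_⟩
  have hyx : ball y (δ / 2) ⊆ ball x δ := ball_subset_ball' (by linarith [mem_ball.1 hy])
  -- On `ball y (δ / 2)` the remainder `r` is `O(ε δ)`; the Cauchy estimate turns this into
  -- `‖Df(y) - Df(x)‖ = O(ε)`.
  have hrd : DifferentiableOn ℂ r (ball y (δ / 2)) :=
    ((hf.mono fun w hw => (hδs w (hyx hw)).1).sub_const _).sub (by fun_prop)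
  have hrmaps : MapsTo r (ball y (δ / 2)) (closedBall (r y) (3 * (ε / 4) * (δ / 2))) := by
    intro w hw
    have hw' := (hδs w (hyx hw)).2
    have hy' := (hδs y (ball_subset_ball (by linarith) hy)).2
    have hwx : ‖w - x‖ < δ := mem_ball_iff_norm.1 (hyx hw)
    have hyx' : ‖y - x‖ < δ / 2 := mem_ball_iff_norm.1 hy
    rw [mem_closedBall, dist_eq_norm]
    calc ‖r w - r y‖ ≤ ‖r w‖ + ‖r y‖ := norm_sub_le _ _
      _ ≤ ε / 4 * ‖w - x‖ + ε / 4 * ‖y - x‖ := add_le_add hw' hy'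
      _ ≤ 3 * (ε / 4) * (δ / 2) := by nlinarith
  have hDr : fderiv ℂ r y = fderiv ℂ f y - D := by
    have hfy := (hf.differentiableAt (mem_of_superset (isOpen_ball.mem_nhds hy)
      fun w hw => (hδs w (ball_subset_ball (by linarith) hw)).1)).hasFDerivAt
    have hr : HasFDerivAt r (fderiv ℂ f y - D.comp (.id ℂ X)) y :=
      (hfy.sub_const (f x)).sub (D.hasFDerivAt.comp y ((hasFDerivAt_id y).sub_const x))
    simpa using hr.fderiv
  rw [dist_eq_norm, ← hDr]
  calc ‖fderiv ℂ r y‖ ≤ 3 * (ε / 4) * (δ / 2) / (δ / 2) :=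
        Complex.norm_fderiv_le_div_of_mapsTo_ball hrd hrmaps (half_pos hδ)
    _ < ε := by field_simp; linarith

theorem DifferentiableOn.eq_zero_of_eventually_nhdsWithin_submodule [CompleteSpace F]
    {f : X → F} {U : Set X} (hf : DifferentiableOn ℂ f U) (hU : IsOpen U) (hUc : Convex ℝ U)
    {S : Submodule ℂ X} {x₀ : X} (hx₀S : x₀ ∈ S) (hx₀U : x₀ ∈ U)
    (hf₀ : ∀ᶠ y in 𝓝[S] x₀, f y = 0) {x : X} (hxS : x ∈ S) (hxU : x ∈ U) : f x = 0 := by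
  set γ : ℂ → X := fun z => x₀ + z • (x - x₀)
  have hγ : Differentiable ℂ γ := by fun_prop
  have hΩ : IsOpen (γ ⁻¹' U) := hU.preimage hγ.continuous
  have hΩc : Convex ℝ (γ ⁻¹' U) := (hUc.translate_preimage_right x₀).linear_preimage
    ((LinearMap.toSpanSingleton ℂ X (x - x₀)).restrictScalars ℝ)
  have hγ₀ : Tendsto γ (𝓝 0) (𝓝[S] x₀) := tendsto_nhdsWithin_iff.2
    ⟨by simpa [γ] using hγ.continuous.tendsto 0,
      Eventually.of_forall fun z => S.add_mem hx₀S (S.smul_mem z (S.sub_mem hxS hx₀S))⟩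
  have hfγ : AnalyticOnNhd ℂ (f ∘ γ) (γ ⁻¹' U) :=
    (hf.comp hγ.differentiableOn fun _ hz => hz).analyticOnNhd hΩ
  simpa [γ] using hfγ.eqOn_zero_of_preconnected_of_eventuallyEq_zero hΩc.isPreconnected
    (by simpa [γ] using hx₀U) (hγ₀.eventually hf₀) (show (1 : ℂ) ∈ γ ⁻¹' U by simpa [γ] using hxU)

theorem isFixedPt_fderiv_of_retraction [CompleteSpace X] {α : X → X} {U : Set X}
    (hα : DifferentiableOn ℂ α U) (hU : IsOpen U) (hUc : Convex ℝ U) (h0U : 0 ∈ U)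
    (h0 : α 0 = 0) (hretr : ∀ x ∈ U, α (α x) = α x)
    (hfix : ∀ x ∈ U, Function.IsFixedPt (fderiv ℂ α 0) x → α x = x) {x : X} (hx : x ∈ U) :
    Function.IsFixedPt (fderiv ℂ α 0) (α x) := by
  set P := fderiv ℂ α 0
  have hU0 : U ∈ 𝓝 0 := hU.mem_nhds h0U
  have hP : IsIdempotentElem P := isIdempotentElem_fderiv_of_retraction_s4
    (hα.differentiableAt hU0) h0 (eventually_of_mem hU0 hretr)
  have hstrict : HasStrictFDerivAt α P 0 := hasStrictFDerivAt_of_hasFDerivAt_of_continuousAt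
    (eventually_of_mem hU0 fun y hy => (hα.differentiableAt (hU.mem_nhds hy)).hasFDerivAt)
    (hα.continuousAt_fderiv hU0)
  have hnear := hstrict.eventually_fixed_imp_fixed hP (eventually_of_mem hU0 hfix)
  have hα0 : Tendsto α (𝓝 0) (𝓝 0) := by
    simpa [ContinuousAt, h0] using hα.continuousOn.continuousAt hU0
  refine sub_eq_zero.1 <| DifferentiableOn.eq_zero_of_eventually_nhdsWithin_submodule
    (f := fun y => P (α y) - α y) (P.differentiable.comp_differentiableOn hα |>.sub hα) hU hUc
    (S := ⊤) trivial h0U ?_ trivial hx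
  rw [Submodule.top_coe, nhdsWithin_univ]
  filter_upwards [hα0.eventually hnear, hU0] with y hy hyU
  exact sub_eq_zero.2 (hy (hretr y hyU))

end Holomorphic

section Schwarz

variable {X E : Type*} [NormedAddCommGroup X] [NormedSpace ℂ X]
  [NormedAddCommGroup E] [NormedSpace ℂ E] [StrictConvexSpace ℝ E]
  {α : X → X}

theorem apply_eq_of_norm_apply_eq (hα : DifferentiableOn ℂ α (ball 0 1))
    (hmaps : MapsTo α (ball 0 1) (ball 0 1)) (h0 : α 0 = 0) (π : X →L[ℂ] E) (hπ : ‖π‖ ≤ 1)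
    {x : X} (hPx : fderiv ℂ α 0 x = x) (hx : ‖x‖ < 1) (hπx : ‖π x‖ = ‖x‖) :
    π (α x) = π x := by
  rcases eq_or_ne x 0 with rfl | hx0
  · rw [h0]
  have hr : 0 < ‖x‖ := norm_pos_iff.2 hx0
  set v : X := ((‖x‖ : ℂ))⁻¹ • x
  have hxv : (‖x‖ : ℂ) • v = x := smul_inv_smul₀ (by exact_mod_cast hr.ne') x
  have hπv : ‖π v‖ = 1 := by
    simp [v, norm_smul, hπx, hr.ne']
  have hv : ‖v‖ = 1 := by simp [v, norm_smul, hr.ne']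
  have hline : MapsTo (fun z : ℂ => z • v) (ball 0 1) (ball 0 1) := fun z hz => by
    simpa [norm_smul, hv] using hz
  set ψ : ℂ → E := fun z => π (α (z • v))
  have hψd : DifferentiableOn ℂ ψ (ball 0 1) :=
    π.differentiable.comp_differentiableOn (hα.comp (by fun_prop) hline)
  have hψmaps : MapsTo ψ (ball 0 1) (closedBall (ψ 0) 1) := fun z hz => by
    simp only [ψ, zero_smul, h0, map_zero, mem_closedBall_zero_iff]
    exact (π.le_of_opNorm_le hπ _).trans
      (by simpa using (mem_ball_zero_iff.1 (hmaps (hline hz))).le)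
  have hψ' : HasDerivAt ψ (π v) 0 := by
    have hαv : HasFDerivAt α (fderiv ℂ α 0) ((0 : ℂ) • v) := by
      rw [zero_smul]
      exact (hα.differentiableAt (ball_mem_nhds 0 one_pos)).hasFDerivAt
    have := π.hasFDerivAt.comp_hasDerivAt (0 : ℂ)
      (hαv.comp_hasDerivAt (0 : ℂ) ((hasDerivAt_id (0 : ℂ)).smul_const v))
    rw [one_smul, map_smul, hPx] at this
    exact this
  have hψaff := Complex.affine_of_mapsTo_ball_of_norm_dslope_eq_div hψd hψmaps
    (mem_ball_self one_pos) (by rw [dslope_same, hψ'.deriv, hπv, div_one])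
    (show (‖x‖ : ℂ) ∈ ball 0 1 by simpa using hx)
  simpa [ψ, hxv, dslope_same, hψ'.deriv, h0, ← map_smul] using hψaff

theorem apply_eq_of_eventually_norm_apply_eq [CompleteSpace E]
    (hα : DifferentiableOn ℂ α (ball 0 1)) (hmaps : MapsTo α (ball 0 1) (ball 0 1))
    (h0 : α 0 = 0) (π : X →L[ℂ] E) (hπ : ‖π‖ ≤ 1) {L : Submodule ℂ X}
    (hL : ∀ x ∈ L, fderiv ℂ α 0 x = x) {a : X} (haL : a ∈ L) (ha : ‖a‖ < 1)
    (hπa : ∀ᶠ y in 𝓝 a, ‖π y‖ = ‖y‖) {x : X} (hxL : x ∈ L) (hx : ‖x‖ < 1) :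
    π (α x) = π x := by
  refine sub_eq_zero.1 <| DifferentiableOn.eq_zero_of_eventually_nhdsWithin_submodule
    (f := fun y => π (α y) - π y) (U := ball 0 1) ?_ isOpen_ball (convex_ball 0 1) haL
    (mem_ball_zero_iff.2 ha) ?_ hxL (mem_ball_zero_iff.2 hx)
  · exact (π.differentiable.comp_differentiableOn hα).sub π.differentiable.differentiableOn
  · filter_upwards [self_mem_nhdsWithin, mem_nhdsWithin_of_mem_nhds (isOpen_ball.mem_nhds
      (mem_ball_zero_iff.2 ha)), mem_nhdsWithin_of_mem_nhds hπa] with y hyL hy hπy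
    exact sub_eq_zero.2 (apply_eq_of_norm_apply_eq hα hmaps h0 π hπ (hL y hyL)
      (mem_ball_zero_iff.1 hy) hπy)

end Schwarz

theorem exists_smul_norm_lt_one {X : Type*} [NormedAddCommGroup X] [NormedSpace ℂ X] (p : X) :
    ∃ c : ℂ, 0 < ‖c‖ ∧ ‖c • p‖ < 1 := by
  have hp : 0 < ‖p‖ + 1 := by positivity
  have hc : ‖(((‖p‖ + 1)⁻¹ : ℝ) : ℂ)‖ = (‖p‖ + 1)⁻¹ := by
    rw [Complex.norm_real, Real.norm_of_nonneg (inv_pos.2 hp).le]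
  refine ⟨_, hc ▸ inv_pos.2 hp, ?_⟩
  rw [norm_smul, hc, inv_mul_lt_iff₀ hp]
  linarith

section Product

variable {E₁ E₂ : Type*} [NormedAddCommGroup E₁] [NormedSpace ℂ E₁]
  [NormedAddCommGroup E₂] [NormedSpace ℂ E₂]

theorem linearIndependent_of_norm_snd_lt_of_norm_fst_lt {p q : E₁ × E₂}
    (hp : ‖p.2‖ < ‖p.1‖) (hq : ‖q.1‖ < ‖q.2‖) : LinearIndependent ℂ ![p, q] := by
  rw [linearIndependent_fin2]
  refine ⟨fun h => by simp [show q = 0 from h] at hq, fun s hs => ?_⟩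
  simp only [Matrix.cons_val_one, Matrix.cons_val_zero] at hs
  subst hs
  simp only [Prod.smul_fst, Prod.smul_snd, norm_smul] at hp
  have := mul_le_mul_of_nonneg_left hq.le (norm_nonneg s)
  linarith

variable [StrictConvexSpace ℝ E₁] [StrictConvexSpace ℝ E₂] [CompleteSpace E₁] [CompleteSpace E₂]
  {α : E₁ × E₂ → E₁ × E₂}

theorem eq_self_of_mem_of_norm_lt_one (hα : DifferentiableOn ℂ α (ball 0 1))
    (hmaps : MapsTo α (ball 0 1) (ball 0 1)) (h0 : α 0 = 0) {L : Submodule ℂ (E₁ × E₂)}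
    (hL : ∀ x ∈ L, fderiv ℂ α 0 x = x) {p q : E₁ × E₂} (hpL : p ∈ L) (hp : ‖p.2‖ < ‖p.1‖)
    (hqL : q ∈ L) (hq : ‖q.1‖ < ‖q.2‖) {x : E₁ × E₂} (hxL : x ∈ L) (hx : ‖x‖ < 1) :
    α x = x := by
  obtain ⟨c, hc, hcp⟩ := exists_smul_norm_lt_one p
  obtain ⟨d, hd, hdq⟩ := exists_smul_norm_lt_one q
  refine Prod.ext ?_ ?_
  · refine apply_eq_of_eventually_norm_apply_eq hα hmaps h0 (.fst ℂ E₁ E₂)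
      (ContinuousLinearMap.norm_fst_le ℂ E₁ E₂) hL (L.smul_mem c hpL) hcp ?_ hxL hx
    have hcp' : ‖(c • p).2‖ < ‖(c • p).1‖ := by
      simpa only [Prod.smul_fst, Prod.smul_snd, norm_smul] using mul_lt_mul_of_pos_left hp hc
    filter_upwards [(isOpen_lt continuous_snd.norm continuous_fst.norm).mem_nhds hcp'] with y hy
    exact (max_eq_left hy.le).symm
  · refine apply_eq_of_eventually_norm_apply_eq hα hmaps h0 (.snd ℂ E₁ E₂)
      (ContinuousLinearMap.norm_snd_le ℂ E₁ E₂) hL (L.smul_mem d hqL) hdq ?_ hxL hx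
    have hdq' : ‖(d • q).1‖ < ‖(d • q).2‖ := by
      simpa only [Prod.smul_fst, Prod.smul_snd, norm_smul] using mul_lt_mul_of_pos_left hq hd
    filter_upwards [(isOpen_lt continuous_fst.norm continuous_snd.norm).mem_nhds hdq'] with y hy
    exact (max_eq_right hy.le).symm

end Product

theorem stmt_4_general (n : ℕ)
    (α : ℂ × EuclideanSpace ℂ (Fin n) → ℂ × EuclideanSpace ℂ (Fin n))
    (hα : DifferentiableOn ℂ α (diskBall n))
    (hmaps : MapsTo α (diskBall n) (diskBall n))
    (hretr : ∀ x ∈ diskBall n, α (α x) = α x)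
    (h0 : α 0 = 0)
    (L : Submodule ℂ (ℂ × EuclideanSpace ℂ (Fin n)))
    (hL : L = LinearMap.range
      ((fderiv ℂ α 0 : (ℂ × EuclideanSpace ℂ (Fin n)) →L[ℂ]
        (ℂ × EuclideanSpace ℂ (Fin n))) :
        (ℂ × EuclideanSpace ℂ (Fin n)) →ₗ[ℂ] (ℂ × EuclideanSpace ℂ (Fin n))))
    (hbd1 : ((L : Set (ℂ × EuclideanSpace ℂ (Fin n))) ∩ frontier (diskBall n) ∩
      ((sphere (0 : ℂ) 1) ×ˢ (ball (0 : EuclideanSpace ℂ (Fin n)) 1))).Nonempty)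
    (hbd2 : ((L : Set (ℂ × EuclideanSpace ℂ (Fin n))) ∩ frontier (diskBall n) ∩
      ((ball (0 : ℂ) 1) ×ˢ (sphere (0 : EuclideanSpace ℂ (Fin n)) 1))).Nonempty) :
    2 ≤ Module.finrank ℂ L ∧
    (∀ x ∈ (L : Set (ℂ × EuclideanSpace ℂ (Fin n))) ∩ diskBall n, α x = x) ∧
    α '' diskBall n = (L : Set (ℂ × EuclideanSpace ℂ (Fin n))) ∩ diskBall n := by
  have hG : diskBall n = ball 0 1 := by rw [diskBall, ball_prod_same]; rfl
  rw [hG] at hα hmaps hretr ⊢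
  have hP : IsIdempotentElem (fderiv ℂ α 0) := isIdempotentElem_fderiv_of_retraction_s4
    (hα.differentiableAt (ball_mem_nhds 0 one_pos)) h0
    (eventually_of_mem (ball_mem_nhds 0 one_pos) hretr)
  have hLP (x) : x ∈ L ↔ fderiv ℂ α 0 x = x := hL ▸ LinearMap.IsIdempotentElem.mem_range_iff
    (ContinuousLinearMap.IsIdempotentElem.toLinearMap hP)
  obtain ⟨p, ⟨hpL, -⟩, hp1, hp2⟩ := hbd1
  obtain ⟨q, ⟨hqL, -⟩, hq1, hq2⟩ := hbd2
  rw [mem_sphere_zero_iff_norm] at hp1 hq2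
  rw [mem_ball_zero_iff] at hp2 hq1
  have hp : ‖p.2‖ < ‖p.1‖ := hp1 ▸ hp2
  have hq : ‖q.1‖ < ‖q.2‖ := hq2 ▸ hq1
  have hfix (x) (hxL : x ∈ L) (hx : x ∈ ball 0 1) : α x = x :=
    eq_self_of_mem_of_norm_lt_one hα hmaps h0 (fun y hy => (hLP y).1 hy) hpL hp hqL hq hxL
      (mem_ball_zero_iff.1 hx)
  refine ⟨?_, fun x hx => hfix x hx.1 hx.2, ?_⟩
  · have hli := linearIndependent_of_norm_snd_lt_of_norm_fst_lt hp hq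
    calc 2 = Module.finrank ℂ (Submodule.span ℂ (range ![p, q])) := by
          rw [finrank_span_eq_card hli, Fintype.card_fin]
      _ ≤ Module.finrank ℂ L := Submodule.finrank_mono <| Submodule.span_le.2 <|
          range_subset_iff.2 <| Fin.forall_fin_two.2 ⟨hpL, hqL⟩
  · refine subset_antisymm ?_ fun x hx => ⟨x, hx.2, hfix x hx.1 hx.2⟩
    rintro _ ⟨x, hx, rfl⟩
    exact ⟨(hLP _).2 (isFixedPt_fderiv_of_retraction hα isOpen_ball (convex_ball 0 1)
      (mem_ball_self one_pos) h0 hretr (fun y hy hPy => hfix y ((hLP y).2 hPy) hy) hx), hmaps hx⟩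

theorem stmt_4 (n : ℕ) (hn : 1 ≤ n)
    (α : ℂ × EuclideanSpace ℂ (Fin n) → ℂ × EuclideanSpace ℂ (Fin n))
    (hα : DifferentiableOn ℂ α (diskBall n))
    (hmaps : MapsTo α (diskBall n) (diskBall n))
    (hretr : ∀ x ∈ diskBall n, α (α x) = α x)
    (h0 : α 0 = 0)
    (L : Submodule ℂ (ℂ × EuclideanSpace ℂ (Fin n)))
    (hL : L = LinearMap.range
      ((fderiv ℂ α 0 : (ℂ × EuclideanSpace ℂ (Fin n)) →L[ℂ]
        (ℂ × EuclideanSpace ℂ (Fin n))) :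
        (ℂ × EuclideanSpace ℂ (Fin n)) →ₗ[ℂ] (ℂ × EuclideanSpace ℂ (Fin n))))
    (hbd1 : ((L : Set (ℂ × EuclideanSpace ℂ (Fin n))) ∩ frontier (diskBall n) ∩
      ((sphere (0 : ℂ) 1) ×ˢ (ball (0 : EuclideanSpace ℂ (Fin n)) 1))).Nonempty)
    (hbd2 : ((L : Set (ℂ × EuclideanSpace ℂ (Fin n))) ∩ frontier (diskBall n) ∩
      ((ball (0 : ℂ) 1) ×ˢ (sphere (0 : EuclideanSpace ℂ (Fin n)) 1))).Nonempty) :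
    2 ≤ Module.finrank ℂ L ∧
    (∀ x ∈ (L : Set (ℂ × EuclideanSpace ℂ (Fin n))) ∩ diskBall n, α x = x) ∧
    α '' diskBall n = (L : Set (ℂ × EuclideanSpace ℂ (Fin n))) ∩ diskBall n :=
  stmt_4_general n α hα hmaps hretr h0 L hL hbd1 hbd2
end
end

section
/- Let n ≥ 1, G = Δ × 𝔹ⁿ, and let α = (α₀, α₁, …, αₙ) : G → G be a holomorphic map with α(0) = 0. Suppose w₀ ∈ ℂ with |w₀| ≤ 1 and z⁰ ∈ ℂⁿ with ‖z⁰‖ = 1 are such that the last n components of Dα(0)(w₀, z⁰) equal z⁰. Then (α₁, …, αₙ)(w₀t, z⁰₁t, …, z⁰ₙt) = (z⁰₁t, …, z⁰ₙt) for every t ∈ Δ. -/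
open Metric Set

noncomputable section

/-! The disc `t ↦ t • (w₀, z⁰)` lies in `G`; composing `α` with it and projecting to `𝔹ⁿ` gives a
holomorphic self-map `F` of the unit disc into the unit ball with `F 0 = 0` and `F' 0 = z⁰` of norm
one, so by the equality case of the Schwarz lemma `F t = t • z⁰` on the whole disc. -/

theorem isOpen_diskBall (n : ℕ) : IsOpen (diskBall n) :=
  isOpen_ball.prod isOpen_ball

theorem mapsTo_smul_diskBall {n : ℕ} {w₀ : ℂ} {z₀ : EuclideanSpace ℂ (Fin n)}
    (hw₀ : ‖w₀‖ ≤ 1) (hz₀ : ‖z₀‖ ≤ 1) :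
    MapsTo (fun t : ℂ => t • (w₀, z₀)) (ball 0 1) (diskBall n) := by
  intro t ht
  rw [mem_ball_zero_iff] at ht
  simp only [diskBall, Prod.smul_mk, mem_prod, mem_ball_zero_iff, norm_smul]
  exact ⟨(mul_le_of_le_one_right (norm_nonneg t) hw₀).trans_lt ht,
    (mul_le_of_le_one_right (norm_nonneg t) hz₀).trans_lt ht⟩

theorem hasDerivAt_comp_smul {E F : Type*} [NormedAddCommGroup E] [NormedSpace ℂ E]
    [NormedAddCommGroup F] [NormedSpace ℂ F] {α : E → F} (hα : DifferentiableAt ℂ α 0) (p : E) :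
    HasDerivAt (fun t : ℂ => α (t • p)) (fderiv ℂ α 0 p) 0 := by
  have hline : HasDerivAt (fun t : ℂ => t • p) p 0 := by
    simpa using (hasDerivAt_id (0 : ℂ)).smul_const p
  have hα' : HasFDerivAt α (fderiv ℂ α 0) ((0 : ℂ) • p) := by
    rw [zero_smul]
    exact hα.hasFDerivAt
  exact hα'.comp_hasDerivAt 0 hline

theorem eqOn_smul_of_mapsTo_ball_of_hasDerivAt {E : Type*} [NormedAddCommGroup E]
    [NormedSpace ℂ E] [StrictConvexSpace ℝ E] {f : ℂ → E} {v : E}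
    (hd : DifferentiableOn ℂ f (ball 0 1)) (hmaps : MapsTo f (ball 0 1) (ball 0 1))
    (h₀ : f 0 = 0) (hv : HasDerivAt f v 0) (hv_norm : ‖v‖ = 1) :
    EqOn f (fun t => t • v) (ball 0 1) := by
  have hslope : dslope f 0 0 = v := by rw [dslope_same, hv.deriv]
  intro t ht
  have h := Complex.affine_of_mapsTo_ball_of_norm_dslope_eq_div hd
    (h₀ ▸ hmaps.mono_right ball_subset_closedBall) (mem_ball_self one_pos)
    (by rw [hslope, hv_norm, div_one]) ht
  simpa only [hslope, h₀, sub_zero, zero_add] using h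

theorem stmt_6_general (n : ℕ)
    (α : ℂ × EuclideanSpace ℂ (Fin n) → ℂ × EuclideanSpace ℂ (Fin n))
    (hα : DifferentiableOn ℂ α (diskBall n))
    (hmaps : MapsTo α (diskBall n) (diskBall n))
    (h0 : α 0 = 0)
    (w0 : ℂ) (hw0 : ‖w0‖ ≤ 1)
    (z0 : EuclideanSpace ℂ (Fin n)) (hz0 : ‖z0‖ = 1)
    (hfix : (fderiv ℂ α 0 (w0, z0)).2 = z0) :
    ∀ t ∈ ball (0 : ℂ) 1, (α (w0 * t, t • z0)).2 = t • z0 := by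
  have hdisc := mapsTo_smul_diskBall hw0 hz0.le
  have h0_mem : (0 : ℂ × EuclideanSpace ℂ (Fin n)) ∈ diskBall n := by
    simpa using hdisc (mem_ball_self one_pos)
  have hα₀ : DifferentiableAt ℂ α 0 := hα.differentiableAt ((isOpen_diskBall n).mem_nhds h0_mem)
  have hF : HasDerivAt (fun t : ℂ => (α (t • (w0, z0))).2) z0 0 := by
    have h := hasFDerivAt_snd.comp_hasDerivAt 0 (hasDerivAt_comp_smul hα₀ (w0, z0))
    rwa [ContinuousLinearMap.coe_snd', hfix] at h
  have hFd : DifferentiableOn ℂ (fun t : ℂ => (α (t • (w0, z0))).2) (ball 0 1) :=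
    differentiableOn_snd.comp (hα.comp (differentiable_id.smul_const _).differentiableOn hdisc)
      (mapsTo_univ _ _)
  intro t ht
  simpa [mul_comm t] using eqOn_smul_of_mapsTo_ball_of_hasDerivAt hFd
    (fun s hs => (hmaps (hdisc hs)).2) (by simp [h0]) hF hz0 ht

theorem stmt_6 (n : ℕ) (hn : 1 ≤ n)
    (α : ℂ × EuclideanSpace ℂ (Fin n) → ℂ × EuclideanSpace ℂ (Fin n))
    (hα : DifferentiableOn ℂ α (diskBall n))
    (hmaps : MapsTo α (diskBall n) (diskBall n))
    (h0 : α 0 = 0)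
    (w0 : ℂ) (hw0 : ‖w0‖ ≤ 1)
    (z0 : EuclideanSpace ℂ (Fin n)) (hz0 : ‖z0‖ = 1)
    (hfix : (fderiv ℂ α 0 (w0, z0)).2 = z0) :
    ∀ t ∈ ball (0 : ℂ) 1, (α (w0 * t, t • z0)).2 = t • z0 :=
  stmt_6_general n α hα hmaps h0 w0 hw0 z0 hz0 hfix
end
end

section
/- Let X ⊆ ℂⁿ be open and connected, let {Xⱼ} be an increasing sequence of open subsets of X with ∪ⱼ Xⱼ = X, and let p ∈ X₁. Then the sequence C^Δ_{Xⱼ}(p) is non-increasing, each term is ≥ C^Δ_X(p), and lim_{j→∞} C^Δ_{Xⱼ}(p) = C^Δ_X(p). -/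
open Metric Set Filter

noncomputable section

/-- The open unit polydisc `Δⁿ ⊂ ℂⁿ`. -/
def polydisc (n : ℕ) : Set (EuclideanSpace ℂ (Fin n)) :=
  {z | ∀ i, ‖z i‖ < 1}

/-- The polydisc-variant Carathéodory volume coefficient
`C^Δ_Y(p) = sup { |det Df(p)|² : f : Y → Δⁿ holomorphic, f(p) = 0 }`. -/
def caraPoly (n : ℕ) (Y : Set (EuclideanSpace ℂ (Fin n)))
    (p : EuclideanSpace ℂ (Fin n)) : ℝ :=
  sSup {x : ℝ | ∃ f : EuclideanSpace ℂ (Fin n) → EuclideanSpace ℂ (Fin n),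
    DifferentiableOn ℂ f Y ∧ MapsTo f Y (polydisc n) ∧ f p = 0 ∧
    x = ‖(fderiv ℂ f p).det‖ ^ 2}

/-!
Shrinking the domain enlarges the family of competitors, which gives the monotonicity, and the
Cauchy estimate bounds `‖Df(p)‖` on a ball around `p`, so all the suprema are finite.
For the limit, pick near-extremal maps `f_j : X_j → Δⁿ`. They are uniformly bounded, so along an
ultrafilter they converge pointwise on `X`, and so do their derivatives at each point. The Schwarz
lemma applied to `f_j` minus its linearization gives a second-order Taylor bound uniform in `j`;
it passes to the limit and shows that the limit `g` is holomorphic with `Dg = lim Df_j`. Now `g`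
maps `X` into the closed polydisc with `g(p) = 0`, hence, by the maximum principle on the connected
set `X`, into the open one, and `|det Dg(p)|²` is the limit of the `C^Δ_{X_j}(p)`.
-/

open Topology Asymptotics

section

variable {𝕜 E F ι : Type*} [NontriviallyNormedField 𝕜] [NormedAddCommGroup E] [NormedSpace 𝕜 E]
  [NormedAddCommGroup F] [NormedSpace 𝕜 F]

theorem hasFDerivAt_of_tendsto_of_norm_sub_sub_le {l : Filter ι} [l.NeBot] {f : ι → E → F}
    {f' : ι → E →L[𝕜] F} {g : E → F} {g' : E →L[𝕜] F} {x : E} {r C : ℝ} (hr : 0 < r)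
    (hf : ∀ w ∈ ball x r, Tendsto (fun j => f j w) l (𝓝 (g w))) (hf' : Tendsto f' l (𝓝 g'))
    (htaylor : ∀ᶠ j in l, ∀ w ∈ ball x r, ‖f j w - f j x - f' j (w - x)‖ ≤ C * ‖w - x‖ ^ 2) :
    HasFDerivAt g g' x := by
  have hg : ∀ w ∈ ball x r, ‖g w - g x - g' (w - x)‖ ≤ C * ‖w - x‖ ^ 2 := fun w hw =>
    le_of_tendsto (((hf w hw).sub (hf x (mem_ball_self hr))).sub
      ((ContinuousLinearMap.apply 𝕜 F (w - x)).continuous.tendsto g' |>.comp hf')).norm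
      (htaylor.mono fun j hj => hj w hw)
  rw [hasFDerivAt_iff_isLittleO_nhds_zero]
  refine IsBigO.trans_isLittleO (g := fun h : E => ‖h‖ ^ 2) ?_ (isLittleO_norm_pow_id one_lt_two)
  refine IsBigO.of_bound |C| ?_
  filter_upwards [ball_mem_nhds (0 : E) hr] with h hh
  have := hg (x + h) (by simpa using hh)
  rw [add_sub_cancel_left] at this
  simpa using this.trans (by gcongr; exact le_abs_self C)

end

theorem IsCompact.tendsto_limUnder_of_eventually_mem {α ι : Type*} [TopologicalSpace α] [Nonempty α]
    {𝒰 : Ultrafilter ι} {u : ι → α} {K : Set α} (hK : IsCompact K) (h : ∀ᶠ j in 𝒰, u j ∈ K) :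
    Tendsto u 𝒰 (𝓝 (limUnder 𝒰 u)) := by
  obtain ⟨a, -, ha⟩ := hK.ultrafilter_le_nhds (𝒰.map u) (le_principal_iff.2 h)
  exact tendsto_nhds_limUnder ⟨a, ha⟩

section

variable {E F : Type*} [NormedAddCommGroup E] [NormedSpace ℂ E] [NormedAddCommGroup F]
  [NormedSpace ℂ F]

theorem norm_sub_sub_fderiv_le_of_mapsTo_ball {f : E → F} {x w : E} {r M : ℝ}
    (hd : DifferentiableOn ℂ f (ball x r)) (hmaps : MapsTo f (ball x r) (closedBall (f x) M))
    (hw : w ∈ ball x r) :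
    ‖f w - f x - fderiv ℂ f x (w - x)‖ ≤ 2 * M * (‖w - x‖ / r) ^ 2 := by
  have hr : 0 < r := pos_of_mem_ball hw
  have hM : 0 ≤ M := nonempty_closedBall.mp (hmaps.nonempty ⟨w, hw⟩)
  set h : E → F := fun y => f y - fderiv ℂ f x (y - x)
  have hh : ∀ y, h y - h x = f y - f x - fderiv ℂ f x (y - x) := fun y => by
    simp only [h, sub_self, map_zero, sub_zero]; abel
  have hdh : DifferentiableOn ℂ h (ball x r) :=
    hd.sub ((fderiv ℂ f x).differentiable.comp (differentiable_id.sub_const x)).differentiableOn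
  have hmaps' : MapsTo h (ball x r) (closedBall (h x) (2 * M)) := by
    intro y hy
    have hfy : ‖f y - f x‖ ≤ M := by simpa [dist_eq_norm] using hmaps hy
    have hDf : ‖fderiv ℂ f x‖ ≤ M / r := Complex.norm_fderiv_le_div_of_mapsTo_ball hd hmaps hr
    have hyx : ‖y - x‖ ≤ r := by simpa [dist_eq_norm] using (mem_ball.1 hy).le
    rw [mem_closedBall, dist_eq_norm, hh]
    calc ‖f y - f x - fderiv ℂ f x (y - x)‖ ≤ M + M / r * r := norm_sub_le_of_le hfy
          ((fderiv ℂ f x).le_of_opNorm_le hDf (y - x) |>.trans (by gcongr))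
      _ = 2 * M := by field_simp; ring
  have hlittle : (h · - h x) =o[𝓝 x] (fun y => ‖y - x‖ ^ 1) := by
    simpa only [hh, pow_one] using
      (hd.differentiableAt (ball_mem_nhds x hr)).hasFDerivAt.isLittleO.norm_right
  simpa [dist_eq_norm, hh] using
    Complex.dist_le_mul_div_pow_of_mapsTo_ball_of_isLittleO hdh hmaps' hlittle hw

theorem exists_tendsto_fderiv_of_locally_uniformly_bounded {ι : Type*}
    [FiniteDimensional ℂ E] [FiniteDimensional ℂ F] {𝒰 : Ultrafilter ι} {f : ι → E → F}
    {X : Set E} {M : ℝ}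
    (hloc : ∀ x ∈ X, ∃ r > 0, ∀ᶠ j in 𝒰,
      DifferentiableOn ℂ (f j) (ball x r) ∧ MapsTo (f j) (ball x r) (closedBall 0 M)) :
    ∃ g : E → F, ∀ x ∈ X, Tendsto (fun j => f j x) 𝒰 (𝓝 (g x)) ∧ DifferentiableAt ℂ g x ∧
      Tendsto (fun j => fderiv ℂ (f j) x) 𝒰 (𝓝 (fderiv ℂ g x)) := by
  refine ⟨fun w => limUnder 𝒰 (fun j => f j w), fun x hx => ?_⟩
  obtain ⟨r, hr, hev⟩ := hloc x hx
  have hconv : ∀ w ∈ ball x r, Tendsto (fun j => f j w) 𝒰 (𝓝 (limUnder 𝒰 (fun j => f j w))) :=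
    fun w hw => (isCompact_closedBall 0 M).tendsto_limUnder_of_eventually_mem
      (hev.mono fun j hj => hj.2 hw)
  have hev_center : ∀ᶠ j in 𝒰, DifferentiableOn ℂ (f j) (ball x r) ∧
      MapsTo (f j) (ball x r) (closedBall (f j x) (2 * M)) := by
    refine hev.mono fun j ⟨hd, hmaps⟩ => ⟨hd, hmaps.mono_right (closedBall_subset_closedBall' ?_)⟩
    have := mem_closedBall_zero_iff.1 (hmaps (mem_ball_self hr))
    rw [dist_comm, dist_zero_right]
    linarith
  have hderiv :=
    (isCompact_closedBall (0 : E →L[ℂ] F) (2 * M / r)).tendsto_limUnder_of_eventually_mem <|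
      hev_center.mono fun j hj => mem_closedBall_zero_iff.2
        (Complex.norm_fderiv_le_div_of_mapsTo_ball hj.1 hj.2 hr)
  have hD := hasFDerivAt_of_tendsto_of_norm_sub_sub_le (C := 2 * (2 * M) / r ^ 2) hr hconv hderiv
    (hev_center.mono fun j hj w hw => (norm_sub_sub_fderiv_le_of_mapsTo_ball hj.1 hj.2 hw).trans_eq
      (by ring))
  exact ⟨hconv x (mem_ball_self hr), hD.differentiableAt, hD.fderiv ▸ hderiv⟩

theorem norm_lt_of_isPreconnected_of_norm_le [StrictConvexSpace ℝ F] {φ : E → F} {U : Set E}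
    {c : ℝ} {p z : E} (hU : IsPreconnected U) (ho : IsOpen U) (hd : DifferentiableOn ℂ φ U)
    (hle : ∀ w ∈ U, ‖φ w‖ ≤ c) (hp : p ∈ U) (hlt : ‖φ p‖ < c) (hz : z ∈ U) : ‖φ z‖ < c := by
  refine (hle z hz).lt_of_ne fun heq => hlt.ne ?_
  have hmax : IsMaxOn (norm ∘ φ) U z := fun w hw => by simpa [heq] using hle w hw
  rw [Complex.eqOn_of_isPreconnected_of_isMaxOn_norm hU ho hd hz hmax hp, Function.const_apply,
    heq]

end

theorem exists_seq_mem_tendsto_of_tendsto_csSup {S : ℕ → Set ℝ} {L : ℝ}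
    (hne : ∀ j, (S j).Nonempty) (hbdd : ∀ j, BddAbove (S j))
    (hL : Tendsto (fun j => sSup (S j)) atTop (𝓝 L)) :
    ∃ a : ℕ → ℝ, (∀ j, a j ∈ S j) ∧ Tendsto a atTop (𝓝 L) := by
  have hclose : ∀ j : ℕ, ∃ x ∈ S j, sSup (S j) - 1 / ((j : ℝ) + 1) < x := fun j =>
    exists_lt_of_lt_csSup (hne j) (sub_lt_self _ (by positivity))
  choose a ha hlt using hclose
  refine ⟨a, ha, tendsto_of_tendsto_of_tendsto_of_le_of_le ?_ hL (fun j => (hlt j).le)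
    fun j => le_csSup (hbdd j) (ha j)⟩
  simpa using hL.sub tendsto_one_div_add_atTop_nhds_zero_nat

theorem polydisc_subset_closedBall (n : ℕ) : polydisc n ⊆ closedBall 0 (Real.sqrt n) := by
  intro z hz
  rw [mem_closedBall_zero_iff, EuclideanSpace.norm_eq]
  refine Real.sqrt_le_sqrt ?_
  calc ∑ i, ‖z i‖ ^ 2 ≤ ∑ _i : Fin n, (1 : ℝ) :=
        Finset.sum_le_sum fun i _ => pow_le_one₀ (norm_nonneg _) (hz i).le
    _ = n := by simp

/-- `caraPoly n Y p` is definitionally `sSup (caraPolySet n Y p)`. -/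
def caraPolySet (n : ℕ) (Y : Set (EuclideanSpace ℂ (Fin n)))
    (p : EuclideanSpace ℂ (Fin n)) : Set ℝ :=
  {x : ℝ | ∃ f : EuclideanSpace ℂ (Fin n) → EuclideanSpace ℂ (Fin n),
    DifferentiableOn ℂ f Y ∧ MapsTo f Y (polydisc n) ∧ f p = 0 ∧
    x = ‖(fderiv ℂ f p).det‖ ^ 2}

section caraPoly

variable {n : ℕ} {Y Y' : Set (EuclideanSpace ℂ (Fin n))} {p : EuclideanSpace ℂ (Fin n)}

theorem caraPolySet_nonempty : (caraPolySet n Y p).Nonempty :=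
  ⟨_, fun _ => 0, differentiableOn_const _, fun _ _ _ => by simp, rfl, rfl⟩

theorem caraPolySet_anti (h : Y ⊆ Y') : caraPolySet n Y' p ⊆ caraPolySet n Y p := by
  rintro x ⟨f, hd, hm, hp, hx⟩
  exact ⟨f, hd.mono h, hm.mono_left h, hp, hx⟩

theorem caraPolySet_bddAbove {r : ℝ} (hr : 0 < r) (hball : ball p r ⊆ Y) :
    BddAbove (caraPolySet n Y p) := by
  refine ((isCompact_closedBall (0 : EuclideanSpace ℂ (Fin n) →L[ℂ] EuclideanSpace ℂ (Fin n))
    (Real.sqrt n / r)).bddAbove_image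
      (ContinuousLinearMap.continuous_det.norm.pow 2).continuousOn).mono ?_
  rintro _ ⟨f, hd, hm, hp, rfl⟩
  refine ⟨fderiv ℂ f p, mem_closedBall_zero_iff.2
    (Complex.norm_fderiv_le_div_of_mapsTo_ball (hd.mono hball) ?_ hr), rfl⟩
  rw [hp]
  exact fun w hw => polydisc_subset_closedBall n (hm (hball hw))

theorem caraPoly_anti {r : ℝ} (hr : 0 < r) (hball : ball p r ⊆ Y) (h : Y ⊆ Y') :
    caraPoly n Y' p ≤ caraPoly n Y p :=
  csSup_le_csSup (caraPolySet_bddAbove hr hball) caraPolySet_nonempty (caraPolySet_anti h)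

theorem mem_caraPolySet_iUnion_of_tendsto {Xs : ℕ → Set (EuclideanSpace ℂ (Fin n))}
    (hmono : Monotone Xs) (hopen : ∀ j, IsOpen (Xs j)) (hconn : IsPreconnected (⋃ j, Xs j))
    (hp : p ∈ ⋃ j, Xs j) {a : ℕ → ℝ} {L : ℝ} (ha : ∀ j, a j ∈ caraPolySet n (Xs j) p)
    (hL : Tendsto a atTop (𝓝 L)) : L ∈ caraPolySet n (⋃ j, Xs j) p := by
  choose f hfd hfm hfp hfa using ha
  set U := ⋃ j, Xs j
  let 𝒰 : Ultrafilter ℕ := .of atTop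
  have h𝒰 : (𝒰 : Filter ℕ) ≤ atTop := Ultrafilter.of_le atTop
  obtain ⟨g, hg⟩ := exists_tendsto_fderiv_of_locally_uniformly_bounded (𝒰 := 𝒰) (f := f)
    (X := U) (M := Real.sqrt n) fun x hx => by
      obtain ⟨J, hJ⟩ := mem_iUnion.1 hx
      obtain ⟨r, hr, hball⟩ := Metric.isOpen_iff.1 (hopen J) x hJ
      refine ⟨r, hr, h𝒰 ((eventually_ge_atTop J).mono fun j hj => ?_)⟩
      have hsub := hball.trans (hmono hj)
      exact ⟨(hfd j).mono hsub, fun w hw => polydisc_subset_closedBall n (hfm j (hsub hw))⟩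
  have hgd : DifferentiableOn ℂ g U := fun x hx => (hg x hx).2.1.differentiableWithinAt
  have hgp : g p = 0 := tendsto_nhds_unique (hg p hp).1 (by simp [hfp])
  have hg_le : ∀ z ∈ U, ∀ i, ‖g z i‖ ≤ 1 := by
    intro z hz i
    obtain ⟨J, hJ⟩ := mem_iUnion.1 hz
    refine le_of_tendsto
      (((EuclideanSpace.proj (𝕜 := ℂ) i).continuous.norm.tendsto _).comp (hg z hz).1) ?_
    exact h𝒰 ((eventually_ge_atTop J).mono fun j hj => (hfm j (hmono hj hJ) i).le)
  refine ⟨g, hgd, fun z hz i => ?_, hgp, ?_⟩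
  · have hgi : DifferentiableOn ℂ (fun w => g w i) U :=
      (EuclideanSpace.proj (𝕜 := ℂ) i).differentiable.comp_differentiableOn hgd
    exact norm_lt_of_isPreconnected_of_norm_le (φ := fun w => g w i) hconn (isOpen_iUnion hopen)
      hgi (fun w hw => hg_le w hw i) hp (by simp [hgp]) hz
  · exact tendsto_nhds_unique (hL.mono_left h𝒰) <|
      (((ContinuousLinearMap.continuous_det.norm.pow 2).tendsto _).comp (hg p hp).2.2).congr
        fun j => (hfa j).symm

end caraPoly

theorem stmt_7_general (n : ℕ) (X : Set (EuclideanSpace ℂ (Fin n)))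
    (hXc : IsConnected X)
    (Xs : ℕ → Set (EuclideanSpace ℂ (Fin n)))
    (hmono : Monotone Xs) (hopen : ∀ j, IsOpen (Xs j))
    (hsub : ∀ j, Xs j ⊆ X) (hunion : ⋃ j, Xs j = X)
    (p : EuclideanSpace ℂ (Fin n)) (hp : p ∈ Xs 0) :
    (∀ j, caraPoly n (Xs (j + 1)) p ≤ caraPoly n (Xs j) p) ∧
    (∀ j, caraPoly n X p ≤ caraPoly n (Xs j) p) ∧
    Tendsto (fun j => caraPoly n (Xs j) p) atTop (nhds (caraPoly n X p)) := by
  obtain ⟨r, hr, hball⟩ := Metric.isOpen_iff.1 (hopen 0) p hp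
  have hball_j : ∀ j, ball p r ⊆ Xs j := fun j => hball.trans (hmono j.zero_le)
  have hanti : Antitone fun j => caraPoly n (Xs j) p := fun i j hij =>
    caraPoly_anti hr (hball_j i) (hmono hij)
  have hlow : ∀ j, caraPoly n X p ≤ caraPoly n (Xs j) p := fun j =>
    caraPoly_anti hr (hball_j j) (hsub j)
  refine ⟨fun j => hanti j.le_succ, hlow, ?_⟩
  have hlim := tendsto_atTop_ciInf hanti ⟨_, forall_mem_range.2 hlow⟩
  obtain ⟨a, ha, haL⟩ := exists_seq_mem_tendsto_of_tendsto_csSup (fun _ => caraPolySet_nonempty)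
    (fun j => caraPolySet_bddAbove hr (hball_j j)) hlim
  have hmem := mem_caraPolySet_iUnion_of_tendsto hmono hopen (hunion ▸ hXc.isPreconnected)
    (mem_iUnion_of_mem 0 hp) ha haL
  rw [hunion] at hmem
  have hle := le_csSup (caraPolySet_bddAbove hr (hball.trans (hsub 0))) hmem
  rwa [← le_antisymm (le_ciInf hlow) hle] at hlim

theorem stmt_7 (n : ℕ) (X : Set (EuclideanSpace ℂ (Fin n)))
    (hXo : IsOpen X) (hXc : IsConnected X)
    (Xs : ℕ → Set (EuclideanSpace ℂ (Fin n)))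
    (hmono : Monotone Xs) (hopen : ∀ j, IsOpen (Xs j))
    (hsub : ∀ j, Xs j ⊆ X) (hunion : ⋃ j, Xs j = X)
    (p : EuclideanSpace ℂ (Fin n)) (hp : p ∈ Xs 0) :
    (∀ j, caraPoly n (Xs (j + 1)) p ≤ caraPoly n (Xs j) p) ∧
    (∀ j, caraPoly n X p ≤ caraPoly n (Xs j) p) ∧
    Tendsto (fun j => caraPoly n (Xs j) p) atTop (nhds (caraPoly n X p)) :=
  stmt_7_general n X hXc Xs hmono hopen hsub hunion p hp
end
end

section
/- Let X ⊆ ℂⁿ be open and connected, let {Xⱼ} be an increasing sequence of open subsets of X with ∪ⱼ Xⱼ = X, and let p ∈ X₁. Then the sequence K^Δ_{Xⱼ}(p) is non-increasing, each term is ≥ K^Δ_X(p), and lim_{j→∞} K^Δ_{Xⱼ}(p) = K^Δ_X(p). -/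
open Metric Set Filter

noncomputable section

/-- The polydisc-variant Kobayashi–Eisenman volume coefficient
`K^Δ_Y(p) = inf { |det Dg(0)|⁻² : g : Δⁿ → Y holomorphic, g(0) = p, det Dg(0) ≠ 0 }`. -/
def kobPoly (n : ℕ) (Y : Set (EuclideanSpace ℂ (Fin n)))
    (p : EuclideanSpace ℂ (Fin n)) : ℝ :=
  sInf {x : ℝ | ∃ g : EuclideanSpace ℂ (Fin n) → EuclideanSpace ℂ (Fin n),
    DifferentiableOn ℂ g (polydisc n) ∧ MapsTo g (polydisc n) Y ∧ g 0 = p ∧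
    (fderiv ℂ g 0).det ≠ 0 ∧ x = (‖(fderiv ℂ g 0).det‖ ^ 2)⁻¹}

/-! A competitor `g : Δⁿ → X` for `K^Δ_X(p)` can be rescaled to `z ↦ g (r • z)` with `r < 1`:
this maps `Δⁿ` into the compact set `g (r • closure Δⁿ)`, which lies in some `Xⱼ` because the
`Xⱼ` form an increasing open cover, and its cost is multiplied only by `r ^ (-2n)`. Hence
`inf_j K^Δ_{Xⱼ}(p) ≤ r ^ (-2n) K^Δ_X(p)` for every `r < 1`, and letting `r → 1` gives the limit;
the monotonicity statements are just inclusions between the sets of competitors. -/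

open scoped Pointwise

namespace Polydisc

variable {n : ℕ}

def closedPolydisc (n : ℕ) : Set (EuclideanSpace ℂ (Fin n)) :=
  {z | ∀ i, ‖z i‖ ≤ 1}

lemma polydisc_subset_closedPolydisc : polydisc n ⊆ closedPolydisc n :=
  fun _ hz i => (hz i).le

lemma isCompact_closedPolydisc : IsCompact (closedPolydisc n) := by
  have : closedPolydisc n =
      EuclideanSpace.equiv (Fin n) ℂ ⁻¹' univ.pi fun _ => closedBall 0 1 := by
    ext z
    simp [closedPolydisc]
  rw [this]
  exact (EuclideanSpace.equiv (Fin n) ℂ).toHomeomorph.isCompact_preimage.2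
    (isCompact_univ_pi fun _ => isCompact_closedBall 0 1)

lemma isBounded_polydisc : Bornology.IsBounded (polydisc n) :=
  isCompact_closedPolydisc.isBounded.subset polydisc_subset_closedPolydisc

lemma smul_closedPolydisc_subset_polydisc {c : ℂ} (hc : ‖c‖ < 1) :
    c • closedPolydisc n ⊆ polydisc n := by
  rintro _ ⟨z, hz, rfl⟩ i
  rw [PiLp.smul_apply, norm_smul]
  exact (mul_le_of_le_one_right (norm_nonneg c) (hz i)).trans_lt hc

end Polydisc

namespace KobayashiEisenman

open Polydisc

variable {n : ℕ} {Y Y' : Set (EuclideanSpace ℂ (Fin n))} {p : EuclideanSpace ℂ (Fin n)}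

/-- `kobPoly n Y p` is by definition `sInf (kobPolySet n Y p)`. -/
def kobPolySet (n : ℕ) (Y : Set (EuclideanSpace ℂ (Fin n)))
    (p : EuclideanSpace ℂ (Fin n)) : Set ℝ :=
  {x : ℝ | ∃ g : EuclideanSpace ℂ (Fin n) → EuclideanSpace ℂ (Fin n),
    DifferentiableOn ℂ g (polydisc n) ∧ MapsTo g (polydisc n) Y ∧ g 0 = p ∧
    (fderiv ℂ g 0).det ≠ 0 ∧ x = (‖(fderiv ℂ g 0).det‖ ^ 2)⁻¹}

lemma kobPolySet_mono (h : Y ⊆ Y') : kobPolySet n Y p ⊆ kobPolySet n Y' p := by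
  rintro x ⟨g, hg, hmaps, hg0, hdet, rfl⟩
  exact ⟨g, hg, hmaps.mono_right h, hg0, hdet, rfl⟩

lemma bddBelow_kobPolySet : BddBelow (kobPolySet n Y p) := by
  refine ⟨0, ?_⟩
  rintro x ⟨g, -, -, -, -, rfl⟩
  positivity

lemma det_fderiv_comp_smul (g : EuclideanSpace ℂ (Fin n) → EuclideanSpace ℂ (Fin n)) (c : ℂ) :
    (fderiv ℂ (fun z => g (c • z)) 0).det = c ^ n * (fderiv ℂ g 0).det := by
  rw [fderiv_comp_smul, smul_zero]
  change LinearMap.det _ = _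
  rw [ContinuousLinearMap.toLinearMap_smul, LinearMap.det_smul, finrank_euclideanSpace_fin]

lemma div_mem_kobPolySet_of_comp_smul {g : EuclideanSpace ℂ (Fin n) → EuclideanSpace ℂ (Fin n)}
    {c : ℂ} (hc : c ≠ 0) (hg : DifferentiableOn ℂ g (c • polydisc n))
    (hmaps : MapsTo (fun z => g (c • z)) (polydisc n) Y) (hg0 : g 0 = p)
    (hdet : (fderiv ℂ g 0).det ≠ 0) :
    (‖(fderiv ℂ g 0).det‖ ^ 2)⁻¹ / ‖c‖ ^ (2 * n) ∈ kobPolySet n Y p := by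
  refine ⟨fun z => g (c • z), ?_, hmaps, by simpa using hg0, ?_, ?_⟩
  · exact hg.comp (differentiableOn_id.const_smul c) fun z hz => smul_mem_smul_set hz
  · rw [det_fderiv_comp_smul]
    exact mul_ne_zero (pow_ne_zero _ hc) hdet
  · rw [det_fderiv_comp_smul, norm_mul, norm_pow, mul_pow, ← pow_mul, mul_inv, mul_comm 2 n,
      div_eq_mul_inv, mul_comm]

lemma kobPolySet_nonempty (hY : IsOpen Y) (hp : p ∈ Y) : (kobPolySet n Y p).Nonempty := by
  obtain ⟨ε, hε, hball⟩ := Metric.isOpen_iff.1 hY p hp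
  obtain ⟨R, hR, hpoly⟩ := isBounded_polydisc.subset_ball_lt 0 (0 : EuclideanSpace ℂ (Fin n))
  set c : ℂ := ((ε / R : ℝ) : ℂ)
  have hc : ‖c‖ = ε / R := by simp [c, abs_of_pos hε, abs_of_pos hR]
  have hmaps : MapsTo (fun z => p + c • z) (polydisc n) Y := by
    intro z hz
    apply hball
    have hzR : ‖z‖ < R := by simpa using hpoly hz
    calc dist (p + c • z) p = ‖c‖ * ‖z‖ := by simp [norm_smul]
      _ < ε / R * R := by rw [hc]; gcongr
      _ = ε := div_mul_cancel₀ ε hR.ne'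
  have hdet : (fderiv ℂ (fun z => p + z) 0).det = 1 := by
    rw [fderiv_const_add, fderiv_fun_id]
    exact LinearMap.det_id
  refine ⟨_, div_mem_kobPolySet_of_comp_smul (g := fun z => p + z) ?_
    (differentiableOn_id.const_add p) hmaps (add_zero p) (by rw [hdet]; exact one_ne_zero)⟩
  exact Complex.ofReal_ne_zero.2 (div_pos hε hR).ne'

lemma kobPoly_le_of_subset (hY : IsOpen Y) (hp : p ∈ Y) (h : Y ⊆ Y') :
    kobPoly n Y' p ≤ kobPoly n Y p :=
  csInf_le_csInf bddBelow_kobPolySet (kobPolySet_nonempty hY hp) (kobPolySet_mono h)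

lemma exists_div_pow_mem_kobPolySet_of_iUnion {Xs : ℕ → Set (EuclideanSpace ℂ (Fin n))}
    (hmono : Monotone Xs) (hopen : ∀ j, IsOpen (Xs j)) {x : ℝ}
    (hx : x ∈ kobPolySet n (⋃ j, Xs j) p) {r : ℝ} (hr0 : 0 < r) (hr1 : r < 1) :
    ∃ j, x / r ^ (2 * n) ∈ kobPolySet n (Xs j) p := by
  obtain ⟨g, hg, hmaps, hg0, hdet, rfl⟩ := hx
  have hnorm : ‖(r : ℂ)‖ = r := by simp [abs_of_pos hr0]
  have hsub : (r : ℂ) • closedPolydisc n ⊆ polydisc n :=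
    smul_closedPolydisc_subset_polydisc (hnorm.trans_lt hr1)
  have hK : IsCompact (g '' ((r : ℂ) • closedPolydisc n)) :=
    (isCompact_closedPolydisc.smul _).image_of_continuousOn (hg.continuousOn.mono hsub)
  obtain ⟨j, hj⟩ := hK.elim_directed_cover Xs hopen (hmaps.mono_left hsub).image_subset
    hmono.directed_le
  refine ⟨j, ?_⟩
  convert div_mem_kobPolySet_of_comp_smul (Complex.ofReal_ne_zero.2 hr0.ne')
    (hg.mono ((smul_set_mono polydisc_subset_closedPolydisc).trans hsub))
    (fun z hz => hj (mem_image_of_mem g (smul_mem_smul_set (polydisc_subset_closedPolydisc hz))))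
    hg0 hdet using 2
  rw [hnorm]

lemma tendsto_kobPoly_iUnion {Xs : ℕ → Set (EuclideanSpace ℂ (Fin n))}
    (hmono : Monotone Xs) (hopen : ∀ j, IsOpen (Xs j)) (hp : p ∈ Xs 0) :
    Tendsto (fun j => kobPoly n (Xs j) p) atTop (nhds (kobPoly n (⋃ j, Xs j) p)) := by
  have hpXs : ∀ j, p ∈ Xs j := fun j => hmono j.zero_le hp
  have hle : ∀ j, kobPoly n (⋃ j, Xs j) p ≤ kobPoly n (Xs j) p := fun j =>
    kobPoly_le_of_subset (hopen j) (hpXs j) (subset_iUnion Xs j)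
  have hanti : Antitone fun j => kobPoly n (Xs j) p := fun i _ hij =>
    kobPoly_le_of_subset (hopen i) (hpXs i) (hmono hij)
  have hbdd : BddBelow (range fun j => kobPoly n (Xs j) p) := ⟨_, forall_mem_range.2 hle⟩
  suffices ⨅ j, kobPoly n (Xs j) p ≤ kobPoly n (⋃ j, Xs j) p by
    rw [← le_antisymm this (le_ciInf hle)]
    exact tendsto_atTop_ciInf hanti hbdd
  refine le_csInf (kobPolySet_nonempty (isOpen_iUnion hopen) (mem_iUnion_of_mem 0 hp))
    fun x hx => ?_
  have hlim : Tendsto (fun r : ℝ => x / r ^ (2 * n)) (nhdsWithin 1 (Iio 1)) (nhds x) := by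
    have hcont : ContinuousAt (fun r : ℝ => x / r ^ (2 * n)) 1 := by fun_prop (disch := simp)
    simpa using hcont.tendsto.mono_left nhdsWithin_le_nhds
  refine ge_of_tendsto hlim ?_
  filter_upwards [Ioo_mem_nhdsLT zero_lt_one] with r ⟨hr0, hr1⟩
  obtain ⟨j, hj⟩ := exists_div_pow_mem_kobPolySet_of_iUnion hmono hopen hx hr0 hr1
  exact (ciInf_le hbdd j).trans (csInf_le bddBelow_kobPolySet hj)

end KobayashiEisenman

open KobayashiEisenman in
theorem stmt_8_general (n : ℕ) (X : Set (EuclideanSpace ℂ (Fin n)))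
    (Xs : ℕ → Set (EuclideanSpace ℂ (Fin n)))
    (hmono : Monotone Xs) (hopen : ∀ j, IsOpen (Xs j))
    (hunion : ⋃ j, Xs j = X)
    (p : EuclideanSpace ℂ (Fin n)) (hp : p ∈ Xs 0) :
    (∀ j, kobPoly n (Xs (j + 1)) p ≤ kobPoly n (Xs j) p) ∧
    (∀ j, kobPoly n X p ≤ kobPoly n (Xs j) p) ∧
    Tendsto (fun j => kobPoly n (Xs j) p) atTop (nhds (kobPoly n X p)) := by
  have hpXs : ∀ j, p ∈ Xs j := fun j => hmono j.zero_le hp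
  subst hunion
  exact ⟨fun j => kobPoly_le_of_subset (hopen j) (hpXs j) (hmono j.le_succ),
    fun j => kobPoly_le_of_subset (hopen j) (hpXs j) (subset_iUnion Xs j),
    tendsto_kobPoly_iUnion hmono hopen hp⟩

theorem stmt_8 (n : ℕ) (X : Set (EuclideanSpace ℂ (Fin n)))
    (hXo : IsOpen X) (hXc : IsConnected X)
    (Xs : ℕ → Set (EuclideanSpace ℂ (Fin n)))
    (hmono : Monotone Xs) (hopen : ∀ j, IsOpen (Xs j))
    (hsub : ∀ j, Xs j ⊆ X) (hunion : ⋃ j, Xs j = X)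
    (p : EuclideanSpace ℂ (Fin n)) (hp : p ∈ Xs 0) :
    (∀ j, kobPoly n (Xs (j + 1)) p ≤ kobPoly n (Xs j) p) ∧
    (∀ j, kobPoly n X p ≤ kobPoly n (Xs j) p) ∧
    Tendsto (fun j => kobPoly n (Xs j) p) atTop (nhds (kobPoly n X p)) :=
  stmt_8_general n X Xs hmono hopen hunion p hp
end
end

section
/- Let X ⊆ ℂⁿ be open and connected, let {Xⱼ} be an increasing sequence of open subsets of X with ∪ⱼ Xⱼ = X, and let p ∈ X₁. Then the sequence K^B_{Xⱼ}(p) is non-increasing, each term is ≥ K^B_X(p), and lim_{j→∞} K^B_{Xⱼ}(p) = K^B_X(p). -/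
open Metric Set Filter

noncomputable section

/-- The ball-variant Kobayashi–Eisenman volume coefficient
`K^B_Y(p) = inf { |det Dg(0)|⁻² : g : 𝔹ⁿ → Y holomorphic, g(0) = p, det Dg(0) ≠ 0 }`. -/
def kobBall (n : ℕ) (Y : Set (EuclideanSpace ℂ (Fin n)))
    (p : EuclideanSpace ℂ (Fin n)) : ℝ :=
  sInf {x : ℝ | ∃ g : EuclideanSpace ℂ (Fin n) → EuclideanSpace ℂ (Fin n),
    DifferentiableOn ℂ g (ball (0 : EuclideanSpace ℂ (Fin n)) 1) ∧
    MapsTo g (ball (0 : EuclideanSpace ℂ (Fin n)) 1) Y ∧ g 0 = p ∧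
    (fderiv ℂ g 0).det ≠ 0 ∧ x = (‖(fderiv ℂ g 0).det‖ ^ 2)⁻¹}

/-!
Shrinking a competitor `g : 𝔹ⁿ → X` to `z ↦ g (r z)` with `r < 1` costs only the factor `r⁻²ⁿ`
in `|det Dg(0)|⁻²`, and the new map sends `𝔹ⁿ` into the compact set `g (r 𝔹̄ⁿ)`, which lies in
some `Xⱼ` because the `Xⱼ` form an increasing open cover of `X`. Hence the non-increasing,
bounded below sequence `K^B_{Xⱼ}(p)` has limit at most `|det Dg(0)|⁻² r⁻²ⁿ` for every such `g`
and every `r < 1`; letting `r → 1` its limit is at most `K^B_X(p)`.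
-/

theorem det_fderiv_comp_smul_zero {𝕜 E : Type*} [NontriviallyNormedField 𝕜]
    [NormedAddCommGroup E] [NormedSpace 𝕜 E] [FiniteDimensional 𝕜 E] (g : E → E) (c : 𝕜) :
    (fderiv 𝕜 (fun z => g (c • z)) 0).det = c ^ Module.finrank 𝕜 E * (fderiv 𝕜 g 0).det := by
  rw [fderiv_comp_smul, smul_zero, ContinuousLinearMap.det, ContinuousLinearMap.toLinearMap_smul,
    LinearMap.det_smul]

section KobayashiEisenman

variable {n : ℕ} {X Y Z : Set (EuclideanSpace ℂ (Fin n))} {p : EuclideanSpace ℂ (Fin n)}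

def kobBallSet (n : ℕ) (Y : Set (EuclideanSpace ℂ (Fin n))) (p : EuclideanSpace ℂ (Fin n)) :
    Set ℝ :=
  {x : ℝ | ∃ g : EuclideanSpace ℂ (Fin n) → EuclideanSpace ℂ (Fin n),
    DifferentiableOn ℂ g (ball (0 : EuclideanSpace ℂ (Fin n)) 1) ∧
    MapsTo g (ball (0 : EuclideanSpace ℂ (Fin n)) 1) Y ∧ g 0 = p ∧
    (fderiv ℂ g 0).det ≠ 0 ∧ x = (‖(fderiv ℂ g 0).det‖ ^ 2)⁻¹}

theorem bddBelow_kobBallSet : BddBelow (kobBallSet n Y p) := by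
  refine ⟨0, ?_⟩
  rintro x ⟨g, -, -, -, -, rfl⟩
  positivity

theorem kobBallSet_mono (h : Y ⊆ Z) : kobBallSet n Y p ⊆ kobBallSet n Z p := by
  rintro x ⟨g, hg, hgY, hg0, hdet, rfl⟩
  exact ⟨g, hg, hgY.mono_right h, hg0, hdet, rfl⟩

theorem div_pow_mem_kobBallSet {g : EuclideanSpace ℂ (Fin n) → EuclideanSpace ℂ (Fin n)}
    (hg : DifferentiableOn ℂ g (ball 0 1)) (hg0 : g 0 = p) (hdet : (fderiv ℂ g 0).det ≠ 0)
    {r : ℝ} (hr0 : 0 < r) (hr1 : r < 1) (hgY : MapsTo g (closedBall 0 r) Y) :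
    (‖(fderiv ℂ g 0).det‖ ^ 2)⁻¹ / r ^ (2 * n) ∈ kobBallSet n Y p := by
  have hscale : MapsTo (fun z : EuclideanSpace ℂ (Fin n) => (r : ℂ) • z) (ball 0 1)
      (closedBall 0 r) := by
    intro z hz
    rw [mem_ball_zero_iff] at hz
    rw [mem_closedBall_zero_iff, norm_smul, Complex.norm_real, Real.norm_of_nonneg hr0.le]
    nlinarith
  have hdet' := det_fderiv_comp_smul_zero g (r : ℂ)
  rw [finrank_euclideanSpace_fin] at hdet'
  refine ⟨fun z => g ((r : ℂ) • z), ?_, hgY.comp hscale, by simpa using hg0, ?_, ?_⟩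
  · exact hg.comp (differentiable_id.const_smul (r : ℂ)).differentiableOn
      (hscale.mono_right (closedBall_subset_ball hr1))
  · rw [hdet']
    exact mul_ne_zero (pow_ne_zero _ (by exact_mod_cast hr0.ne')) hdet
  · rw [hdet', norm_mul, norm_pow, Complex.norm_real, Real.norm_of_nonneg hr0.le, mul_pow,
      ← pow_mul, mul_inv, div_eq_mul_inv, mul_comm n 2, mul_comm]

-- Without this, `kobBall` could be the junk value `sInf ∅ = 0`.
theorem kobBallSet_nonempty (hY : IsOpen Y) (hp : p ∈ Y) : (kobBallSet n Y p).Nonempty := by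
  obtain ⟨ε, hε, hεY⟩ := nhds_basis_closedBall.mem_iff.1 (hY.mem_nhds hp)
  have hr0 : 0 < min ε (1 / 2) := by positivity
  have hr1 : min ε (1 / 2) < 1 := (min_le_right _ _).trans_lt (by norm_num)
  have hmaps : MapsTo (fun z => p + z) (closedBall 0 (min ε (1 / 2))) Y := by
    intro z hz
    apply hεY
    rw [mem_closedBall_zero_iff] at hz
    rw [mem_closedBall, dist_eq_norm, add_sub_cancel_left]
    exact hz.trans (min_le_left _ _)
  have hdet : (fderiv ℂ (fun z => p + z) 0).det ≠ 0 := by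
    rw [fderiv_const_add p (f := fun z => z), fderiv_fun_id, ContinuousLinearMap.det,
      ContinuousLinearMap.coe_id, LinearMap.det_id]
    exact one_ne_zero
  exact ⟨_, div_pow_mem_kobBallSet (differentiable_id.const_add p).differentiableOn (add_zero p)
    hdet hr0 hr1 hmaps⟩

theorem kobBall_anti (hY : IsOpen Y) (hp : p ∈ Y) (h : Y ⊆ Z) : kobBall n Z p ≤ kobBall n Y p :=
  csInf_le_csInf bddBelow_kobBallSet (kobBallSet_nonempty hY hp) (kobBallSet_mono h)

theorem exists_div_pow_mem_kobBallSet_of_iUnion_eq {Xs : ℕ → Set (EuclideanSpace ℂ (Fin n))}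
    (hopen : ∀ j, IsOpen (Xs j)) (hmono : Monotone Xs) (hunion : ⋃ j, Xs j = X) {v : ℝ}
    (hv : v ∈ kobBallSet n X p) {r : ℝ} (hr0 : 0 < r) (hr1 : r < 1) :
    ∃ j, v / r ^ (2 * n) ∈ kobBallSet n (Xs j) p := by
  obtain ⟨g, hg, hgX, hg0, hdet, rfl⟩ := hv
  have hgr : MapsTo g (closedBall 0 r) X := hgX.mono_left (closedBall_subset_ball hr1)
  have hcompact : IsCompact (g '' closedBall 0 r) :=
    (isCompact_closedBall 0 r).image_of_continuousOn
      (hg.continuousOn.mono (closedBall_subset_ball hr1))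
  obtain ⟨j, hj⟩ := hcompact.elim_directed_cover Xs hopen (hunion ▸ hgr.image_subset)
    hmono.directed_le
  exact ⟨j, div_pow_mem_kobBallSet hg hg0 hdet hr0 hr1 (mapsTo_iff_image_subset.2 hj)⟩

theorem tendsto_kobBall_of_iUnion_eq {Xs : ℕ → Set (EuclideanSpace ℂ (Fin n))}
    (hopen : ∀ j, IsOpen (Xs j)) (hmono : Monotone Xs) (hunion : ⋃ j, Xs j = X)
    (hp : p ∈ Xs 0) :
    Tendsto (fun j => kobBall n (Xs j) p) atTop (nhds (kobBall n X p)) := by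
  have hpXs (j : ℕ) : p ∈ Xs j := hmono j.zero_le hp
  have hanti : Antitone fun j => kobBall n (Xs j) p :=
    fun i j hij => kobBall_anti (hopen i) (hpXs i) (hmono hij)
  have hle (j : ℕ) : kobBall n X p ≤ kobBall n (Xs j) p :=
    kobBall_anti (hopen j) (hpXs j) (hunion ▸ subset_iUnion Xs j)
  convert tendsto_atTop_ciInf hanti ⟨_, forall_mem_range.2 hle⟩ using 2
  refine le_antisymm (le_ciInf hle) (le_csInf ((kobBallSet_nonempty (hopen 0) hp).mono
    (kobBallSet_mono (hunion ▸ subset_iUnion Xs 0))) fun v hv => ?_)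
  have hbound : ∀ r ∈ Ioo (0 : ℝ) 1, ⨅ j, kobBall n (Xs j) p ≤ v / r ^ (2 * n) := by
    rintro r ⟨hr0, hr1⟩
    obtain ⟨j, hj⟩ := exists_div_pow_mem_kobBallSet_of_iUnion_eq hopen hmono hunion hv hr0 hr1
    exact (ciInf_le ⟨_, forall_mem_range.2 hle⟩ j).trans (csInf_le bddBelow_kobBallSet hj)
  have hcont : ContinuousAt (fun r : ℝ => v / r ^ (2 * n)) 1 :=
    continuousAt_const.div (continuousAt_id.pow _) (by simp)
  have hlim : Tendsto (fun r : ℝ => v / r ^ (2 * n)) (nhdsWithin 1 (Iio 1)) (nhds v) := by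
    simpa using hcont.tendsto.mono_left nhdsWithin_le_nhds
  exact ge_of_tendsto hlim (eventually_of_mem (Ioo_mem_nhdsLT zero_lt_one) hbound)

end KobayashiEisenman

theorem stmt_10_general (n : ℕ) (X : Set (EuclideanSpace ℂ (Fin n)))
    (Xs : ℕ → Set (EuclideanSpace ℂ (Fin n)))
    (hmono : Monotone Xs) (hopen : ∀ j, IsOpen (Xs j))
    (hunion : ⋃ j, Xs j = X)
    (p : EuclideanSpace ℂ (Fin n)) (hp : p ∈ Xs 0) :
    (∀ j, kobBall n (Xs (j + 1)) p ≤ kobBall n (Xs j) p) ∧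
    (∀ j, kobBall n X p ≤ kobBall n (Xs j) p) ∧
    Tendsto (fun j => kobBall n (Xs j) p) atTop (nhds (kobBall n X p)) := by
  have hpXs (j : ℕ) : p ∈ Xs j := hmono j.zero_le hp
  refine ⟨fun j => kobBall_anti (hopen j) (hpXs j) (hmono j.le_succ),
    fun j => kobBall_anti (hopen j) (hpXs j) (hunion ▸ subset_iUnion Xs j), ?_⟩
  exact tendsto_kobBall_of_iUnion_eq hopen hmono hunion hp

theorem stmt_10 (n : ℕ) (X : Set (EuclideanSpace ℂ (Fin n)))
    (hXo : IsOpen X) (hXc : IsConnected X)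
    (Xs : ℕ → Set (EuclideanSpace ℂ (Fin n)))
    (hmono : Monotone Xs) (hopen : ∀ j, IsOpen (Xs j))
    (hsub : ∀ j, Xs j ⊆ X) (hunion : ⋃ j, Xs j = X)
    (p : EuclideanSpace ℂ (Fin n)) (hp : p ∈ Xs 0) :
    (∀ j, kobBall n (Xs (j + 1)) p ≤ kobBall n (Xs j) p) ∧
    (∀ j, kobBall n X p ≤ kobBall n (Xs j) p) ∧
    Tendsto (fun j => kobBall n (Xs j) p) atTop (nhds (kobBall n X p)) :=
  stmt_10_general n X Xs hmono hopen hunion p hp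
end
end

section
/- Let Ω ⊂ ℂⁿ be a bounded convex open set such that every holomorphic map f : Δ → ℂⁿ with f(Δ) ⊆ ∂Ω is constant. Let U ⊆ ℂᵐ be open and connected, z⁰ ∈ U, and let hⱼ : U → Ω be holomorphic maps with hⱼ(z⁰) → p⁰ for some p⁰ ∈ ∂Ω. Then hⱼ converges to the constant map p⁰ uniformly on compact subsets of U, and the derivatives Dhⱼ converge to 0 uniformly on compact subsets of U; in particular the operator norms ‖Dhⱼ(z⁰)‖ tend to 0 as j → ∞. -/
/-!
Since `Ω` is bounded, the Schwarz lemma makes the `hⱼ` equicontinuous, so by Arzelà–Ascoli they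
are relatively compact for uniform convergence on compact subsets of `U`. A limit `g` of a subnet
maps `U` into `closure Ω` and `z⁰` to `p⁰`. Separate `p⁰` from `Ω` by `re ∘ L` with `L` complex
linear: on a complex disc through a point where `g = p⁰`, the modulus of `exp (L ∘ g)` is maximal
at the centre, so the disc lies in `∂Ω` and is therefore constant. Hence `{g = p⁰}` is open and
closed in `U`, so `g ≡ p⁰`, and the whole sequence converges to `p⁰`. The Cauchy estimate on balls
around a compact set then gives uniform convergence of the derivatives to `0`.
-/

open Metric Set Filter

open scoped Topology UniformConvergence

def NoHolomorphicDiscs {F : Type*} [NormedAddCommGroup F] [NormedSpace ℂ F] (S : Set F) : Prop :=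
  ∀ f : ℂ → F, DifferentiableOn ℂ f (ball (0 : ℂ) 1) → f '' ball (0 : ℂ) 1 ⊆ S →
    ∃ c, ∀ t ∈ ball (0 : ℂ) 1, f t = c

section UniformOnFun

variable {α β ι : Type*} [UniformSpace β]

/- Functions that agree on `⋃₀ 𝔖` are inseparable in `α →ᵤ[𝔖] β`, so a cluster point need only
agree with the limit there. -/
theorem UniformOnFun.tendsto_ofFun_of_forall_mapClusterPt {𝔖 : Set (Set α)} {l : Filter ι}
    {F : ι → α →ᵤ[𝔖] β} {S : Set (α →ᵤ[𝔖] β)} (hS : IsCompact S) (hFS : ∀ᶠ i in l, F i ∈ S)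
    {f : α → β} (h : ∀ g ∈ S, MapClusterPt g l F → EqOn (toFun 𝔖 g) f (⋃₀ 𝔖)) :
    Tendsto F l (𝓝 (ofFun 𝔖 f)) := by
  refine (hS.tendsto_nhdsSet_of_mapClusterPt (s' := {g | EqOn (toFun 𝔖 g) f (⋃₀ 𝔖)}) hFS h)
    |>.mono_right (nhdsSet_le.2 fun g (hg : EqOn _ _ _) => ?_)
  rw [← tendsto_id', UniformOnFun.tendsto_iff_tendstoUniformlyOn]
  exact fun K hK => (UniformOnFun.tendsto_iff_tendstoUniformlyOn.1 tendsto_id K hK).congr_right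
    (hg.mono (subset_sUnion_of_mem hK))

theorem UniformOnFun.exists_tendstoLocallyUniformlyOn_of_mapClusterPt [TopologicalSpace α]
    [LocallyCompactSpace α] {U : Set α} (hUo : IsOpen U) {f : ι → α → β} {l : Filter ι}
    {g : α →ᵤ[{K | K ⊆ U ∧ IsCompact K}] β}
    (hg : MapClusterPt g l fun i => ofFun {K | K ⊆ U ∧ IsCompact K} (f i)) :
    ∃ l' ≤ l, l'.NeBot ∧
      TendstoLocallyUniformlyOn f (toFun {K | K ⊆ U ∧ IsCompact K} g) l' U := by
  refine ⟨l ⊓ comap (fun i => ofFun _ (f i)) (𝓝 g), inf_le_left, ?_, ?_⟩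
  · have := hg.neBot
    rw [inf_comm, ← Filter.push_pull] at this
    exact this.of_map
  · rw [tendstoLocallyUniformlyOn_iff_forall_isCompact hUo]
    exact fun K hKU hK => UniformOnFun.tendsto_iff_tendstoUniformlyOn.1
      (tendsto_comap.mono_left inf_le_right) K ⟨hKU, hK⟩

end UniformOnFun

section Holomorphic

variable {E F ι : Type*} [NormedAddCommGroup E] [NormedSpace ℂ E]
  [NormedAddCommGroup F] [NormedSpace ℂ F] {U : Set E} {l : Filter ι} {f : ι → E → F} {g : E → F}

theorem equicontinuousAt_of_norm_le (hUo : IsOpen U) (hf : ∀ i, DifferentiableOn ℂ (f i) U)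
    {M : ℝ} (hM : ∀ i, ∀ z ∈ U, ‖f i z‖ ≤ M) {x : E} (hx : x ∈ U) : EquicontinuousAt f x := by
  obtain ⟨R, hR, hRU⟩ := Metric.isOpen_iff.1 hUo x hx
  refine Metric.equicontinuousAt_of_continuity_modulus (fun y => 2 * M / R * dist y x)
    ((by fun_prop : Continuous fun y => 2 * M / R * dist y x).tendsto' x 0 (by simp)) f ?_
  filter_upwards [ball_mem_nhds x hR] with y hy i
  rw [dist_comm]
  refine Complex.dist_le_div_mul_dist_of_mapsTo_ball ((hf i).mono hRU) (fun z hz => ?_) hy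
  rw [mem_closedBall, two_mul]
  exact (dist_le_norm_add_norm _ _).trans (add_le_add (hM i z (hRU hz)) (hM i x hx))

theorem isCompact_closure_range_ofFun_of_norm_le [ProperSpace F] (hUo : IsOpen U)
    (hf : ∀ i, DifferentiableOn ℂ (f i) U) {M : ℝ} (hM : ∀ i, ∀ z ∈ U, ‖f i z‖ ≤ M) :
    IsCompact (closure (range fun i => UniformOnFun.ofFun {K | K ⊆ U ∧ IsCompact K} (f i))) := by
  refine ArzelaAscoli.isCompact_closure_of_isClosedEmbedding (fun K hK => hK.2)
    (F := UniformOnFun.toFun _) .id (fun K hK x hx => ?_) fun K hK x hx => ?_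
  · refine (equicontinuousAt_of_norm_le (M := M) hUo ?_ ?_ (hK.1 hx)).equicontinuousWithinAt K
    · rintro ⟨_, i, rfl⟩
      exact hf i
    · rintro ⟨_, i, rfl⟩
      exact hM i
  · refine ⟨closedBall 0 M, isCompact_closedBall 0 M, ?_⟩
    rintro _ ⟨i, rfl⟩
    simpa using hM i x (hK.1 hx)

theorem TendstoUniformlyOn.fderiv_of_cthickening {K : Set E} {δ : ℝ}
    (hδ : 0 < δ) (hlim : TendstoUniformlyOn f g l (cthickening δ K))
    (hf : ∀ᶠ i in l, DifferentiableOn ℂ (f i) (cthickening δ K))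
    (hg : DifferentiableOn ℂ g (cthickening δ K)) :
    TendstoUniformlyOn (fun i => fderiv ℂ (f i)) (fderiv ℂ g) l K := by
  rw [Metric.tendstoUniformlyOn_iff] at hlim ⊢
  intro ε hε
  filter_upwards [hlim (ε * δ / 4) (by positivity), hf] with i hi hfi x hx
  have hball : ball x δ ⊆ cthickening δ K :=
    ball_subset_closedBall.trans (closedBall_subset_cthickening hx δ)
  have hdiff : DifferentiableOn ℂ (f i - g) (ball x δ) := (hfi.sub hg).mono hball
  have hnear : ∀ y ∈ ball x δ, ‖(f i - g) y‖ ≤ ε * δ / 4 := fun y hy => by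
    simpa [← dist_eq_norm, dist_comm] using (hi y (hball hy)).le
  have hmaps : MapsTo (f i - g) (ball x δ) (closedBall ((f i - g) x) (ε * δ / 2)) := by
    intro y hy
    rw [mem_closedBall]
    linarith [dist_le_norm_add_norm ((f i - g) y) ((f i - g) x), hnear y hy,
      hnear x (mem_ball_self hδ)]
  have hnhds : cthickening δ K ∈ 𝓝 x := mem_of_superset (ball_mem_nhds x hδ) hball
  have hderiv := Complex.norm_fderiv_le_div_of_mapsTo_ball hdiff hmaps hδ
  rw [fderiv_sub (hfi.differentiableAt hnhds) (hg.differentiableAt hnhds)] at hderiv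
  calc dist (fderiv ℂ g x) (fderiv ℂ (f i) x) = ‖fderiv ℂ (f i) x - fderiv ℂ g x‖ := by
        rw [dist_comm, dist_eq_norm]
    _ ≤ ε * δ / 2 / δ := hderiv
    _ = ε / 2 := by field_simp
    _ < ε := half_lt_self hε

theorem TendstoLocallyUniformlyOn.fderiv [ProperSpace E] (hlim : TendstoLocallyUniformlyOn f g l U)
    (hUo : IsOpen U) (hf : ∀ᶠ i in l, DifferentiableOn ℂ (f i) U) (hg : DifferentiableOn ℂ g U) :
    TendstoLocallyUniformlyOn (fun i => fderiv ℂ (f i)) (fderiv ℂ g) l U := by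
  rw [tendstoLocallyUniformlyOn_iff_forall_isCompact hUo] at hlim ⊢
  intro K hKU hK
  obtain ⟨δ, hδ, hδU⟩ := hK.exists_cthickening_subset_open hUo hKU
  exact (hlim _ hδU hK.cthickening).fderiv_of_cthickening hδ
    (hf.mono fun _ hi => hi.mono hδU) (hg.mono hδU)

variable {Ω : Set F}

theorem mapsTo_frontier_of_mapsTo_closure (hΩo : IsOpen Ω) (hΩc : Convex ℝ Ω)
    (hUo : IsOpen U) (hUc : IsPreconnected U) {φ : E → F} (hφ : DifferentiableOn ℂ φ U)
    (hφΩ : MapsTo φ U (closure Ω)) {z₀ : E} (hz₀ : z₀ ∈ U) (hφz₀ : φ z₀ ∈ frontier Ω) :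
    MapsTo φ U (frontier Ω) := by
  rw [hΩo.frontier_eq] at hφz₀ ⊢
  obtain ⟨L, hL⟩ := RCLike.geometric_hahn_banach_open_point (𝕜 := ℂ) hΩc hΩo hφz₀.2
  have hLΩ : ∀ x ∈ closure Ω, (L x).re ≤ (L (φ z₀)).re :=
    closure_minimal (fun x hx => (hL x hx).le)
      (isClosed_le (Complex.continuous_re.comp L.continuous) continuous_const)
  -- `‖exp (L ∘ φ)‖ = exp (re (L ∘ φ))` is maximal at `z₀`, hence constant on `U`.
  have hmax : IsMaxOn (norm ∘ fun z => Complex.exp (L (φ z))) U z₀ := fun z hz => by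
    simpa [Complex.norm_exp] using hLΩ _ (hφΩ hz)
  have hconst := Complex.norm_eqOn_of_isPreconnected_of_isMaxOn hUc hUo
    (Complex.differentiable_exp.comp_differentiableOn (L.differentiable.comp_differentiableOn hφ))
    hz₀ hmax
  intro z hz
  refine ⟨hφΩ hz, fun hzΩ => (hL _ hzΩ).ne ?_⟩
  simpa [Complex.norm_exp] using hconst hz

theorem NoHolomorphicDiscs.eqOn_of_mapsTo_closure (hΩ : NoHolomorphicDiscs (frontier Ω))
    (hΩo : IsOpen Ω) (hΩc : Convex ℝ Ω) {φ : ℂ → F} (hφ : DifferentiableOn ℂ φ (ball 0 1))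
    (hφΩ : MapsTo φ (ball 0 1) (closure Ω)) (hφ0 : φ 0 ∈ frontier Ω) :
    EqOn φ (fun _ => φ 0) (ball 0 1) := by
  obtain ⟨c, hc⟩ := hΩ φ hφ (mapsTo_frontier_of_mapsTo_closure hΩo hΩc isOpen_ball
    (convex_ball 0 1).isPreconnected hφ hφΩ (mem_ball_self one_pos) hφ0).image_subset
  intro t ht
  rw [hc t ht, hc 0 (mem_ball_self one_pos)]

variable [CompleteSpace F] [l.NeBot]

theorem TendstoLocallyUniformlyOn.differentiableOn_comp (hlim : TendstoLocallyUniformlyOn f g l U)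
    (hf : ∀ᶠ i in l, DifferentiableOn ℂ (f i) U) {e : ℂ → E} (he : Differentiable ℂ e)
    {V : Set ℂ} (hV : IsOpen V) (heV : MapsTo e V U) : DifferentiableOn ℂ (g ∘ e) V :=
  (hlim.comp e heV he.continuous.continuousOn).differentiableOn
    (hf.mono fun _ hi => hi.comp he.differentiableOn heV) hV

theorem eventually_eq_of_tendstoLocallyUniformlyOn (hΩ : NoHolomorphicDiscs (frontier Ω))
    (hΩo : IsOpen Ω) (hΩc : Convex ℝ Ω) (hUo : IsOpen U) (hf : ∀ i, DifferentiableOn ℂ (f i) U)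
    (hfΩ : ∀ i, MapsTo (f i) U Ω) (hlim : TendstoLocallyUniformlyOn f g l U) {z : E}
    (hz : z ∈ U) (hgz : g z ∈ frontier Ω) : ∀ᶠ w in 𝓝 z, g w = g z := by
  obtain ⟨r, hr, hrU⟩ := Metric.isOpen_iff.1 hUo z hz
  filter_upwards [ball_mem_nhds z (half_pos hr)] with w hw
  set e : ℂ → E := fun t => z + (2 * t) • (w - z)
  have heU : MapsTo e (ball 0 1) U := fun t ht => hrU <| by
    rw [mem_ball, dist_eq_norm] at hw ⊢
    rw [mem_ball_zero_iff] at ht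
    calc ‖e t - z‖ = 2 * ‖t‖ * ‖w - z‖ := by simp [e, norm_smul]
      _ ≤ 2 * ‖w - z‖ := by gcongr; nlinarith [norm_nonneg t]
      _ < r := by linarith
  have hgΩ : MapsTo g U (closure Ω) := fun y hy =>
    mem_closure_of_tendsto (hlim.tendsto_at hy) (Eventually.of_forall fun i => hfΩ i hy)
  have hdisc := hΩ.eqOn_of_mapsTo_closure hΩo hΩc
    (hlim.differentiableOn_comp (Eventually.of_forall hf) (by fun_prop) isOpen_ball heU)
    (hgΩ.comp heU) (by simpa [e] using hgz)
    (show (2⁻¹ : ℂ) ∈ ball 0 1 by rw [mem_ball_zero_iff]; norm_num)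
  simpa [e] using hdisc

theorem eqOn_of_tendstoLocallyUniformlyOn (hΩ : NoHolomorphicDiscs (frontier Ω))
    (hΩo : IsOpen Ω) (hΩc : Convex ℝ Ω) (hUo : IsOpen U) (hUc : IsPreconnected U)
    (hf : ∀ i, DifferentiableOn ℂ (f i) U) (hfΩ : ∀ i, MapsTo (f i) U Ω)
    (hlim : TendstoLocallyUniformlyOn f g l U) {z₀ : E} (hz₀ : z₀ ∈ U) {p : F}
    (hp : p ∈ frontier Ω) (hfz₀ : Tendsto (fun i => f i z₀) l (𝓝 p)) :
    EqOn g (fun _ => p) U := by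
  have hgz₀ : g z₀ = p := tendsto_nhds_unique (hlim.tendsto_at hz₀) hfz₀
  have hnear {z : E} (hz : z ∈ U) (hgz : g z = p) : ∀ᶠ w in 𝓝 z, g w = p :=
    hgz ▸ eventually_eq_of_tendstoLocallyUniformlyOn hΩ hΩo hΩc hUo hf hfΩ hlim hz (hgz ▸ hp)
  have hgc : ContinuousOn g U :=
    hlim.continuousOn (Frequently.of_forall fun i => (hf i).continuousOn)
  have hU : U ⊆ {z | ∀ᶠ w in 𝓝 z, g w = p} := by
    refine hUc.subset_of_closure_inter_subset isOpen_setOfPred_eventually_nhds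
      ⟨z₀, hz₀, hnear hz₀ hgz₀⟩ fun z ⟨hzu, hzU⟩ => hnear hzU ?_
    by_contra hne
    obtain ⟨w, hwu, hw⟩ := ((mem_closure_iff_frequently.1 hzu).and_eventually
      ((hgc.continuousAt (hUo.mem_nhds hzU)).eventually_ne hne)).exists
    exact hw hwu.self_of_nhds
  exact fun z hz => (hU hz).self_of_nhds

end Holomorphic

theorem stmt_11 (n m : ℕ)
    (Ω : Set (EuclideanSpace ℂ (Fin n)))
    (hΩo : IsOpen Ω) (hΩb : Bornology.IsBounded Ω) (hΩconv : Convex ℝ Ω)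
    (hnodisc : ∀ f : ℂ → EuclideanSpace ℂ (Fin n),
      DifferentiableOn ℂ f (ball (0 : ℂ) 1) →
      f '' ball (0 : ℂ) 1 ⊆ frontier Ω →
      ∃ c, ∀ t ∈ ball (0 : ℂ) 1, f t = c)
    (U : Set (EuclideanSpace ℂ (Fin m))) (hUo : IsOpen U) (hUc : IsConnected U)
    (z0 : EuclideanSpace ℂ (Fin m)) (hz0 : z0 ∈ U)
    (h : ℕ → EuclideanSpace ℂ (Fin m) → EuclideanSpace ℂ (Fin n))
    (hdiff : ∀ j, DifferentiableOn ℂ (h j) U)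
    (hmaps : ∀ j, MapsTo (h j) U Ω)
    (p0 : EuclideanSpace ℂ (Fin n)) (hp0 : p0 ∈ frontier Ω)
    (hconv : Tendsto (fun j => h j z0) atTop (nhds p0)) :
    (∀ K ⊆ U, IsCompact K →
      TendstoUniformlyOn h (fun _ => p0) atTop K) ∧
    (∀ K ⊆ U, IsCompact K →
      TendstoUniformlyOn (fun j z => fderiv ℂ (h j) z)
        (fun _ => (0 : EuclideanSpace ℂ (Fin m) →L[ℂ] EuclideanSpace ℂ (Fin n)))
        atTop K) ∧
    Tendsto (fun j => ‖fderiv ℂ (h j) z0‖) atTop (nhds 0) := by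
  obtain ⟨M, hM⟩ := hΩb.subset_closedBall 0
  have hbound : ∀ j, ∀ z ∈ U, ‖h j z‖ ≤ M := fun j z hz => by simpa using hM (hmaps j hz)
  have hunif : Tendsto (fun j => UniformOnFun.ofFun {K | K ⊆ U ∧ IsCompact K} (h j)) atTop
      (𝓝 (UniformOnFun.ofFun _ fun _ => p0)) := by
    refine UniformOnFun.tendsto_ofFun_of_forall_mapClusterPt
      (isCompact_closure_range_ofFun_of_norm_le hUo hdiff hbound)
      (Eventually.of_forall fun j => subset_closure (mem_range_self j))
      fun g _ hg z ⟨K, ⟨hKU, _⟩, hzK⟩ => ?_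
    obtain ⟨l, hl, _, hlim⟩ := UniformOnFun.exists_tendstoLocallyUniformlyOn_of_mapClusterPt hUo hg
    exact eqOn_of_tendstoLocallyUniformlyOn hnodisc hΩo hΩconv hUo hUc.isPreconnected hdiff hmaps
      hlim hz0 hp0 (hconv.mono_left hl) (hKU hzK)
  have hcompact : ∀ K ⊆ U, IsCompact K → TendstoUniformlyOn h (fun _ => p0) atTop K :=
    fun K hKU hK => UniformOnFun.tendsto_iff_tendstoUniformlyOn.1 hunif K ⟨hKU, hK⟩
  have hderiv := ((tendstoLocallyUniformlyOn_iff_forall_isCompact hUo).2 hcompact).fderiv hUo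
    (Eventually.of_forall hdiff) (differentiableOn_const p0)
  rw [fderiv_fun_const] at hderiv
  have hderiv_compact := (tendstoLocallyUniformlyOn_iff_forall_isCompact hUo).1 hderiv
  refine ⟨hcompact, hderiv_compact, ?_⟩
  simpa using (tendstoUniformlyOn_singleton_iff_tendsto.1
    (hderiv_compact {z0} (singleton_subset_iff.2 hz0) isCompact_singleton)).norm
end

section
/- Let U ⊆ ℂⁿ be open and connected, z⁰ ∈ U, let K₀ ⊆ U be compact, and let V ⊆ U be an open connected set with K₀ ∪ {z⁰} ⊆ V and with compact closure V̄ ⊆ U. Let C > 0. Then there exists a constant C′ > 0, depending only on z⁰, K₀, V and C (and not on ω), such that every holomorphic map ω : U → ℂⁿ satisfying (a) Dω(z⁰) = Id, and (b) sup_{z∈K} ‖D²ω(z)‖ ≤ C · sup_{z∈K} ‖Dω(z)‖ for every compact subset K ⊆ V̄, also satisfies sup_{z∈K₀} ‖Dω(z)‖ ≤ C′. -/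
/-
The derivatives of the maps in question satisfy a Harnack inequality that is uniform in `ω`:
Grönwall's inequality along segments turns `‖D²ω‖ ≤ C ‖Dω‖` into
`‖Dω b‖ ≤ exp (C ‖b - a‖) ‖Dω a‖` on every ball in `V`. Chaining these local comparisons through
the connected set `V` and covering the compact set `K₀` by finitely many balls bounds `‖Dω‖` on
`K₀` by a fixed multiple of `‖Dω z⁰‖ = 1`. Grönwall needs `Dω` to be holomorphic; this follows
from the Cauchy formula for directional derivatives, `Dω x v = (2πi)⁻¹ ∮ w⁻² ω (x + w v) dw`,
by differentiating under the integral sign in `x`.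
-/

open Metric Set Filter Topology MeasureTheory

section LocallyComparable

variable {X ι : Type*} [TopologicalSpace X]

def LocallyComparableOn (g : ι → X → ℝ) (V : Set X) : Prop :=
  ∀ x ∈ V, ∃ c ≥ 0, ∀ᶠ y in 𝓝[V] x, ∀ i, g i y ≤ c * g i x ∧ g i x ≤ c * g i y

variable {g : ι → X → ℝ} {V : Set X}

theorem LocallyComparableOn.exists_le_mul (h : LocallyComparableOn g V) (hV : IsPreconnected V)
    {x y : X} (hx : x ∈ V) (hy : y ∈ V) : ∃ c ≥ 0, ∀ i, g i y ≤ c * g i x := by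
  refine hV.induction₂' (fun x y => ∃ c ≥ 0, ∀ i, g i y ≤ c * g i x) (fun x hx => ?_)
    (fun x y z _ _ _ ⟨c, hc, hxy⟩ ⟨c', hc', hyz⟩ => ⟨c' * c, by positivity, fun i => ?_⟩) hx hy
  · obtain ⟨c, hc, hxy⟩ := h x hx
    filter_upwards [hxy] with y hy
    exact ⟨⟨c, hc, fun i => (hy i).1⟩, ⟨c, hc, fun i => (hy i).2⟩⟩
  · calc g i z ≤ c' * g i y := hyz i
      _ ≤ c' * (c * g i x) := mul_le_mul_of_nonneg_left (hxy i) hc'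
      _ = c' * c * g i x := (mul_assoc _ _ _).symm

theorem LocallyComparableOn.exists_forall_le_mul_of_isCompact (h : LocallyComparableOn g V)
    (hV : IsPreconnected V) {K : Set X} (hK : IsCompact K) (hKV : K ⊆ V) {x₀ : X}
    (hx₀ : x₀ ∈ V) (hg : ∀ i, 0 ≤ g i x₀) : ∃ c ≥ 0, ∀ i, ∀ y ∈ K, g i y ≤ c * g i x₀ := by
  refine hK.induction_on (p := fun s => ∃ c ≥ 0, ∀ i, ∀ y ∈ s, g i y ≤ c * g i x₀)
    ⟨0, le_rfl, by simp⟩ (fun s t hst ⟨c, hc, ht⟩ => ⟨c, hc, fun i y hy => ht i y (hst hy)⟩)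
    (fun s t ⟨c, hc, hs⟩ ⟨c', _, ht⟩ => ⟨max c c', le_max_of_le_left hc, fun i y hy => ?_⟩)
    fun y hy => ?_
  · rcases hy with hy | hy
    · exact (hs i y hy).trans (mul_le_mul_of_nonneg_right (le_max_left c c') (hg i))
    · exact (ht i y hy).trans (mul_le_mul_of_nonneg_right (le_max_right c c') (hg i))
  · obtain ⟨c, hc, hyx⟩ := h.exists_le_mul hV hx₀ (hKV hy)
    obtain ⟨c', hc', hnear⟩ := h y (hKV hy)
    refine ⟨_, nhdsWithin_mono y hKV hnear, c' * c, by positivity, fun i w hw => ?_⟩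
    calc g i w ≤ c' * g i y := (hw i).1
      _ ≤ c' * (c * g i x₀) := mul_le_mul_of_nonneg_left (hyx i) hc'
      _ = c' * c * g i x₀ := (mul_assoc _ _ _).symm

end LocallyComparable

theorem differentiableOn_clm_apply {𝕜 D E F : Type*} [NontriviallyNormedField 𝕜]
    [CompleteSpace 𝕜] [NormedAddCommGroup D] [NormedSpace 𝕜 D] [NormedAddCommGroup E]
    [NormedSpace 𝕜 E] [FiniteDimensional 𝕜 E] [NormedAddCommGroup F] [NormedSpace 𝕜 F]
    {f : D → E →L[𝕜] F} {s : Set D} :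
    DifferentiableOn 𝕜 f s ↔ ∀ y, DifferentiableOn 𝕜 (fun x => f x y) s := by
  refine ⟨fun h y => h.clm_apply (differentiableOn_const y), fun h => ?_⟩
  let d := Module.finrank 𝕜 E
  have hd : d = Module.finrank 𝕜 (Fin d → 𝕜) := (Module.finrank_fin_fun 𝕜).symm
  let e₁ := ContinuousLinearEquiv.ofFinrankEq hd
  let e₂ := (e₁.arrowCongr (1 : F ≃L[𝕜] F)).trans (ContinuousLinearEquiv.piRing (Fin d))
  rw [← Function.id_comp f, ← e₂.symm_comp_self]
  exact e₂.symm.differentiable.comp_differentiableOn (differentiableOn_pi.mpr fun i => h _)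

section

variable {H F : Type*} [NormedAddCommGroup H] [NormedSpace ℂ H]
  [NormedAddCommGroup F] [NormedSpace ℂ F]

theorem norm_fderiv_le_of_forall_mem_closedBall_norm_le {f : H → F} {x : H} {r M : ℝ}
    (hr : 0 < r) (hd : DifferentiableOn ℂ f (closedBall x r))
    (hM : ∀ y ∈ closedBall x r, ‖f y‖ ≤ M) :
    ‖fderiv ℂ f x‖ ≤ M / r := by
  have hM0 : 0 ≤ M := (norm_nonneg _).trans (hM x (mem_closedBall_self hr.le))
  refine ContinuousLinearMap.opNorm_le_bound' _ (by positivity) fun u hu => ?_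
  have hu0 : 0 < ‖u‖ := (norm_nonneg u).lt_of_ne' hu
  have hR : 0 < r / ‖u‖ := div_pos hr hu0
  have hline : MapsTo (fun ζ : ℂ => x + ζ • u) (closedBall 0 (r / ‖u‖)) (closedBall x r) := by
    intro ζ hζ
    rw [mem_closedBall_zero_iff, le_div_iff₀ hu0] at hζ
    simpa [dist_eq_norm, norm_smul] using hζ
  have hφ : DiffContOnCl ℂ (fun ζ : ℂ => f (x + ζ • u)) (ball 0 (r / ‖u‖)) := by
    refine DifferentiableOn.diffContOnCl ?_
    rw [closure_ball _ hR.ne']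
    exact hd.comp (by fun_prop) hline
  have hdx : DifferentiableAt ℂ f x := hd.differentiableAt (closedBall_mem_nhds x hr)
  calc ‖fderiv ℂ f x u‖ = ‖deriv (fun ζ : ℂ => f (x + ζ • u)) 0‖ := by
        rw [← hdx.lineDeriv_eq_fderiv]; rfl
    _ ≤ M / (r / ‖u‖) := Complex.norm_deriv_le_of_forall_mem_sphere_norm_le hR hφ
        fun ζ hζ => hM _ (hline (sphere_subset_closedBall hζ))
    _ = M / r * ‖u‖ := by field_simp

theorem IsCompact.exists_thickening_norm_fderiv_le {f : H → F} {s K : Set H} (hK : IsCompact K)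
    (hs : IsOpen s) (hKs : K ⊆ s) (hf : DifferentiableOn ℂ f s) :
    ∃ δ > 0, ∃ B, thickening δ K ⊆ s ∧ ∀ y ∈ thickening δ K, ‖fderiv ℂ f y‖ ≤ B := by
  obtain ⟨M, hM⟩ := hK.exists_bound_of_continuousOn (hf.continuousOn.mono hKs)
  set O := s ∩ f ⁻¹' ball 0 (M + 1)
  obtain ⟨δ, hδ, hδO⟩ := hK.exists_thickening_subset_open
    (hf.continuousOn.isOpen_inter_preimage hs isOpen_ball)
    fun y hy => ⟨hKs hy, mem_ball_zero_iff.2 ((hM y hy).trans_lt (lt_add_one M))⟩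
  have hball : ∀ y ∈ thickening (δ / 2) K, closedBall y (δ / 2) ⊆ O := by
    intro y hy z hz
    obtain ⟨k, hk, hyk⟩ := mem_thickening_iff.1 hy
    exact hδO (mem_thickening_iff.2
      ⟨k, hk, by linarith [dist_triangle z y k, mem_closedBall.1 hz]⟩)
  refine ⟨δ / 2, half_pos hδ, (M + 1) / (δ / 2),
    fun y hy => (hball y hy (mem_closedBall_self (half_pos hδ).le)).1, fun y hy => ?_⟩
  exact norm_fderiv_le_of_forall_mem_closedBall_norm_le (half_pos hδ)
    (hf.mono fun z hz => (hball y hy hz).1) fun z hz => (mem_ball_zero_iff.1 (hball y hy hz).2).le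

theorem differentiableAt_circleIntegral_smul_comp_add_smul
    [CompleteSpace F] [SecondCountableTopology (H →L[ℂ] F)]
    {f : H → F} {s : Set H} (hs : IsOpen s) (hf : DifferentiableOn ℂ f s)
    {g : ℂ → ℂ} {r : ℝ} (hr : 0 ≤ r) (hg : ContinuousOn g (sphere 0 r))
    {x₀ v : H} (hsub : ∀ w ∈ sphere (0 : ℂ) r, x₀ + w • v ∈ s) :
    DifferentiableAt ℂ (fun x => ∮ w in C(0, r), g w • f (x + w • v)) x₀ := by
  borelize H
  set K := (fun w : ℂ => x₀ + w • v) '' sphere 0 r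
  have hK : IsCompact K := (isCompact_sphere 0 r).image (by fun_prop)
  obtain ⟨δ, hδ, B, hδs, hB⟩ :=
    hK.exists_thickening_norm_fderiv_le hs (by rintro _ ⟨w, hw, rfl⟩; exact hsub w hw) hf
  have htube : ∀ x ∈ ball x₀ δ, ∀ w ∈ sphere (0 : ℂ) r, x + w • v ∈ thickening δ K :=
    fun x hx w hw => mem_thickening_iff.2 ⟨_, ⟨w, hw, rfl⟩, by rwa [dist_add_right]⟩
  obtain ⟨G, hG⟩ := (isCompact_sphere (0 : ℂ) r).exists_bound_of_continuousOn hg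
  have hcm : ∀ θ, circleMap 0 r θ ∈ sphere (0 : ℂ) r := circleMap_mem_sphere 0 hr
  set k : ℝ → ℂ := fun θ => deriv (circleMap 0 r) θ • g (circleMap 0 r θ)
  have hk : Continuous k := by
    simp only [k, deriv_circleMap]
    exact ((continuous_circleMap 0 r).mul continuous_const).smul
      (hg.comp_continuous (continuous_circleMap 0 r) hcm)
  have hk_norm : ∀ θ, ‖k θ‖ ≤ r * G := fun θ => by
    simp only [k, deriv_circleMap, smul_eq_mul, norm_mul, norm_circleMap_zero, Complex.norm_I,
      abs_of_nonneg hr, mul_one]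
    exact mul_le_mul_of_nonneg_left (hG _ (hcm θ)) hr
  have hcont : ∀ x ∈ ball x₀ δ, Continuous fun θ => k θ • f (x + circleMap 0 r θ • v) :=
    fun x hx => hk.smul (hf.continuousOn.comp_continuous (by fun_prop)
      fun θ => hδs (htube x hx _ (hcm θ)))
  have hderiv := intervalIntegral.hasFDerivAt_integral_of_dominated_of_fderiv_le
    (μ := volume) (a := 0) (b := 2 * Real.pi) (x₀ := x₀)
    (F := fun x θ => k θ • f (x + circleMap 0 r θ • v))
    (F' := fun x θ => k θ • fderiv ℂ f (x + circleMap 0 r θ • v))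
    (bound := fun _ => r * G * B) (ball_mem_nhds x₀ hδ)
    (eventually_of_mem (ball_mem_nhds x₀ hδ) fun x hx => (hcont x hx).aestronglyMeasurable)
    ((hcont x₀ (mem_ball_self hδ)).intervalIntegrable _ _)
    (hk.stronglyMeasurable.smul ((measurable_fderiv ℂ f).comp
      (by fun_prop : Measurable fun θ => x₀ + circleMap 0 r θ • v)).stronglyMeasurable
      ).aestronglyMeasurable
    (ae_of_all _ fun θ _ x hx => by
      rw [norm_smul]
      exact mul_le_mul (hk_norm θ) (hB _ (htube x hx _ (hcm θ))) (norm_nonneg _)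
        ((norm_nonneg _).trans (hk_norm θ)))
    intervalIntegrable_const
    (ae_of_all _ fun θ _ x hx =>
      ((hf.differentiableAt (hs.mem_nhds (hδs (htube x hx _ (hcm θ))))).hasFDerivAt.comp x
        ((hasFDerivAt_id x).add_const _)).const_smul (k θ))
  simp only [circleIntegral, smul_smul]
  exact hderiv.differentiableAt

theorem DifferentiableOn.fderiv_apply [CompleteSpace F] [SecondCountableTopology (H →L[ℂ] F)]
    {f : H → F} {s : Set H} (hf : DifferentiableOn ℂ f s) (hs : IsOpen s) (v : H) :
    DifferentiableOn ℂ (fun x => fderiv ℂ f x v) s := by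
  intro x₀ hx₀
  have hline : ∀ x, Differentiable ℂ fun w : ℂ => x + w • v := fun x => by fun_prop
  obtain ⟨r, hr, hrs⟩ : ∃ r > 0, closedBall (0 : ℂ) r ⊆ (fun w => x₀ + w • v) ⁻¹' s :=
    nhds_basis_closedBall.mem_iff.1
      ((hline x₀).continuous.continuousAt.preimage_mem_nhds (by simpa using hs.mem_nhds hx₀))
  have htube : ∀ᶠ x in 𝓝 x₀, ∀ w ∈ closedBall (0 : ℂ) r, x + w • v ∈ s :=
    (isCompact_closedBall 0 r).eventually_forall_of_forall_eventually fun w hw =>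
      (by fun_prop : Continuous fun p : H × ℂ => p.1 + p.2 • v).continuousAt.preimage_mem_nhds
        (hs.mem_nhds (hrs hw))
  -- Cauchy's formula for the derivative of `w ↦ f (x + w • v)` at `0`
  have hcauchy : (fun x => fderiv ℂ f x v) =ᶠ[𝓝 x₀]
      fun x => (2 * Real.pi * Complex.I : ℂ)⁻¹ •
        ∮ w in C(0, r), ((w - 0) ^ 2)⁻¹ • f (x + w • v) := by
    filter_upwards [htube, hs.mem_nhds hx₀] with x hx hxs
    have hU : IsOpen ((fun w : ℂ => x + w • v) ⁻¹' s) := hs.preimage (hline x).continuous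
    rw [← (hf.differentiableAt (hs.mem_nhds hxs)).lineDeriv_eq_fderiv]
    exact (Complex.cderiv_eq_deriv hU (hf.comp (hline x).differentiableOn
      (mapsTo_preimage _ _)) hr hx).symm
  refine (hcauchy.differentiableAt_iff.2 (.const_smul ?_ _)).differentiableWithinAt
  refine differentiableAt_circleIntegral_smul_comp_add_smul hs hf hr.le ?_
    fun w hw => htube.self_of_nhds w (sphere_subset_closedBall hw)
  exact (continuousOn_id.sub continuousOn_const).pow 2 |>.inv₀ fun w hw => by
    simp [ne_of_mem_sphere hw hr.ne']

theorem DifferentiableOn.fderiv [CompleteSpace F] [FiniteDimensional ℂ H]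
    [SecondCountableTopology F] {f : H → F} {s : Set H} (hf : DifferentiableOn ℂ f s)
    (hs : IsOpen s) : DifferentiableOn ℂ (fderiv ℂ f) s :=
  differentiableOn_clm_apply.2 (hf.fderiv_apply hs)

theorem Convex.norm_image_le_exp_mul_of_norm_hasFDerivWithin_le {E G : Type*}
    [NormedAddCommGroup E] [NormedSpace ℝ E] [NormedAddCommGroup G] [NormedSpace ℝ G]
    {f : E → G} {f' : E → E →L[ℝ] G} {s : Set E} {C : ℝ} (hs : Convex ℝ s)
    (hf : ∀ x ∈ s, HasFDerivWithinAt f (f' x) s x) (hbound : ∀ x ∈ s, ‖f' x‖ ≤ C * ‖f x‖)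
    {a b : E} (ha : a ∈ s) (hb : b ∈ s) :
    ‖f b‖ ≤ Real.exp (C * ‖b - a‖) * ‖f a‖ := by
  let γ : ℝ → E := fun t => a + t • (b - a)
  have hγs : MapsTo γ (Icc 0 1) s := fun t ht =>
    hs.segment_subset ha hb (by rw [segment_eq_image']; exact ⟨t, ht, rfl⟩)
  have hγ : ∀ t, HasDerivAt γ (b - a) t := fun t =>
    (((hasDerivAt_id t).smul_const (b - a)).const_add a).congr_deriv (one_smul ℝ _)
  have hfγ : ∀ t ∈ Icc (0 : ℝ) 1, HasDerivWithinAt (f ∘ γ) (f' (γ t) (b - a)) (Icc 0 1) t :=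
    fun t ht => (hf _ (hγs ht)).comp_hasDerivWithinAt t (hγ t).hasDerivWithinAt hγs
  have key := norm_le_gronwallBound_of_norm_deriv_right_le (ε := 0) (δ := ‖f a‖)
    (K := C * ‖b - a‖) (fun t ht => (hfγ t ht).continuousWithinAt)
    (fun t ht => (hfγ t (Ico_subset_Icc_self ht)).mono_of_mem_nhdsWithin
      (mem_of_superset (Icc_mem_nhdsGE ht.2) (Icc_subset_Icc_left ht.1)))
    (by simp [γ])
    (fun t ht => by
      calc ‖f' (γ t) (b - a)‖ ≤ C * ‖f (γ t)‖ * ‖b - a‖ :=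
            (f' (γ t)).le_of_opNorm_le (hbound _ (hγs (Ico_subset_Icc_self ht))) _
        _ = C * ‖b - a‖ * ‖(f ∘ γ) t‖ + 0 := by simp only [Function.comp_apply]; ring)
    1 (right_mem_Icc.2 zero_le_one)
  simpa [γ, gronwallBound_ε0, mul_comm] using key

theorem Convex.norm_fderiv_le_exp_mul_of_norm_fderiv_fderiv_le [CompleteSpace F]
    [FiniteDimensional ℂ H] [SecondCountableTopology F] {ω : H → F} {s : Set H} {C : ℝ}
    (hconv : Convex ℝ s) (hs : IsOpen s) (hω : DifferentiableOn ℂ ω s)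
    (hbound : ∀ x ∈ s, ‖fderiv ℂ (fderiv ℂ ω) x‖ ≤ C * ‖fderiv ℂ ω x‖) {a b : H}
    (ha : a ∈ s) (hb : b ∈ s) :
    ‖fderiv ℂ ω b‖ ≤ Real.exp (C * ‖b - a‖) * ‖fderiv ℂ ω a‖ := by
  refine hconv.norm_image_le_exp_mul_of_norm_hasFDerivWithin_le
    (f' := fun x => (fderiv ℂ (fderiv ℂ ω) x).restrictScalars ℝ) (fun x hx => ?_)
    (fun x hx => ?_) ha hb
  · exact ((hω.fderiv hs x hx).differentiableAt (hs.mem_nhds hx)).hasFDerivAt.restrictScalars ℝ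
      |>.hasFDerivWithinAt
  · simpa only [ContinuousLinearMap.norm_restrictScalars] using hbound x hx

theorem locallyComparableOn_norm_fderiv [CompleteSpace F] [FiniteDimensional ℂ H]
    [SecondCountableTopology F] {V : Set H} (hV : IsOpen V) {C : ℝ} (hC : 0 ≤ C) :
    LocallyComparableOn (fun (ω : {ω : H → F // DifferentiableOn ℂ ω V ∧
      ∀ x ∈ V, ‖fderiv ℂ (fderiv ℂ ω) x‖ ≤ C * ‖fderiv ℂ ω x‖}) x => ‖fderiv ℂ ω.1 x‖) V := by
  intro x hx
  obtain ⟨r, hr, hrV⟩ := Metric.isOpen_iff.1 hV x hx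
  refine ⟨Real.exp (C * r), (Real.exp_pos _).le, mem_nhdsWithin_of_mem_nhds ?_⟩
  filter_upwards [ball_mem_nhds x hr] with y hy
  rintro ⟨ω, hω, hbound⟩
  have hcomp {a b : H} : a ∈ ball x r → b ∈ ball x r →
      ‖fderiv ℂ ω b‖ ≤ Real.exp (C * ‖b - a‖) * ‖fderiv ℂ ω a‖ :=
    (convex_ball x r).norm_fderiv_le_exp_mul_of_norm_fderiv_fderiv_le isOpen_ball
      (hω.mono hrV) fun z hz => hbound z (hrV hz)
  have hexp : ∀ d ≤ r, Real.exp (C * d) ≤ Real.exp (C * r) := fun d hd =>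
    Real.exp_le_exp.2 (mul_le_mul_of_nonneg_left hd hC)
  exact ⟨(hcomp (mem_ball_self hr) hy).trans
      (mul_le_mul_of_nonneg_right (hexp _ (mem_ball_iff_norm.1 hy).le) (norm_nonneg _)),
    (hcomp hy (mem_ball_self hr)).trans
      (mul_le_mul_of_nonneg_right (hexp _ (mem_ball_iff_norm'.1 hy).le) (norm_nonneg _))⟩

end

theorem stmt_12_general (n : ℕ)
    (U : Set (EuclideanSpace ℂ (Fin n)))
    (z0 : EuclideanSpace ℂ (Fin n))
    (K0 : Set (EuclideanSpace ℂ (Fin n))) (hK0 : IsCompact K0)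
    (V : Set (EuclideanSpace ℂ (Fin n))) (hVo : IsOpen V) (hVc : IsConnected V)
    (hK0V : K0 ∪ {z0} ⊆ V)
    (hVU : closure V ⊆ U)
    (C : ℝ) (hC : 0 < C) :
    ∃ C' > (0 : ℝ),
      ∀ ω : EuclideanSpace ℂ (Fin n) → EuclideanSpace ℂ (Fin n),
        DifferentiableOn ℂ ω U →
        fderiv ℂ ω z0 = ContinuousLinearMap.id ℂ (EuclideanSpace ℂ (Fin n)) →
        (∀ K ⊆ closure V, IsCompact K →
          sSup ((fun z => ‖fderiv ℂ (fderiv ℂ ω) z‖) '' K) ≤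
            C * sSup ((fun z => ‖fderiv ℂ ω z‖) '' K)) →
        ∀ z ∈ K0, ‖fderiv ℂ ω z‖ ≤ C' := by
  obtain ⟨c, hc0, hc⟩ := LocallyComparableOn.exists_forall_le_mul_of_isCompact
    (locallyComparableOn_norm_fderiv (F := EuclideanSpace ℂ (Fin n)) hVo hC.le)
    hVc.isPreconnected hK0 (subset_union_left.trans hK0V) (hK0V (Or.inr rfl))
    fun _ => norm_nonneg _
  refine ⟨c + 1, by positivity, fun ω hω hid hb z hz => ?_⟩
  have hpt : ∀ x ∈ V, ‖fderiv ℂ (fderiv ℂ ω) x‖ ≤ C * ‖fderiv ℂ ω x‖ := fun x hx => by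
    simpa using hb {x} (singleton_subset_iff.2 (subset_closure hx)) isCompact_singleton
  calc ‖fderiv ℂ ω z‖ ≤ c * ‖fderiv ℂ ω z0‖ :=
        hc ⟨ω, hω.mono (subset_closure.trans hVU), hpt⟩ z hz
    _ ≤ c * 1 := by rw [hid]; gcongr; exact ContinuousLinearMap.norm_id_le
    _ ≤ c + 1 := by linarith

theorem stmt_12 (n : ℕ)
    (U : Set (EuclideanSpace ℂ (Fin n))) (hUo : IsOpen U) (hUc : IsConnected U)
    (z0 : EuclideanSpace ℂ (Fin n)) (hz0 : z0 ∈ U)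
    (K0 : Set (EuclideanSpace ℂ (Fin n))) (hK0 : IsCompact K0) (hK0U : K0 ⊆ U)
    (V : Set (EuclideanSpace ℂ (Fin n))) (hVo : IsOpen V) (hVc : IsConnected V)
    (hK0V : K0 ∪ {z0} ⊆ V)
    (hVcomp : IsCompact (closure V)) (hVU : closure V ⊆ U)
    (C : ℝ) (hC : 0 < C) :
    ∃ C' > (0 : ℝ),
      ∀ ω : EuclideanSpace ℂ (Fin n) → EuclideanSpace ℂ (Fin n),
        DifferentiableOn ℂ ω U →
        fderiv ℂ ω z0 = ContinuousLinearMap.id ℂ (EuclideanSpace ℂ (Fin n)) →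
        (∀ K ⊆ closure V, IsCompact K →
          sSup ((fun z => ‖fderiv ℂ (fderiv ℂ ω) z‖) '' K) ≤
            C * sSup ((fun z => ‖fderiv ℂ ω z‖) '' K)) →
        ∀ z ∈ K0, ‖fderiv ℂ ω z‖ ≤ C' :=
  stmt_12_general n U z0 K0 hK0 V hVo hVc hK0V hVU C hC
end
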